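/- arXiv:1603.02717 — 6 statements merged into one kernel-verified Lean document; each statement's English description precedes it below -/
import Mathlib

section
/- Let H be a coupling function, let N ≥ 2 be an integer, and let θ be a standard solution of the reduced system for lattice size N. Then the limits θ̄_{i,j} := lim_{t→∞} θ_{i,j}(t) exist for all (i,j) ∈ S_N and, with the convention θ̄_{i,i} = 0 for 1 ≤ i ≤ N, satisfy θ̄_{i+1,j} ≥ θ̄_{i,j} for all indices with 1 ≤ j ≤ i ≤ N − 1. -/
open Real Filter Topology

/-- A coupling function: infinitely differentiable, `2π`-periodic, odd,
with strictly positive derivative on `(-π/2, π/2)`. -/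
def IsCoupling (H : ℝ → ℝ) : Prop :=
  ContDiff ℝ (⊤ : ℕ∞) H ∧ (∀ x : ℝ, H (x + 2 * π) = H x) ∧ (∀ x : ℝ, H (-x) = - H x) ∧
    (∀ x ∈ Set.Ioo (-(π / 2)) (π / 2), 0 < deriv H x)

/-- The extension `Θ` of a configuration `θ` of the reduced system:
`Θ_{k,k} = 0` on the diagonal and `Θ_{k,0} = π/2 - θ_{k,1}`. -/
noncomputable def latExt (θ : ℤ → ℤ → ℝ) (i j : ℤ) : ℝ :=
  if i = j then 0 else if j = 0 then π / 2 - θ i 1 else θ i j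

/-- Right-hand side of the reduced system for lattice size `N` at index `(i,j) ∈ S_N`. -/
noncomputable def reducedRHS (H : ℝ → ℝ) (N : ℤ) (θ : ℤ → ℤ → ℝ) (i j : ℤ) : ℝ :=
  H (latExt θ (i - 1) j - θ i j) + H (latExt θ i (j + 1) - θ i j) +
    H (latExt θ i (j - 1) - θ i j) +
    (if i < N then H (θ (i + 1) j - θ i j) else 0)

/-- A standard solution of the reduced system for lattice size `N`: components are
differentiable, satisfy the reduced system for all `t`, and start at `π/4`. -/
def IsStdSolution (H : ℝ → ℝ) (N : ℤ) (θ : ℝ → ℤ → ℤ → ℝ) : Prop :=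
  (∀ i j : ℤ, 1 ≤ j → j < i → i ≤ N → ∀ t : ℝ,
      HasDerivAt (fun s => θ s i j) (reducedRHS H N (θ t) i j) t) ∧
  (∀ i j : ℤ, 1 ≤ j → j < i → i ≤ N → θ 0 i j = π / 4)


lemma crossing {ι : Type} (S : Finset ι) (g g' : ι → ℝ → ℝ)
    (hd : ∀ i ∈ S, ∀ t, HasDerivAt (g i) (g' i t) t)
    (h0 : ∀ i ∈ S, g i 0 < 0)
    (T : ℝ)
    (hstep : ∀ s, 0 < s → s ≤ T → ∀ i ∈ S, g i s = 0 → (∀ k ∈ S, g k s ≤ 0) → g' i s < 0) :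
    ∀ t, 0 ≤ t → t ≤ T → ∀ i ∈ S, g i t < 0 := by
  by_contra hcon
  push_neg at hcon
  obtain ⟨t₀, ht₀0, ht₀T, i₀, hi₀, hgi₀⟩ := hcon
  set A : Set ℝ := {t | (0 ≤ t ∧ t ≤ T) ∧ ∃ i ∈ S, 0 ≤ g i t} with hA
  have hAne : A.Nonempty := ⟨t₀, ⟨ht₀0, ht₀T⟩, i₀, hi₀, hgi₀⟩
  have hAbdd : BddBelow A := ⟨0, fun t ht => ht.1.1⟩
  set s := sInf A with hs
  have hs0 : 0 ≤ s := le_csInf hAne fun t ht => ht.1.1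
  have hst₀ : s ≤ t₀ := csInf_le hAbdd ⟨⟨ht₀0, ht₀T⟩, i₀, hi₀, hgi₀⟩
  have hsT : s ≤ T := hst₀.trans ht₀T
  -- before s, everything is negative
  have hbefore : ∀ t, 0 ≤ t → t < s → ∀ i ∈ S, g i t < 0 := by
    intro t ht0 hts i hi
    by_contra hge
    push_neg at hge
    exact absurd (csInf_le hAbdd ⟨⟨ht0, hts.le.trans hsT⟩, i, hi, hge⟩) (not_le.mpr hts)
  -- some index is ≥ 0 at s
  have hactive : ∃ i ∈ S, 0 ≤ g i s := by
    by_contra hall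
    push_neg at hall
    have hev : ∀ᶠ t in 𝓝 s, ∀ i ∈ S, g i t < 0 := by
      rw [Filter.eventually_all_finset]
      intro i hi
      have hc : ContinuousAt (g i) s := (hd i hi s).continuousAt
      exact hc.eventually_lt continuousAt_const (hall i hi)
    obtain ⟨δ, hδ0, hδ⟩ := Metric.eventually_nhds_iff.mp hev
    obtain ⟨a, haA, has⟩ := exists_lt_of_csInf_lt hAne (by linarith : sInf A < s + δ)
    have hsa : s ≤ a := csInf_le hAbdd haA
    have : dist a s < δ := by rw [Real.dist_eq, abs_sub_lt_iff]; constructor <;> linarith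
    obtain ⟨i, hi, hgi⟩ := haA.2
    exact absurd hgi (not_le.mpr (hδ this i hi))
  obtain ⟨i, hi, hgis⟩ := hactive
  have hspos : 0 < s := by
    rcases eq_or_lt_of_le hs0 with h | h
    · exact absurd hgis (not_le.mpr (by rw [← h] at *; exact h0 i hi))
    · exact h
  -- g k s ≤ 0 for all k, by left continuity
  have hle : ∀ k ∈ S, g k s ≤ 0 := by
    intro k hk
    have hc : Tendsto (g k) (𝓝[<] s) (𝓝 (g k s)) :=
      ((hd k hk s).continuousAt.continuousWithinAt)
    refine le_of_tendsto hc ?_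
    filter_upwards [Ioo_mem_nhdsLT hspos] with t ht
    exact (hbefore t ht.1.le ht.2 k hk).le
  have hgis0 : g i s = 0 := le_antisymm (hle i hi) hgis
  have hder : g' i s < 0 := hstep s hspos hsT i hi hgis0 hle
  -- left derivative contradiction
  have hslope : Tendsto (slope (g i) s) (𝓝[<] s) (𝓝 (g' i s)) :=
    (hasDerivAt_iff_tendsto_slope.mp (hd i hi s)).mono_left
      (nhdsWithin_mono s fun t ht => ne_of_lt ht)
  have : 0 ≤ g' i s := by
    refine ge_of_tendsto hslope ?_
    filter_upwards [Ioo_mem_nhdsLT hspos] with t ht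
    have h1 : g i t < 0 := hbefore t ht.1.le ht.2 i hi
    have h2 : t - s < 0 := by linarith [ht.2]
    rw [slope_def_field]
    rw [div_nonneg_iff]
    right
    constructor
    · rw [hgis0]; linarith
    · linarith
  linarith

lemma Hzero {H : ℝ → ℝ} (hodd : ∀ x : ℝ, H (-x) = - H x) : H 0 = 0 := by
  have := hodd 0; simp at this; linarith

lemma Hmono {H : ℝ → ℝ} (hc : ContDiff ℝ (⊤ : ℕ∞) H)
    (hder : ∀ x ∈ Set.Ioo (-(π / 2)) (π / 2), 0 < deriv H x) :
    StrictMonoOn H (Set.Icc (-(π / 2)) (π / 2)) := by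
  apply strictMonoOn_of_deriv_pos (convex_Icc _ _) (hc.continuous.continuousOn)
  rwa [interior_Icc]

lemma Hhalf_pos {H : ℝ → ℝ} (hc : ContDiff ℝ (⊤ : ℕ∞) H) (hodd : ∀ x : ℝ, H (-x) = - H x)
    (hder : ∀ x ∈ Set.Ioo (-(π / 2)) (π / 2), 0 < deriv H x) : 0 < H (π / 2) := by
  have h0 : H 0 = 0 := Hzero hodd
  have h2 : (0:ℝ) < π / 2 := by linarith [pi_pos]
  have := Hmono hc hder (show (0:ℝ) ∈ Set.Icc (-(π/2)) (π/2) from ⟨by linarith, by linarith⟩)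
    (show (π/2:ℝ) ∈ Set.Icc (-(π/2)) (π/2) from ⟨by linarith, le_refl _⟩) h2
  rwa [h0] at this

section Grind

variable {H : ℝ → ℝ} (hc : ContDiff ℝ (⊤ : ℕ∞) H) (hodd : ∀ x : ℝ, H (-x) = - H x)
  (hder : ∀ x ∈ Set.Ioo (-(π / 2)) (π / 2), 0 < deriv H x)

include hc hder in
lemma HleI {a b : ℝ} (h1 : -(π/2) ≤ a) (h2 : a ≤ b) (h3 : b ≤ π/2) : H a ≤ H b :=
  (Hmono hc hder).monotoneOn ⟨h1, h2.trans h3⟩ ⟨h1.trans h2, h3⟩ h2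

include hc hodd hder in
lemma Hnonpos {a : ℝ} (h1 : -(π/2) ≤ a) (h2 : a ≤ 0) : H a ≤ 0 := by
  have := HleI hc hder h1 h2 (by linarith [pi_pos])
  rwa [Hzero hodd] at this

include hc hodd hder in
lemma Hnonneg {a : ℝ} (h1 : 0 ≤ a) (h2 : a ≤ π/2) : 0 ≤ H a := by
  have := HleI hc hder (by linarith [pi_pos]) h1 h2
  rwa [Hzero hodd] at this

include hc hodd hder in
lemma Hnear : ∃ δ > 0, ∀ y : ℝ, |y - π/2| ≤ δ → 0 < H y := by
  have hpos : 0 < H (π/2) := Hhalf_pos hc hodd hder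
  have hcont : ContinuousAt H (π/2) := hc.continuous.continuousAt
  have hev : ∀ᶠ y in 𝓝 (π/2), 0 < H y := hcont.tendsto.eventually_const_lt hpos
  obtain ⟨δ, hδ0, hδ⟩ := Metric.eventually_nhds_iff.mp hev
  exact ⟨δ/2, by linarith, fun y hy => hδ (by rw [Real.dist_eq]; linarith [hy]) ⟩

include hc hodd hder in
lemma stage1A (N : ℤ) (x : ℤ → ℤ → ℝ) (i j : ℤ) (hj : 1 ≤ j) (hji : j < i) (hiN : i ≤ N)
    (E : ℝ) (hE : 0 < E) (hE2 : E ≤ π/16)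
    (hup : ∀ k l, 1 ≤ l → l < k → k ≤ N → x k l ≤ π/4 + E)
    (hlo : ∀ k l, 1 ≤ l → l < k → k ≤ N → -E ≤ x k l)
    (hx : x i j = π/4 + E) : reducedRHS H N x i j ≤ 0 := by
  have hπ := pi_pos
  have t1 : H (latExt x (i-1) j - x i j) ≤ 0 := by
    rcases eq_or_ne (i-1) j with h1 | h1
    · rw [latExt, if_pos h1]
      exact Hnonpos hc hodd hder (by rw [hx]; linarith) (by rw [hx]; linarith)
    · rw [latExt, if_neg h1, if_neg (by omega : j ≠ 0)]
      have hu := hup (i-1) j hj (by omega) (by omega)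
      have hl := hlo (i-1) j hj (by omega) (by omega)
      exact Hnonpos hc hodd hder (by rw [hx]; linarith) (by rw [hx]; linarith)
  have t2 : H (latExt x i (j+1) - x i j) ≤ 0 := by
    rcases eq_or_ne i (j+1) with h1 | h1
    · rw [latExt, if_pos h1]
      exact Hnonpos hc hodd hder (by rw [hx]; linarith) (by rw [hx]; linarith)
    · rw [latExt, if_neg h1, if_neg (by omega : j + 1 ≠ 0)]
      have hu := hup i (j+1) (by omega) (by omega) hiN
      have hl := hlo i (j+1) (by omega) (by omega) hiN
      exact Hnonpos hc hodd hder (by rw [hx]; linarith) (by rw [hx]; linarith)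
  have t3 : H (latExt x i (j-1) - x i j) ≤ 0 := by
    rcases eq_or_ne j 1 with h1 | h1
    · subst h1
      rw [latExt, if_neg (by omega : i ≠ 1 - 1), if_pos (by norm_num)]
      exact Hnonpos hc hodd hder (by rw [hx]; linarith) (by rw [hx]; linarith)
    · rw [latExt, if_neg (by omega : i ≠ j - 1), if_neg (by omega : j - 1 ≠ 0)]
      have hu := hup i (j-1) (by omega) (by omega) hiN
      have hl := hlo i (j-1) (by omega) (by omega) hiN
      exact Hnonpos hc hodd hder (by rw [hx]; linarith) (by rw [hx]; linarith)
  have t4 : (if i < N then H (x (i + 1) j - x i j) else 0) ≤ 0 := by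
    split_ifs with h1
    · have hu := hup (i+1) j hj (by omega) (by omega)
      have hl := hlo (i+1) j hj (by omega) (by omega)
      exact Hnonpos hc hodd hder (by rw [hx]; linarith) (by rw [hx]; linarith)
    · exact le_refl 0
  rw [reducedRHS]; linarith

include hc hodd hder in
lemma stage1B (N : ℤ) (x : ℤ → ℤ → ℝ) (i j : ℤ) (hj : 1 ≤ j) (hji : j < i) (hiN : i ≤ N)
    (E δ : ℝ) (hE : 0 < E) (hE2 : E ≤ π/16)
    (hδ : ∀ y : ℝ, |y - π/2| ≤ δ → 0 < H y) (hEδ : 2*E ≤ δ)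
    (hup : ∀ k l, 1 ≤ l → l < k → k ≤ N → x k l ≤ π/4 + E)
    (hlo : ∀ k l, 1 ≤ l → l < k → k ≤ N → -E ≤ x k l)
    (hx : x i j = -E) : 0 ≤ reducedRHS H N x i j := by
  have hπ := pi_pos
  have t1 : 0 ≤ H (latExt x (i-1) j - x i j) := by
    rcases eq_or_ne (i-1) j with h1 | h1
    · rw [latExt, if_pos h1]
      exact Hnonneg hc hodd hder (by rw [hx]; linarith) (by rw [hx]; linarith)
    · rw [latExt, if_neg h1, if_neg (by omega : j ≠ 0)]
      have hu := hup (i-1) j hj (by omega) (by omega)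
      have hl := hlo (i-1) j hj (by omega) (by omega)
      exact Hnonneg hc hodd hder (by rw [hx]; linarith) (by rw [hx]; linarith)
  have t2 : 0 ≤ H (latExt x i (j+1) - x i j) := by
    rcases eq_or_ne i (j+1) with h1 | h1
    · rw [latExt, if_pos h1]
      exact Hnonneg hc hodd hder (by rw [hx]; linarith) (by rw [hx]; linarith)
    · rw [latExt, if_neg h1, if_neg (by omega : j + 1 ≠ 0)]
      have hu := hup i (j+1) (by omega) (by omega) hiN
      have hl := hlo i (j+1) (by omega) (by omega) hiN
      exact Hnonneg hc hodd hder (by rw [hx]; linarith) (by rw [hx]; linarith)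
  have t3 : 0 ≤ H (latExt x i (j-1) - x i j) := by
    rcases eq_or_ne j 1 with h1 | h1
    · subst h1
      rw [latExt, if_neg (by omega : i ≠ 1 - 1), if_pos (by norm_num)]
      refine (hδ _ ?_).le
      rw [hx, abs_le]
      constructor <;> linarith
    · rw [latExt, if_neg (by omega : i ≠ j - 1), if_neg (by omega : j - 1 ≠ 0)]
      have hu := hup i (j-1) (by omega) (by omega) hiN
      have hl := hlo i (j-1) (by omega) (by omega) hiN
      exact Hnonneg hc hodd hder (by rw [hx]; linarith) (by rw [hx]; linarith)
  have t4 : 0 ≤ (if i < N then H (x (i + 1) j - x i j) else 0) := by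
    split_ifs with h1
    · have hu := hup (i+1) j hj (by omega) (by omega)
      have hl := hlo (i+1) j hj (by omega) (by omega)
      exact Hnonneg hc hodd hder (by rw [hx]; linarith) (by rw [hx]; linarith)
    · exact le_refl 0
  rw [reducedRHS]; linarith

include hc hder in
lemma stage2 (N : ℤ) (x y : ℤ → ℤ → ℝ) (i j : ℤ) (hj : 1 ≤ j) (hji : j < i) (hiN : i ≤ N)
    (E : ℝ) (hE : 0 < E)
    (hx0 : ∀ k l, 1 ≤ l → l < k → k ≤ N → 0 ≤ x k l)
    (hx4 : ∀ k l, 1 ≤ l → l < k → k ≤ N → x k l ≤ π/4)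
    (hy0 : ∀ k l, 1 ≤ l → l < k → k ≤ N → 0 ≤ y k l)
    (hy4 : ∀ k l, 1 ≤ l → l < k → k ≤ N → y k l ≤ π/4)
    (hcmp : ∀ k l, 1 ≤ l → l < k → k ≤ N → y k l ≤ x k l + E)
    (hxy : y i j = x i j + E) : reducedRHS H N y i j ≤ reducedRHS H N x i j := by
  have hπ := pi_pos
  have hxij0 := hx0 i j hj hji hiN
  have hxij4 := hx4 i j hj hji hiN
  have hyij0 := hy0 i j hj hji hiN
  have hyij4 := hy4 i j hj hji hiN
  have t1 : H (latExt y (i-1) j - y i j) ≤ H (latExt x (i-1) j - x i j) := by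
    rcases eq_or_ne (i-1) j with h1 | h1
    · rw [latExt, if_pos h1, latExt, if_pos h1]
      exact HleI hc hder (by linarith) (by linarith) (by linarith)
    · rw [latExt, if_neg h1, if_neg (by omega : j ≠ 0), latExt, if_neg h1,
        if_neg (by omega : j ≠ 0)]
      have h2 := hx0 (i-1) j hj (by omega) (by omega)
      have h3 := hx4 (i-1) j hj (by omega) (by omega)
      have h4 := hy0 (i-1) j hj (by omega) (by omega)
      have h5 := hy4 (i-1) j hj (by omega) (by omega)
      have h6 := hcmp (i-1) j hj (by omega) (by omega)
      exact HleI hc hder (by linarith) (by linarith) (by linarith)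
  have t2 : H (latExt y i (j+1) - y i j) ≤ H (latExt x i (j+1) - x i j) := by
    rcases eq_or_ne i (j+1) with h1 | h1
    · rw [latExt, if_pos h1, latExt, if_pos h1]
      exact HleI hc hder (by linarith) (by linarith) (by linarith)
    · rw [latExt, if_neg h1, if_neg (by omega : j + 1 ≠ 0), latExt, if_neg h1,
        if_neg (by omega : j + 1 ≠ 0)]
      have h2 := hx0 i (j+1) (by omega) (by omega) hiN
      have h3 := hx4 i (j+1) (by omega) (by omega) hiN
      have h4 := hy0 i (j+1) (by omega) (by omega) hiN
      have h5 := hy4 i (j+1) (by omega) (by omega) hiN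
      have h6 := hcmp i (j+1) (by omega) (by omega) hiN
      exact HleI hc hder (by linarith) (by linarith) (by linarith)
  have t3 : H (latExt y i (j-1) - y i j) ≤ H (latExt x i (j-1) - x i j) := by
    rcases eq_or_ne j 1 with h1 | h1
    · subst h1
      rw [latExt, if_neg (by omega : i ≠ 1 - 1), if_pos (by norm_num),
        latExt, if_neg (by omega : i ≠ 1 - 1), if_pos (by norm_num)]
      exact HleI hc hder (by linarith) (by linarith) (by linarith)
    · rw [latExt, if_neg (by omega : i ≠ j - 1), if_neg (by omega : j - 1 ≠ 0),
        latExt, if_neg (by omega : i ≠ j - 1), if_neg (by omega : j - 1 ≠ 0)]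
      have h2 := hx0 i (j-1) (by omega) (by omega) hiN
      have h3 := hx4 i (j-1) (by omega) (by omega) hiN
      have h4 := hy0 i (j-1) (by omega) (by omega) hiN
      have h5 := hy4 i (j-1) (by omega) (by omega) hiN
      have h6 := hcmp i (j-1) (by omega) (by omega) hiN
      exact HleI hc hder (by linarith) (by linarith) (by linarith)
  have t4 : (if i < N then H (y (i + 1) j - y i j) else 0) ≤
      (if i < N then H (x (i + 1) j - x i j) else 0) := by
    split_ifs with h1
    · have h2 := hx0 (i+1) j hj (by omega) (by omega)
      have h3 := hx4 (i+1) j hj (by omega) (by omega)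
      have h4 := hy0 (i+1) j hj (by omega) (by omega)
      have h5 := hy4 (i+1) j hj (by omega) (by omega)
      have h6 := hcmp (i+1) j hj (by omega) (by omega)
      exact HleI hc hder (by linarith) (by linarith) (by linarith)
    · exact le_refl 0
  rw [reducedRHS, reducedRHS]; linarith

include hc hodd hder in
lemma stage3 (N : ℤ) (x : ℤ → ℤ → ℝ) (i j : ℤ) (hj : 1 ≤ j) (hji : j < i) (hiN : i ≤ N - 1)
    (E : ℝ) (hE : 0 < E) (hE2 : E ≤ π/16)
    (hx0 : ∀ k l, 1 ≤ l → l < k → k ≤ N → 0 ≤ x k l)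
    (hx4 : ∀ k l, 1 ≤ l → l < k → k ≤ N → x k l ≤ π/4)
    (hcmp : ∀ k l, 1 ≤ l → l < k → k ≤ N - 1 → x k l ≤ x (k+1) l + E)
    (hx : x i j = x (i+1) j + E) :
    reducedRHS H N x i j ≤ reducedRHS H N x (i+1) j := by
  have hπ := pi_pos
  have hxij0 := hx0 i j hj hji (by omega)
  have hxij4 := hx4 i j hj hji (by omega)
  have hxi10 := hx0 (i+1) j hj (by omega) (by omega)
  have hxi14 := hx4 (i+1) j hj (by omega) (by omega)
  have t1 : H (latExt x (i-1) j - x i j) ≤ H (latExt x (i+1-1) j - x (i+1) j) := by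
    simp only [show (i:ℤ)+1-1 = i from by ring, latExt,
      if_neg (show ¬(i = j) by omega), if_neg (show ¬(j = 0) by omega)]
    rcases eq_or_ne (i-1) j with h1 | h1
    · rw [if_pos h1]
      exact HleI hc hder (by linarith) (by linarith) (by linarith)
    · rw [if_neg h1]
      have h2 := hx0 (i-1) j hj (by omega) (by omega)
      have h3 := hx4 (i-1) j hj (by omega) (by omega)
      have h6 := hcmp (i-1) j hj (by omega) (by omega)
      rw [show (i:ℤ) - 1 + 1 = i from by ring] at h6
      exact HleI hc hder (by linarith) (by linarith) (by linarith)
  have t2 : H (latExt x i (j+1) - x i j) ≤ H (latExt x (i+1) (j+1) - x (i+1) j) := by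
    simp only [latExt, if_neg (show ¬(i + 1 = j + 1) by omega),
      if_neg (show ¬(j + 1 = 0) by omega)]
    have h2 := hx0 (i+1) (j+1) (by omega) (by omega) (by omega)
    have h3 := hx4 (i+1) (j+1) (by omega) (by omega) (by omega)
    rcases eq_or_ne i (j+1) with h1 | h1
    · rw [if_pos h1]
      exact HleI hc hder (by linarith) (by linarith) (by linarith)
    · rw [if_neg h1]
      have h4 := hx0 i (j+1) (by omega) (by omega) (by omega)
      have h5 := hx4 i (j+1) (by omega) (by omega) (by omega)
      have h6 := hcmp i (j+1) (by omega) (by omega) (by omega)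
      exact HleI hc hder (by linarith) (by linarith) (by linarith)
  have t3 : H (latExt x i (j-1) - x i j) ≤ H (latExt x (i+1) (j-1) - x (i+1) j) := by
    rcases eq_or_ne j 1 with h1 | h1
    · subst h1
      simp only [latExt, if_neg (show ¬(i = 1 - 1) by omega),
        if_neg (show ¬(i + 1 = 1 - 1) by omega), if_pos (show (1:ℤ) - 1 = 0 from by norm_num)]
      have h2 := hx0 (i+1) 1 (by omega) (by omega) (by omega)
      exact HleI hc hder (by linarith) (by linarith) (by linarith)
    · simp only [latExt, if_neg (show ¬(i = j - 1) by omega),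
        if_neg (show ¬(i + 1 = j - 1) by omega), if_neg (show ¬(j - 1 = 0) by omega)]
      have h2 := hx0 i (j-1) (by omega) (by omega) (by omega)
      have h3 := hx4 i (j-1) (by omega) (by omega) (by omega)
      have h4 := hx0 (i+1) (j-1) (by omega) (by omega) (by omega)
      have h5 := hx4 (i+1) (j-1) (by omega) (by omega) (by omega)
      have h6 := hcmp i (j-1) (by omega) (by omega) (by omega)
      exact HleI hc hder (by linarith) (by linarith) (by linarith)
  have t4 : (if i < N then H (x (i + 1) j - x i j) else 0) ≤
      (if i + 1 < N then H (x (i + 1 + 1) j - x (i + 1) j) else 0) := by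
    rw [if_pos (by omega : i < N)]
    by_cases h1 : i + 1 < N
    · rw [if_pos h1]
      have h2 := hx0 (i+1+1) j hj (by omega) (by omega)
      have h3 := hx4 (i+1+1) j hj (by omega) (by omega)
      have h6 := hcmp (i+1) j hj (by omega) (by omega)
      exact HleI hc hder (by linarith) (by linarith) (by linarith)
    · rw [if_neg h1]
      exact Hnonpos hc hodd hder (by linarith) (by linarith)
  rw [reducedRHS, reducedRHS]; linarith

end Grind

lemma le_of_eps (a b : ℝ) (h : ∀ ε : ℝ, 0 < ε → a ≤ b + ε) : a ≤ b := by
  by_contra hcon; push_neg at hcon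
  have := h ((a - b)/2) (by linarith); linarith

theorem stmt5 (H : ℝ → ℝ) (hH : IsCoupling H) (N : ℤ) (hN : 2 ≤ N)
    (θ : ℝ → ℤ → ℤ → ℝ) (hθ : IsStdSolution H N θ) :
    ∃ θbar : ℤ → ℤ → ℝ,
      (∀ i j : ℤ, 1 ≤ j → j < i → i ≤ N →
        Tendsto (fun t => θ t i j) atTop (𝓝 (θbar i j))) ∧
      (∀ i j : ℤ, 1 ≤ j → j ≤ i → i ≤ N - 1 →
        (if i = j then (0 : ℝ) else θbar i j) ≤ θbar (i + 1) j) := by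
  obtain ⟨hc, hper, hodd, hder⟩ := hH
  obtain ⟨hode, hinit⟩ := hθ
  obtain ⟨δ, hδ0, hδ⟩ := Hnear hc hodd hder
  have hπ := pi_pos
  set F : Finset (ℤ × ℤ) := (Finset.Icc ((1:ℤ),(1:ℤ)) (N,N)).filter (fun p => p.2 < p.1)
    with hF
  have memF : ∀ p : ℤ × ℤ, p ∈ F ↔ 1 ≤ p.2 ∧ p.2 < p.1 ∧ p.1 ≤ N := by
    intro p
    rw [hF, Finset.mem_filter, Finset.mem_Icc, Prod.le_def, Prod.le_def]
    omega
  -- Stage 1 : invariant region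
  have region : ∀ t : ℝ, 0 ≤ t → ∀ k l : ℤ, 1 ≤ l → l < k → k ≤ N →
      0 ≤ θ t k l ∧ θ t k l ≤ π / 4 := by
    have key : ∀ η : ℝ, 0 < η → ∀ t : ℝ, 0 ≤ t → ∀ k l : ℤ, 1 ≤ l → l < k → k ≤ N →
        -η ≤ θ t k l ∧ θ t k l ≤ π / 4 + η := by
      intro η hη t ht k l hl hlk hkN
      set M : ℝ := min η (min (π/16) (δ/2)) with hM
      have hM0 : 0 < M := by
        apply lt_min hη
        apply lt_min (by linarith) (by linarith)
      set ε : ℝ := M * Real.exp (-t) with hε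
      have hε0 : 0 < ε := mul_pos hM0 (Real.exp_pos _)
      set g : Bool × ℤ × ℤ → ℝ → ℝ := fun p s =>
        cond p.1 (θ s p.2.1 p.2.2 - (π/4 + ε * Real.exp s))
          (-θ s p.2.1 p.2.2 - ε * Real.exp s) with hg
      set g' : Bool × ℤ × ℤ → ℝ → ℝ := fun p s =>
        cond p.1 (reducedRHS H N (θ s) p.2.1 p.2.2 - ε * Real.exp s)
          (-reducedRHS H N (θ s) p.2.1 p.2.2 - ε * Real.exp s) with hg'
    -- bound on ε * exp s for s ≤ t
      have hEbd : ∀ s : ℝ, s ≤ t → ε * Real.exp s ≤ M := by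
        intro s hs
        have : ε * Real.exp s = M * Real.exp (s - t) := by
          rw [hε, mul_assoc, ← Real.exp_add]; ring_nf
        rw [this]
        calc M * Real.exp (s - t) ≤ M * 1 := by
              apply mul_le_mul_of_nonneg_left _ hM0.le
              exact Real.exp_le_one_iff.mpr (by linarith)
          _ = M := mul_one M
      have hcross := crossing ((Finset.univ : Finset Bool) ×ˢ F) g g' ?_ ?_ t ?_
      · have h1 := hcross t ht le_rfl (true, k, l)
          (Finset.mem_product.mpr ⟨Finset.mem_univ _, (memF (k,l)).mpr ⟨hl, hlk, hkN⟩⟩)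
        have h2 := hcross t ht le_rfl (false, k, l)
          (Finset.mem_product.mpr ⟨Finset.mem_univ _, (memF (k,l)).mpr ⟨hl, hlk, hkN⟩⟩)
        simp only [hg, cond_true, cond_false] at h1 h2
        have hE := hEbd t le_rfl
        have hMη : M ≤ η := min_le_left _ _
        constructor
        · nlinarith
        · nlinarith
      · rintro ⟨b, k', l'⟩ hmem s
        obtain ⟨-, hmem2⟩ := Finset.mem_product.mp hmem
        obtain ⟨hl', hlk', hkN'⟩ := (memF (k', l')).mp hmem2
        have base := hode k' l' hl' hlk' hkN' s
        have expd : HasDerivAt (fun u : ℝ => ε * Real.exp u) (ε * Real.exp s) s :=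
          (Real.hasDerivAt_exp s).const_mul ε
        cases b
        · exact (base.neg).sub expd
        · have h := base.sub ((hasDerivAt_const s (π/4 : ℝ)).add expd)
          rw [zero_add] at h
          exact h
      · rintro ⟨b, k', l'⟩ hmem
        obtain ⟨-, hmem2⟩ := Finset.mem_product.mp hmem
        obtain ⟨hl', hlk', hkN'⟩ := (memF (k', l')).mp hmem2
        have hi := hinit k' l' hl' hlk' hkN'
        cases b
        · simp only [hg, cond_false, Real.exp_zero, mul_one, hi]
          linarith
        · simp only [hg, cond_true, Real.exp_zero, mul_one, hi]
          linarith
      · rintro s hs0 hsT ⟨b, k', l'⟩ hmem hzero hall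
        obtain ⟨-, hmem2⟩ := Finset.mem_product.mp hmem
        obtain ⟨hl', hlk', hkN'⟩ := (memF (k', l')).mp hmem2
        set E : ℝ := ε * Real.exp s with hE
        have hE0 : 0 < E := mul_pos hε0 (Real.exp_pos _)
        have hEM : E ≤ M := hEbd s hsT
        have hE16 : E ≤ π/16 := hEM.trans ((min_le_right _ _).trans (min_le_left _ _))
        have hEδ : 2 * E ≤ δ := by
          have := hEM.trans ((min_le_right _ _).trans (min_le_right _ _))
          linarith
        have hup : ∀ k'' l'' : ℤ, 1 ≤ l'' → l'' < k'' → k'' ≤ N →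
            θ s k'' l'' ≤ π/4 + E := by
          intro a b' h1 h2 h3
          have := hall (true, a, b')
            (Finset.mem_product.mpr ⟨Finset.mem_univ _, (memF (a,b')).mpr ⟨h1, h2, h3⟩⟩)
          simp only [hg, cond_true] at this
          linarith
        have hlo : ∀ k'' l'' : ℤ, 1 ≤ l'' → l'' < k'' → k'' ≤ N →
            -E ≤ θ s k'' l'' := by
          intro a b' h1 h2 h3
          have := hall (false, a, b')
            (Finset.mem_product.mpr ⟨Finset.mem_univ _, (memF (a,b')).mpr ⟨h1, h2, h3⟩⟩)
          simp only [hg, cond_false] at this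
          linarith
        cases b
        · simp only [hg, cond_false] at hzero
          simp only [hg', cond_false]
          have hx : θ s k' l' = -E := by linarith
          have := stage1B hc hodd hder N (θ s) k' l' hl' hlk' hkN' E δ hE0 hE16 hδ hEδ
            hup hlo hx
          linarith
        · simp only [hg, cond_true] at hzero
          simp only [hg', cond_true]
          have hx : θ s k' l' = π/4 + E := by linarith
          have := stage1A hc hodd hder N (θ s) k' l' hl' hlk' hkN' E hE0 hE16 hup hlo hx
          linarith
    intro t ht k l hl hlk hkN
    constructor
    · have : -θ t k l ≤ 0 := by
        apply le_of_eps
        intro η hη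
        have := (key η hη t ht k l hl hlk hkN).1
        linarith
      linarith
    · apply le_of_eps
      intro η hη
      exact (key η hη t ht k l hl hlk hkN).2
  -- Stage 2 : monotone decrease in time
  have mono : ∀ h : ℝ, 0 ≤ h → ∀ t : ℝ, 0 ≤ t → ∀ k l : ℤ, 1 ≤ l → l < k → k ≤ N →
      θ (t + h) k l ≤ θ t k l := by
    intro h hh t ht k l hl hlk hkN
    apply le_of_eps
    intro η hη
    set ε : ℝ := η * Real.exp (-t) with hε
    have hε0 : 0 < ε := mul_pos hη (Real.exp_pos _)
    set g : ℤ × ℤ → ℝ → ℝ := fun p s =>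
      θ (s + h) p.1 p.2 - θ s p.1 p.2 - ε * Real.exp s with hg
    set g' : ℤ × ℤ → ℝ → ℝ := fun p s =>
      reducedRHS H N (θ (s + h)) p.1 p.2 - reducedRHS H N (θ s) p.1 p.2 - ε * Real.exp s
      with hg'
    have hcross := crossing F g g' ?_ ?_ t ?_
    · have h1 := hcross t ht le_rfl (k, l) ((memF (k,l)).mpr ⟨hl, hlk, hkN⟩)
      simp only [hg] at h1
      have : ε * Real.exp t = η := by
        rw [hε, mul_assoc, ← Real.exp_add]; simp
      linarith
    · rintro ⟨k', l'⟩ hmem s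
      obtain ⟨hl', hlk', hkN'⟩ := (memF (k', l')).mp hmem
      have base1 : HasDerivAt (fun u : ℝ => θ (u + h) k' l')
          (reducedRHS H N (θ (s + h)) k' l') s :=
        HasDerivAt.comp_add_const s h (hode k' l' hl' hlk' hkN' (s + h))
      have base2 := hode k' l' hl' hlk' hkN' s
      have expd : HasDerivAt (fun u : ℝ => ε * Real.exp u) (ε * Real.exp s) s :=
        (Real.hasDerivAt_exp s).const_mul ε
      exact (base1.sub base2).sub expd
    · rintro ⟨k', l'⟩ hmem
      obtain ⟨hl', hlk', hkN'⟩ := (memF (k', l')).mp hmem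
      have hi := hinit k' l' hl' hlk' hkN'
      have hb := (region h hh k' l' hl' hlk' hkN').2
      simp only [hg, Real.exp_zero, mul_one, zero_add, hi]
      linarith
    · rintro s hs0 hsT ⟨k', l'⟩ hmem hzero hall
      obtain ⟨hl', hlk', hkN'⟩ := (memF (k', l')).mp hmem
      set E : ℝ := ε * Real.exp s with hE
      have hE0 : 0 < E := mul_pos hε0 (Real.exp_pos _)
      simp only [hg] at hzero
      simp only [hg']
      have hcmp : ∀ a b : ℤ, 1 ≤ b → b < a → a ≤ N → θ (s + h) a b ≤ θ s a b + E := by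
        intro a b h1 h2 h3
        have := hall (a, b) ((memF (a,b)).mpr ⟨h1, h2, h3⟩)
        simp only [hg] at this
        linarith
      have hsh : (0:ℝ) ≤ s + h := by linarith
      have := stage2 hc hder N (θ s) (θ (s + h)) k' l' hl' hlk' hkN' E hE0
        (fun a b h1 h2 h3 => (region s hs0.le a b h1 h2 h3).1)
        (fun a b h1 h2 h3 => (region s hs0.le a b h1 h2 h3).2)
        (fun a b h1 h2 h3 => (region (s + h) hsh a b h1 h2 h3).1)
        (fun a b h1 h2 h3 => (region (s + h) hsh a b h1 h2 h3).2)
        hcmp (by linarith)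
      linarith
  -- Stage 3 : spatial ordering
  have ord : ∀ t : ℝ, 0 ≤ t → ∀ k l : ℤ, 1 ≤ l → l < k → k ≤ N - 1 →
      θ t k l ≤ θ t (k + 1) l := by
    intro t ht k l hl hlk hkN
    apply le_of_eps
    intro η hη
    set F' : Finset (ℤ × ℤ) :=
      (Finset.Icc ((1:ℤ),(1:ℤ)) (N-1,N-1)).filter (fun p => p.2 < p.1) with hF'
    have memF' : ∀ p : ℤ × ℤ, p ∈ F' ↔ 1 ≤ p.2 ∧ p.2 < p.1 ∧ p.1 ≤ N - 1 := by
      intro p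
      rw [hF', Finset.mem_filter, Finset.mem_Icc, Prod.le_def, Prod.le_def]
      omega
    set M : ℝ := min η (π/16) with hM
    have hM0 : 0 < M := lt_min hη (by linarith)
    set ε : ℝ := M * Real.exp (-t) with hε
    have hε0 : 0 < ε := mul_pos hM0 (Real.exp_pos _)
    have hEbd : ∀ s : ℝ, s ≤ t → ε * Real.exp s ≤ M := by
      intro s hs
      have : ε * Real.exp s = M * Real.exp (s - t) := by
        rw [hε, mul_assoc, ← Real.exp_add]; ring_nf
      rw [this]
      calc M * Real.exp (s - t) ≤ M * 1 := by
            apply mul_le_mul_of_nonneg_left _ hM0.le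
            exact Real.exp_le_one_iff.mpr (by linarith)
        _ = M := mul_one M
    set g : ℤ × ℤ → ℝ → ℝ := fun p s =>
      θ s p.1 p.2 - θ s (p.1 + 1) p.2 - ε * Real.exp s with hg
    set g' : ℤ × ℤ → ℝ → ℝ := fun p s =>
      reducedRHS H N (θ s) p.1 p.2 - reducedRHS H N (θ s) (p.1 + 1) p.2 - ε * Real.exp s
      with hg'
    have hcross := crossing F' g g' ?_ ?_ t ?_
    · have h1 := hcross t ht le_rfl (k, l) ((memF' (k,l)).mpr ⟨hl, hlk, hkN⟩)
      simp only [hg] at h1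
      have h2 : ε * Real.exp t ≤ η := (hEbd t le_rfl).trans (min_le_left _ _)
      linarith
    · rintro ⟨k', l'⟩ hmem s
      obtain ⟨hl', hlk', hkN'⟩ := (memF' (k', l')).mp hmem
      have base1 := hode k' l' hl' hlk' (by omega) s
      have base2 := hode (k' + 1) l' hl' (by omega) (by omega) s
      have expd : HasDerivAt (fun u : ℝ => ε * Real.exp u) (ε * Real.exp s) s :=
        (Real.hasDerivAt_exp s).const_mul ε
      exact (base1.sub base2).sub expd
    · rintro ⟨k', l'⟩ hmem
      obtain ⟨hl', hlk', hkN'⟩ := (memF' (k', l')).mp hmem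
      have hi1 := hinit k' l' hl' hlk' (by omega)
      have hi2 := hinit (k' + 1) l' hl' (by omega) (by omega)
      simp only [hg, Real.exp_zero, mul_one, hi1, hi2]
      linarith
    · rintro s hs0 hsT ⟨k', l'⟩ hmem hzero hall
      obtain ⟨hl', hlk', hkN'⟩ := (memF' (k', l')).mp hmem
      set E : ℝ := ε * Real.exp s with hE
      have hE0 : 0 < E := mul_pos hε0 (Real.exp_pos _)
      have hE16 : E ≤ π/16 := (hEbd s hsT).trans (min_le_right _ _)
      simp only [hg] at hzero
      simp only [hg']
      have hcmp : ∀ a b : ℤ, 1 ≤ b → b < a → a ≤ N - 1 → θ s a b ≤ θ s (a + 1) b + E := by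
        intro a b h1 h2 h3
        have := hall (a, b) ((memF' (a,b)).mpr ⟨h1, h2, h3⟩)
        simp only [hg] at this
        linarith
      have := stage3 hc hodd hder N (θ s) k' l' hl' hlk' hkN' E hE0 hE16
        (fun a b h1 h2 h3 => (region s hs0.le a b h1 h2 h3).1)
        (fun a b h1 h2 h3 => (region s hs0.le a b h1 h2 h3).2)
        hcmp (by linarith)
      linarith
  -- Limits
  have hanti : ∀ k l : ℤ, 1 ≤ l → l < k → k ≤ N →
      Antitone (fun t : ℝ => θ (max t 0) k l) := by
    intro k l hl hlk hkN s t hst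
    have h1 : (0:ℝ) ≤ max s 0 := le_max_right _ _
    have h2 : max s 0 ≤ max t 0 := max_le_max hst le_rfl
    have := mono (max t 0 - max s 0) (by linarith) (max s 0) h1 k l hl hlk hkN
    rw [show max s 0 + (max t 0 - max s 0) = max t 0 from by ring] at this
    exact this
  have hbdd : ∀ k l : ℤ, 1 ≤ l → l < k → k ≤ N →
      BddBelow (Set.range (fun t : ℝ => θ (max t 0) k l)) := by
    intro k l hl hlk hkN
    refine ⟨0, ?_⟩
    rintro y ⟨t, rfl⟩
    exact (region (max t 0) (le_max_right _ _) k l hl hlk hkN).1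
  refine ⟨fun i j => if 1 ≤ j ∧ j < i ∧ i ≤ N then ⨅ t : ℝ, θ (max t 0) i j else 0,
    ?_, ?_⟩
  · intro i j hj hji hiN
    simp only [if_pos (show 1 ≤ j ∧ j < i ∧ i ≤ N from ⟨hj, hji, hiN⟩)]
    have htend := tendsto_atTop_ciInf (hanti i j hj hji hiN) (hbdd i j hj hji hiN)
    apply htend.congr'
    filter_upwards [eventually_ge_atTop (0:ℝ)] with t ht
    rw [max_eq_left ht]
  · intro i j hj hji hiN
    have hmem2 : 1 ≤ j ∧ j < i + 1 ∧ i + 1 ≤ N := ⟨hj, by omega, by omega⟩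
    rcases eq_or_ne i j with hij | hij
    · simp only [if_pos hij, if_pos hmem2]
      apply le_ciInf
      intro t
      exact (region (max t 0) (le_max_right _ _) (i+1) j hj (by omega) (by omega)).1
    · simp only [if_neg hij, if_pos hmem2,
        if_pos (show 1 ≤ j ∧ j < i ∧ i ≤ N from ⟨hj, by omega, by omega⟩)]
      have ht1 := tendsto_atTop_ciInf (hanti i j hj (by omega) (by omega))
        (hbdd i j hj (by omega) (by omega))
      have ht2 := tendsto_atTop_ciInf (hanti (i+1) j hj (by omega) (by omega))
        (hbdd (i+1) j hj (by omega) (by omega))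
      refine le_of_tendsto_of_tendsto ht1 ht2 ?_
      filter_upwards [eventually_ge_atTop (0:ℝ)] with t ht
      exact ord (max t 0) (le_max_right _ _) i j hj (by omega) (by omega)
end

section
/- Let H be a coupling function, let N ≥ 2 be an integer, let θ^{(N)} be a standard solution of the reduced system for lattice size N and θ^{(N+1)} a standard solution of the reduced system for lattice size N+1, and let θ̄^{(N)}_{i,j} := lim_{t→∞} θ^{(N)}_{i,j}(t) and θ̄^{(N+1)}_{i,j} := lim_{t→∞} θ^{(N+1)}_{i,j}(t) (these limits exist). Then θ̄^{(N)}_{i,j} ≤ θ̄^{(N+1)}_{i,j} for all (i,j) with 1 ≤ j < i ≤ N; that is, the equilibrium value at each index of the reduced system is nondecreasing as a function of the lattice size. -/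
open Real Filter Topology

section Aux
open Set

section HFacts
variable {H : ℝ → ℝ} (hH : IsCoupling H)
include hH

lemma H_zero : H 0 = 0 := by
  have := hH.2.2.1 0
  simp at this
  linarith

lemma H_monoOn : MonotoneOn H (Icc (-(π/2)) (π/2)) := by
  have : StrictMonoOn H (Icc (-(π/2)) (π/2)) := by
    apply strictMonoOn_of_deriv_pos (convex_Icc _ _) (hH.1.continuous.continuousOn)
    rw [interior_Icc]
    exact hH.2.2.2
  exact this.monotoneOn

lemma H_mono : ∀ a b : ℝ, -(π/2) ≤ a → a ≤ b → b ≤ π/2 → H a ≤ H b := by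
  intro a b ha hab hb
  exact H_monoOn hH ⟨ha, hab.trans hb⟩ ⟨ha.trans hab, hb⟩ hab

lemma H_nonpos : ∀ x : ℝ, -(π/2) ≤ x → x ≤ 0 → H x ≤ 0 := by
  intro x hx hx0
  have := H_mono hH x 0 hx hx0 (by positivity)
  rwa [H_zero hH] at this

lemma H_nonneg : ∀ x : ℝ, 0 ≤ x → x ≤ π/2 → 0 ≤ H x := by
  intro x hx0 hx
  have := H_mono hH 0 x (by linarith [pi_pos]) hx0 hx
  rwa [H_zero hH] at this

lemma H_lipschitz : ∃ L : ℝ, 0 < L ∧ ∀ a b : ℝ, |H a - H b| ≤ L * |a - b| := by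
  have hper : Function.Periodic (deriv H) (2 * π) := by
    intro x
    have : (fun y : ℝ => H (y + 2 * π)) = H := funext hH.2.1
    calc deriv H (x + 2 * π) = deriv (fun y => H (y + 2 * π)) x := (deriv_comp_add_const ..).symm
      _ = deriv H x := by rw [this]
  have hdc : Continuous (deriv H) := (hH.1.continuous_deriv (by simp))
  have hb : Bornology.IsBounded (Set.range (deriv H)) :=
    hper.isBounded_of_continuous (by positivity) hdc
  obtain ⟨C, hC⟩ := isBounded_iff_forall_norm_le.1 hb
  refine ⟨max C 1, by positivity, ?_⟩
  intro a b
  have hdiff : Differentiable ℝ H := hH.1.differentiable (by simp)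
  have := Convex.norm_image_sub_le_of_norm_deriv_le (f := H) (s := Set.univ) (C := max C 1)
    (fun x _ => hdiff x)
    (fun x _ => (hC _ ⟨x, rfl⟩).trans (le_max_left C 1)) convex_univ (Set.mem_univ b) (Set.mem_univ a)
  simpa [Real.norm_eq_abs] using this

end HFacts


lemma max_engine {ι : Type*} [Fintype ι] [Nonempty ι] {u f : ℝ → ι → ℝ}
    (hd : ∀ i t, HasDerivAt (fun s => u s i) (f t i) t)
    (h0 : ∀ i, u 0 i ≤ 0) {K : ℝ} (hK : 0 < K)
    (hkam : ∀ t, 0 ≤ t → ∀ i, 0 ≤ u t i → (∀ j, u t j ≤ u t i) → f t i ≤ K * u t i) :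
    ∀ t, 0 ≤ t → ∀ i, u t i ≤ 0 := by
  classical
  have hucont : ∀ i : ι, Continuous fun s => u s i := fun i =>
    continuous_iff_continuousAt.2 fun t => (hd i t).continuousAt
  set m : ℝ → ℝ := fun s => Finset.univ.sup' Finset.univ_nonempty (u s) with hm
  have hmcont : Continuous m := by
    rw [continuous_iff_continuousAt]
    intro x
    exact ContinuousAt.finset_sup'_apply Finset.univ_nonempty
      (fun i _ => (hucont i).continuousAt)
  have hle : ∀ s (i : ι), u s i ≤ m s := fun s i =>
    Finset.le_sup' (u s) (Finset.mem_univ i)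
  have harg : ∀ s, ∃ i : ι, u s i = m s := by
    intro s
    obtain ⟨i, _, hi⟩ := Finset.exists_mem_eq_sup' Finset.univ_nonempty (u s)
    exact ⟨i, hi.symm⟩
  -- the argmax finset
  set A : ℝ → Finset ι := fun s => Finset.univ.filter (fun i => u s i = m s) with hA
  have hAne : ∀ s, (A s).Nonempty := by
    intro s
    obtain ⟨i, hi⟩ := harg s
    exact ⟨i, by simp [hA, hi]⟩
  set F : ℝ → ℝ := fun s => (A s).sup' (hAne s) (f s) with hF
  have key : ∀ t, 0 ≤ t → ∀ δ : ℝ, 0 < δ → m t ≤ δ * Real.exp (2 * K * t) := by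
    intro t ht δ hδ
    set B : ℝ → ℝ := fun s => δ * Real.exp (2 * K * s) with hB
    have hBpos : ∀ s, 0 < B s := fun s => mul_pos hδ (Real.exp_pos _)
    have hBder : ∀ x : ℝ, HasDerivAt B (2 * K * B x) x := by
      intro x
      have h1 : HasDerivAt (fun s : ℝ => 2 * K * s) (2 * K) x := by
        simpa using (hasDerivAt_id x).const_mul (2 * K)
      have h2 := (h1.exp).const_mul δ
      exact h2.congr_deriv (by simp only [hB]; ring)
    have hf' : ∀ x ∈ Ico 0 t, ∀ r, F x < r → ∃ᶠ z in 𝓝[>] x, slope m x z < r := by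
      intro x hx r hr
      -- find an argmax index realized frequently to the right
      have hfreq : ∃ i : ι, ∃ᶠ z in 𝓝[>] x, u z i = m z := by
        by_contra hnot
        push_neg at hnot
        have : ∀ᶠ z in 𝓝[>] x, ∀ i : ι, ¬ u z i = m z := eventually_all.2 hnot
        obtain ⟨z, hz⟩ := this.exists
        obtain ⟨i, hi⟩ := harg z
        exact hz i hi
      obtain ⟨i, hfreq⟩ := hfreq
      have hxi : u x i = m x := by
        have hclosed : IsClosed {z : ℝ | u z i = m z} := isClosed_eq (hucont i) hmcont
        have : x ∈ closure {z : ℝ | u z i = m z} :=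
          mem_closure_iff_frequently.2 (hfreq.filter_mono nhdsWithin_le_nhds)
        rwa [hclosed.closure_eq] at this
      have hfir : f x i < r := by
        refine lt_of_le_of_lt ?_ hr
        exact Finset.le_sup' (f x) (by simp [hA, hxi])
      have htend : Tendsto (slope (fun w => u w i) x) (𝓝[>] x) (𝓝 (f x i)) :=
        ((hasDerivAt_iff_tendsto_slope).1 (hd i x)).mono_left
          (nhdsWithin_mono x fun z hz => ne_of_gt hz)
      have hev : ∀ᶠ z in 𝓝[>] x, slope (fun w => u w i) x z < r :=
        htend.eventually ((Filter.tendsto_id : Tendsto id (𝓝 (f x i)) (𝓝 (f x i))).eventually_lt_const hfir) |>.mono (fun z hz => hz)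
      refine (hfreq.and_eventually hev).mono ?_
      rintro z ⟨hz1, hz2⟩
      have : slope m x z = slope (fun w => u w i) x z := by
        simp [slope_def_field, hz1, hxi]
      rwa [this]
    have ha : m 0 ≤ B 0 := by
      have : m 0 ≤ 0 := Finset.sup'_le _ _ fun i _ => h0 i
      have := this.trans_lt (hBpos 0)
      exact this.le
    have bound : ∀ x ∈ Ico 0 t, m x = B x → F x < 2 * K * B x := by
      intro x hx hmB
      rw [hF, Finset.sup'_lt_iff]
      intro i hi
      simp only [hA, Finset.mem_filter] at hi
      have hmax : ∀ j : ι, u x j ≤ u x i := fun j => (hle x j).trans_eq hi.2.symm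
      have hpos : 0 < u x i := by rw [hi.2, hmB]; exact hBpos x
      have := hkam x hx.1 i hpos.le hmax
      calc f x i ≤ K * u x i := this
        _ < 2 * K * u x i := by nlinarith
        _ = 2 * K * B x := by rw [hi.2, hmB]
    have := image_le_of_liminf_slope_right_lt_deriv_boundary hmcont.continuousOn hf' ha
      hBder bound (right_mem_Icc.2 ht)
    exact this
  intro t ht i
  refine (hle t i).trans ?_
  by_contra hpos
  push_neg at hpos
  have h1 := key t ht (m t / (2 * Real.exp (2 * K * t))) (by positivity)
  rw [div_mul_eq_mul_div, mul_div_assoc] at h1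
  have : Real.exp (2 * K * t) / (2 * Real.exp (2 * K * t)) = 1 / 2 := by
    rw [div_eq_div_iff (by positivity) (by norm_num)]; ring
  rw [this] at h1
  nlinarith

lemma latExt_mem {θ : ℤ → ℤ → ℝ} {M : ℤ} {m : ℝ} (hm : 0 ≤ m)
    (hb : ∀ k l : ℤ, 1 ≤ l → l < k → k ≤ M → θ k l ∈ Icc (-m) (π/2 + m))
    {i j : ℤ} (h1 : 1 ≤ j) (h2 : j < i) (h3 : i ≤ M) :
    latExt θ (i-1) j ∈ Icc (-m) (π/2 + m) ∧ latExt θ i (j+1) ∈ Icc (-m) (π/2+m) ∧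
      latExt θ i (j-1) ∈ Icc (-m) (π/2+m) := by
  have hz : (0:ℝ) ∈ Icc (-m) (π/2 + m) :=
    ⟨neg_nonpos.2 hm, by positivity⟩
  refine ⟨?_, ?_, ?_⟩
  · by_cases h : i - 1 = j
    · simpa [latExt, h] using hz
    · have hj0 : j ≠ 0 := by omega
      have : latExt θ (i-1) j = θ (i-1) j := by simp [latExt, h, hj0]
      rw [this]
      exact hb _ _ h1 (by omega) (by omega)
  · by_cases h : i = j + 1
    · simpa [latExt, h] using hz
    · have hj0 : (j + 1 : ℤ) ≠ 0 := by omega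
      have : latExt θ i (j+1) = θ i (j+1) := by
        simp [latExt, hj0]
        intro hij; omega
      rw [this]
      exact hb _ _ (by omega) (by omega) h3
  · by_cases h : j = 1
    · have hne : i ≠ (0:ℤ) := by omega
      have : latExt θ i (j-1) = π/2 - θ i 1 := by
        subst h; simp [latExt, hne]
      rw [this]
      have := hb i 1 le_rfl (by omega) h3
      constructor <;> [linarith [this.2]; linarith [this.1]]
    · have hne : i ≠ j - 1 := by omega
      have hj0 : (j - 1 : ℤ) ≠ 0 := by omega
      have : latExt θ i (j-1) = θ i (j-1) := by simp [latExt, hne, hj0]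
      rw [this]
      exact hb _ _ (by omega) (by omega) h3

lemma H_ub {H : ℝ → ℝ} (hH : IsCoupling H) {L : ℝ} (hL : 0 < L)
    (hLip : ∀ a b : ℝ, |H a - H b| ≤ L * |a - b|) :
    ∀ x c : ℝ, 0 ≤ c → -(π/2) - c ≤ x → x ≤ 0 → H x ≤ L * c := by
  intro x c hc h1 h2
  rcases le_or_gt (-(π/2)) x with h | h
  · exact (H_nonpos hH x h h2).trans (by positivity)
  · have h3 := (abs_le.1 (hLip x (-(π/2)))).2
    have h4 : |x - (-(π/2))| = -(x + π/2) := by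
      rw [abs_of_nonpos (by linarith)]; ring
    rw [h4] at h3
    have h5 : H (-(π/2)) ≤ 0 := H_nonpos hH _ le_rfl (by linarith [pi_pos])
    nlinarith

lemma H_lb {H : ℝ → ℝ} (hH : IsCoupling H) {L : ℝ} (hL : 0 < L)
    (hLip : ∀ a b : ℝ, |H a - H b| ≤ L * |a - b|) :
    ∀ x c : ℝ, 0 ≤ c → 0 ≤ x → x ≤ π/2 + c → -(L * c) ≤ H x := by
  intro x c hc h1 h2
  rcases le_or_gt x (π/2) with h | h
  · have := H_nonneg hH x h1 h
    nlinarith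
  · have h3 := (abs_le.1 (hLip x (π/2))).1
    have h4 : |x - π/2| = x - π/2 := abs_of_nonneg (by linarith)
    rw [h4] at h3
    have h5 : 0 ≤ H (π/2) := H_nonneg hH _ (by linarith [pi_pos]) le_rfl
    nlinarith

lemma box_invariance {H : ℝ → ℝ} (hH : IsCoupling H) {L : ℝ} (hL : 0 < L)
    (hLip : ∀ a b : ℝ, |H a - H b| ≤ L * |a - b|)
    {M : ℤ} (hM : 2 ≤ M) {θ : ℝ → ℤ → ℤ → ℝ} (hθ : IsStdSolution H M θ) :
    ∀ t : ℝ, 0 ≤ t → ∀ i j : ℤ, 1 ≤ j → j < i → i ≤ M → θ t i j ∈ Icc 0 (π/2) := by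
  set S : Finset (ℤ × ℤ) := Finset.Icc (1,1) (M,M) with hS
  have hmemS : ∀ k l : ℤ, 1 ≤ l → l < k → k ≤ M → ((k,l) ∈ S) := by
    intro k l h1 h2 h3
    simp only [hS, Finset.mem_Icc, Prod.le_def]
    constructor <;> constructor <;> omega
  haveI : Nonempty (↥S × Bool) := ⟨⟨⟨(2,1), hmemS 2 1 le_rfl one_lt_two hM⟩, true⟩⟩
  set u : ℝ → (↥S × Bool) → ℝ := fun t x =>
    if 1 ≤ (x.1 : ℤ×ℤ).2 ∧ (x.1 : ℤ×ℤ).2 < (x.1 : ℤ×ℤ).1 ∧ (x.1 : ℤ×ℤ).1 ≤ M then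
      (if x.2 then θ t (x.1 : ℤ×ℤ).1 (x.1 : ℤ×ℤ).2 - π/2 else -θ t (x.1 : ℤ×ℤ).1 (x.1 : ℤ×ℤ).2)
    else 0 with hu
  set f : ℝ → (↥S × Bool) → ℝ := fun t x =>
    if 1 ≤ (x.1 : ℤ×ℤ).2 ∧ (x.1 : ℤ×ℤ).2 < (x.1 : ℤ×ℤ).1 ∧ (x.1 : ℤ×ℤ).1 ≤ M then
      (if x.2 then reducedRHS H M (θ t) (x.1 : ℤ×ℤ).1 (x.1 : ℤ×ℤ).2
       else -reducedRHS H M (θ t) (x.1 : ℤ×ℤ).1 (x.1 : ℤ×ℤ).2)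
    else 0 with hf
  have hd : ∀ (x : ↥S × Bool) (t : ℝ), HasDerivAt (fun s => u s x) (f t x) t := by
    rintro ⟨⟨p, hp⟩, b⟩ t
    by_cases hg : 1 ≤ p.2 ∧ p.2 < p.1 ∧ p.1 ≤ M
    · have e1 : (fun s => u s (⟨⟨p, hp⟩, b⟩)) =
          fun s => (if b then θ s p.1 p.2 - π/2 else -θ s p.1 p.2) := by
        funext s; simp [hu, hg]
      have e2 : f t (⟨⟨p, hp⟩, b⟩) =
          (if b then reducedRHS H M (θ t) p.1 p.2 else -reducedRHS H M (θ t) p.1 p.2) := by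
        simp [hf, hg]
      rw [e1, e2]
      have hder := hθ.1 p.1 p.2 hg.1 hg.2.1 hg.2.2 t
      cases b
      · show HasDerivAt (fun s => -θ s p.1 p.2) (-reducedRHS H M (θ t) p.1 p.2) t
        exact hder.neg
      · simpa using hder.sub_const (π/2)
    · have e1 : (fun s => u s (⟨⟨p, hp⟩, b⟩)) = fun _ => (0:ℝ) := by
        funext s; simp [hu, hg]
      have e2 : f t (⟨⟨p, hp⟩, b⟩) = 0 := by simp [hf, hg]
      rw [e1, e2]
      exact hasDerivAt_const t 0
  have h0 : ∀ x, u 0 x ≤ 0 := by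
    rintro ⟨⟨p, hp⟩, b⟩
    by_cases hg : 1 ≤ p.2 ∧ p.2 < p.1 ∧ p.1 ≤ M
    · have hiv := hθ.2 p.1 p.2 hg.1 hg.2.1 hg.2.2
      cases b <;> simp [hu, hg, hiv] <;> linarith [pi_pos]
    · simp [hu, hg]
  have hkam : ∀ t, 0 ≤ t → ∀ x, 0 ≤ u t x → (∀ y, u t y ≤ u t x) →
      f t x ≤ (8*L) * u t x := by
    intro t ht x hx0 hmax
    obtain ⟨⟨p, hp⟩, b⟩ := x
    by_cases hg : 1 ≤ p.2 ∧ p.2 < p.1 ∧ p.1 ≤ M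
    swap
    · have e1 : u t (⟨⟨p, hp⟩, b⟩) = 0 := by simp [hu, hg]
      have e2 : f t (⟨⟨p, hp⟩, b⟩) = 0 := by simp [hf, hg]
      rw [e1, e2]; simp
    have hval : u t (⟨⟨p, hp⟩, b⟩) =
        (if b then θ t p.1 p.2 - π/2 else -θ t p.1 p.2) := by simp [hu, hg]
    generalize hcv : u t (⟨⟨p, hp⟩, b⟩) = c at hx0 hmax hval ⊢
    have hb : ∀ k l : ℤ, 1 ≤ l → l < k → k ≤ M → θ t k l ∈ Icc (-c) (π/2 + c) := by
      intro k l h1 h2 h3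
      have hT : θ t k l - π/2 ≤ c := by
        simpa [hu, h1, h2, h3] using hmax ⟨⟨(k,l), hmemS k l h1 h2 h3⟩, true⟩
      have hF : -θ t k l ≤ c := by
        simpa [hu, h1, h2, h3] using hmax ⟨⟨(k,l), hmemS k l h1 h2 h3⟩, false⟩
      exact ⟨by linarith, by linarith⟩
    obtain ⟨hA1, hA2, hA3⟩ := latExt_mem hx0 hb hg.1 hg.2.1 hg.2.2
    have hself := hb p.1 p.2 hg.1 hg.2.1 hg.2.2
    cases b
    · -- b = false : u = -θ
      have hm : c = -θ t p.1 p.2 := by simpa using hval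
      have e2 : f t (⟨⟨p, hp⟩, false⟩) = -reducedRHS H M (θ t) p.1 p.2 := by simp [hf, hg]
      rw [e2]
      have key : ∀ z : ℝ, z ∈ Icc (-c) (π/2 + c) → -(L * (2*c)) ≤ H (z - θ t p.1 p.2) := by
        intro z hz
        apply H_lb hH hL hLip _ _ (by linarith)
        · linarith [hz.1, hm]
        · linarith [hz.2, hm]
      have t1 := key _ hA1
      have t2 := key _ hA2
      have t3 := key _ hA3
      have t4 : -(L * (2*c)) ≤ (if p.1 < M then H (θ t (p.1+1) p.2 - θ t p.1 p.2) else 0) := by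
        split_ifs with hi
        · exact key _ (hb (p.1+1) p.2 hg.1 (by omega) (by omega))
        · have : (0:ℝ) ≤ L * (2*c) := by positivity
          linarith
      rw [reducedRHS]
      linarith
    · -- b = true : u = θ - π/2
      have hm : c = θ t p.1 p.2 - π/2 := by simpa using hval
      have e2 : f t (⟨⟨p, hp⟩, true⟩) = reducedRHS H M (θ t) p.1 p.2 := by simp [hf, hg]
      rw [e2]
      have key : ∀ z : ℝ, z ∈ Icc (-c) (π/2 + c) → H (z - θ t p.1 p.2) ≤ L * (2*c) := by
        intro z hz
        apply H_ub hH hL hLip _ _ (by linarith)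
        · linarith [hz.1, hm]
        · linarith [hz.2, hm]
      have t1 := key _ hA1
      have t2 := key _ hA2
      have t3 := key _ hA3
      have t4 : (if p.1 < M then H (θ t (p.1+1) p.2 - θ t p.1 p.2) else 0) ≤ L * (2*c) := by
        split_ifs with hi
        · exact key _ (hb (p.1+1) p.2 hg.1 (by omega) (by omega))
        · positivity
      rw [reducedRHS]
      linarith
  have hmain := max_engine hd h0 (K := 8*L) (by positivity) hkam
  intro t ht i j h1 h2 h3
  have hT : θ t i j - π/2 ≤ 0 := by
    simpa [hu, h1, h2, h3] using hmain t ht ⟨⟨(i,j), hmemS i j h1 h2 h3⟩, true⟩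
  have hF : -θ t i j ≤ 0 := by
    simpa [hu, h1, h2, h3] using hmain t ht ⟨⟨(i,j), hmemS i j h1 h2 h3⟩, false⟩
  exact ⟨by linarith, by linarith⟩

lemma mono_in_i {H : ℝ → ℝ} (hH : IsCoupling H) {N : ℤ} (hN : 2 ≤ N)
    {θ : ℝ → ℤ → ℤ → ℝ} (hθ : IsStdSolution H (N+1) θ)
    (hbox : ∀ t : ℝ, 0 ≤ t → ∀ k l : ℤ, 1 ≤ l → l < k → k ≤ N+1 → θ t k l ∈ Icc 0 (π/2)) :
    ∀ t : ℝ, 0 ≤ t → ∀ i j : ℤ, 1 ≤ j → j < i → i ≤ N → θ t i j - θ t (i+1) j ≤ 0 := by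
  set S : Finset (ℤ × ℤ) := Finset.Icc (1,1) (N,N) with hS
  have hmemS : ∀ k l : ℤ, 1 ≤ l → l < k → k ≤ N → ((k,l) ∈ S) := by
    intro k l h1 h2 h3
    simp only [hS, Finset.mem_Icc, Prod.le_def]
    constructor <;> constructor <;> omega
  haveI : Nonempty (↥S) := ⟨⟨(2,1), hmemS 2 1 le_rfl one_lt_two hN⟩⟩
  set u : ℝ → ↥S → ℝ := fun t x =>
    if 1 ≤ (x : ℤ×ℤ).2 ∧ (x : ℤ×ℤ).2 < (x : ℤ×ℤ).1 ∧ (x : ℤ×ℤ).1 ≤ N then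
      θ t (x : ℤ×ℤ).1 (x : ℤ×ℤ).2 - θ t ((x : ℤ×ℤ).1 + 1) (x : ℤ×ℤ).2
    else 0 with hu
  set f : ℝ → ↥S → ℝ := fun t x =>
    if 1 ≤ (x : ℤ×ℤ).2 ∧ (x : ℤ×ℤ).2 < (x : ℤ×ℤ).1 ∧ (x : ℤ×ℤ).1 ≤ N then
      reducedRHS H (N+1) (θ t) (x : ℤ×ℤ).1 (x : ℤ×ℤ).2 -
        reducedRHS H (N+1) (θ t) ((x : ℤ×ℤ).1 + 1) (x : ℤ×ℤ).2
    else 0 with hf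
  have hd : ∀ (x : ↥S) (t : ℝ), HasDerivAt (fun s => u s x) (f t x) t := by
    rintro ⟨p, hp⟩ t
    by_cases hg : 1 ≤ p.2 ∧ p.2 < p.1 ∧ p.1 ≤ N
    · have e1 : (fun s => u s ⟨p, hp⟩) = fun s => θ s p.1 p.2 - θ s (p.1+1) p.2 := by
        funext s; simp [hu, hg]
      have e2 : f t ⟨p, hp⟩ =
          reducedRHS H (N+1) (θ t) p.1 p.2 - reducedRHS H (N+1) (θ t) (p.1+1) p.2 := by
        simp [hf, hg]
      rw [e1, e2]
      exact (hθ.1 p.1 p.2 hg.1 hg.2.1 (by omega) t).sub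
        (hθ.1 (p.1+1) p.2 hg.1 (by omega) (by omega) t)
    · have e1 : (fun s => u s ⟨p, hp⟩) = fun _ => (0:ℝ) := by funext s; simp [hu, hg]
      have e2 : f t ⟨p, hp⟩ = 0 := by simp [hf, hg]
      rw [e1, e2]
      exact hasDerivAt_const t 0
  have h0 : ∀ x, u 0 x ≤ 0 := by
    rintro ⟨p, hp⟩
    by_cases hg : 1 ≤ p.2 ∧ p.2 < p.1 ∧ p.1 ≤ N
    · have i1 := hθ.2 p.1 p.2 hg.1 hg.2.1 (by omega)
      have i2 := hθ.2 (p.1+1) p.2 hg.1 (by omega) (by omega)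
      simp [hu, hg, i1, i2]
    · simp [hu, hg]
  have hkam : ∀ t, 0 ≤ t → ∀ x, 0 ≤ u t x → (∀ y, u t y ≤ u t x) →
      f t x ≤ (1:ℝ) * u t x := by
    intro t ht x hx0 hmax
    obtain ⟨p, hp⟩ := x
    by_cases hg : 1 ≤ p.2 ∧ p.2 < p.1 ∧ p.1 ≤ N
    swap
    · have e1 : u t (⟨p, hp⟩ : ↥S) = 0 := by simp [hu, hg]
      have e2 : f t (⟨p, hp⟩ : ↥S) = 0 := by simp [hf, hg]
      rw [e1, e2]; simp
    obtain ⟨i, j⟩ := p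
    simp only at hg
    have hval : u t (⟨(i,j), hp⟩ : ↥S) = θ t i j - θ t (i+1) j := by simp [hu, hg]
    generalize hcv : u t (⟨(i,j), hp⟩ : ↥S) = c at hx0 hmax hval ⊢
    have hmax' : ∀ k l : ℤ, 1 ≤ l → l < k → k ≤ N → θ t k l - θ t (k+1) l ≤ c := by
      intro k l h1 h2 h3
      have h4 := hmax ⟨(k,l), hmemS k l h1 h2 h3⟩
      simp only [hu] at h4
      simpa [h1, h2, h3] using h4
    have hbx : ∀ k l : ℤ, 1 ≤ l → l < k → k ≤ N+1 → θ t k l ∈ Icc 0 (π/2) :=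
      hbox t ht
    have hLEb : ∀ k l : ℤ, 1 ≤ l → l < k → k ≤ N+1 →
        latExt (θ t) (k-1) l ∈ Icc (-(0:ℝ)) (π/2 + 0) ∧
        latExt (θ t) k (l+1) ∈ Icc (-(0:ℝ)) (π/2 + 0) ∧
        latExt (θ t) k (l-1) ∈ Icc (-(0:ℝ)) (π/2 + 0) := by
      intro k l h1 h2 h3
      exact latExt_mem le_rfl
        (fun k l h1 h2 h3 => by simpa using hbx k l h1 h2 h3) h1 h2 h3
    have hLE : ∀ k l : ℤ, 1 ≤ l → l < k → k ≤ N+1 →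
        latExt (θ t) (k-1) l ∈ Icc (0:ℝ) (π/2) ∧
        latExt (θ t) k (l+1) ∈ Icc (0:ℝ) (π/2) ∧
        latExt (θ t) k (l-1) ∈ Icc (0:ℝ) (π/2) := by
      intro k l h1 h2 h3
      have := hLEb k l h1 h2 h3
      simpa using this
    have e2 : f t (⟨(i,j), hp⟩ : ↥S) =
        reducedRHS H (N+1) (θ t) i j - reducedRHS H (N+1) (θ t) (i+1) j := by
      simp [hf, hg]
    rw [e2]
    have hij := hbx i j hg.1 hg.2.1 (by omega)
    have hi1j := hbx (i+1) j hg.1 (by omega) (by omega)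
    obtain ⟨hT1m, hT2m, hT3m⟩ := hLE i j hg.1 hg.2.1 (by omega)
    obtain ⟨hS1m, hS2m, hS3m⟩ := hLE (i+1) j hg.1 (by omega) (by omega)
    -- rewrite the (i+1)-side left neighbour: latExt θ ((i+1)-1) j = θ i j
    have eS1 : latExt (θ t) (i+1-1) j = θ t i j := by
      have hne : ¬ (i+1-1 = j) := by omega
      have hj0 : j ≠ 0 := by omega
      simp only [latExt, if_neg hne, if_neg hj0]
      norm_num
    -- Term 1 comparison
    have hc1 : H (latExt (θ t) (i-1) j - θ t i j) ≤
        H (latExt (θ t) (i+1-1) j - θ t (i+1) j) := by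
      rw [eS1]
      apply H_mono hH _ _ (by linarith [hT1m.1, hij.2]) _ (by linarith [hij.2, hi1j.1])
      by_cases h : i - 1 = j
      · have : latExt (θ t) (i-1) j = 0 := by simp [latExt, h]
        rw [this]
        linarith [hij.1, hval]
      · have hj0 : j ≠ 0 := by omega
        have : latExt (θ t) (i-1) j = θ t (i-1) j := by simp [latExt, h, hj0]
        rw [this]
        have := hmax' (i-1) j hg.1 (by omega) (by omega)
        have e : i - 1 + 1 = i := by omega
        rw [e] at this
        linarith [hval]
    -- Term 2 comparison
    have eS2 : latExt (θ t) (i+1) (j+1) = θ t (i+1) (j+1) := by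
      have hne : ¬ (i+1 = j+1) := by omega
      have hj0 : (j+1 : ℤ) ≠ 0 := by omega
      simp [latExt, hne, hj0]
    have hc2 : H (latExt (θ t) i (j+1) - θ t i j) ≤
        H (latExt (θ t) (i+1) (j+1) - θ t (i+1) j) := by
      rw [eS2]
      have hb2 := hbx (i+1) (j+1) (by omega) (by omega) (by omega)
      apply H_mono hH _ _ (by linarith [hT2m.1, hij.2]) _ (by linarith [hb2.2, hi1j.1])
      by_cases h : i = j + 1
      · have : latExt (θ t) i (j+1) = 0 := by simp [latExt, h]
        rw [this]
        linarith [hb2.1, hval]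
      · have hj0 : (j+1:ℤ) ≠ 0 := by omega
        have : latExt (θ t) i (j+1) = θ t i (j+1) := by simp [latExt, h, hj0]
        rw [this]
        have := hmax' i (j+1) (by omega) (by omega) (by omega)
        linarith [hval]
    -- Term 3 comparison
    have hc3 : H (latExt (θ t) i (j-1) - θ t i j) ≤
        H (latExt (θ t) (i+1) (j-1) - θ t (i+1) j) := by
      apply H_mono hH _ _ (by linarith [hT3m.1, hij.2]) _ (by linarith [hS3m.2, hi1j.1])
      by_cases h : j = 1
      · subst h
        have hne1 : i ≠ (0:ℤ) := by omega
        have hne2 : i + 1 ≠ (0:ℤ) := by omega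
        have e1 : latExt (θ t) i (1-1) = π/2 - θ t i 1 := by
          norm_num [latExt, hne1]
        have e2 : latExt (θ t) (i+1) (1-1) = π/2 - θ t (i+1) 1 := by
          norm_num [latExt, hne2]
        rw [e1, e2]
        linarith [hval, hx0]
      · have hne1 : i ≠ j - 1 := by omega
        have hne2 : i + 1 ≠ j - 1 := by omega
        have hj0 : (j-1:ℤ) ≠ 0 := by omega
        have e1 : latExt (θ t) i (j-1) = θ t i (j-1) := by simp [latExt, hne1, hj0]
        have e2 : latExt (θ t) (i+1) (j-1) = θ t (i+1) (j-1) := by simp [latExt, hne2, hj0]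
        rw [e1, e2]
        have := hmax' i (j-1) (by omega) (by omega) (by omega)
        linarith [hval]
    -- Term 4 comparison
    have hc4 : (if i < N+1 then H (θ t (i+1) j - θ t i j) else 0) -
        (if i+1 < N+1 then H (θ t (i+1+1) j - θ t (i+1) j) else 0) ≤ 0 := by
      rw [if_pos (by omega : i < N+1)]
      by_cases hi : i + 1 < N + 1
      · rw [if_pos hi]
        have hb4 := hbx (i+2) j (by omega) (by omega) (by omega)
        have h5 := hmax' (i+1) j hg.1 (by omega) (by omega)
        have e : i + 1 + 1 = i + 2 := by ring
        rw [e] at h5 ⊢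
        have := H_mono hH (θ t (i+1) j - θ t i j) (θ t (i+2) j - θ t (i+1) j)
          (by linarith [hi1j.1, hij.2]) (by linarith [hval, h5]) (by linarith [hb4.2, hi1j.1])
        linarith
      · rw [if_neg hi]
        have : H (θ t (i+1) j - θ t i j) ≤ 0 := by
          apply H_nonpos hH
          · linarith [hi1j.1, hij.2]
          · linarith [hval, hx0]
        linarith
    rw [reducedRHS, reducedRHS]
    have goal1 : reducedRHS H (N+1) (θ t) i j - reducedRHS H (N+1) (θ t) (i+1) j ≤ 0 := by
      rw [reducedRHS, reducedRHS]
      linarith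
    linarith [goal1, hx0]
  have hmain := max_engine hd h0 (K := (1:ℝ)) one_pos hkam
  intro t ht i j h1 h2 h3
  have := hmain t ht ⟨(i,j), hmemS i j h1 h2 h3⟩
  simpa [hu, h1, h2, h3] using this

lemma comparison {H : ℝ → ℝ} (hH : IsCoupling H) {N : ℤ} (hN : 2 ≤ N)
    {θN θN1 : ℝ → ℤ → ℤ → ℝ} (hθN : IsStdSolution H N θN)
    (hθN1 : IsStdSolution H (N+1) θN1) :
    ∀ t : ℝ, 0 ≤ t → ∀ i j : ℤ, 1 ≤ j → j < i → i ≤ N → θN t i j ≤ θN1 t i j := by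
  obtain ⟨L, hL, hLip⟩ := H_lipschitz hH
  have boxN := box_invariance hH hL hLip hN hθN
  have boxN1 := box_invariance hH hL hLip (M := N+1) (by omega) hθN1
  have hmono := mono_in_i hH hN hθN1 (fun t ht => boxN1 t ht)
  set S : Finset (ℤ × ℤ) := Finset.Icc (1,1) (N,N) with hS
  have hmemS : ∀ k l : ℤ, 1 ≤ l → l < k → k ≤ N → ((k,l) ∈ S) := by
    intro k l h1 h2 h3
    simp only [hS, Finset.mem_Icc, Prod.le_def]
    constructor <;> constructor <;> omega
  haveI : Nonempty (↥S) := ⟨⟨(2,1), hmemS 2 1 le_rfl one_lt_two hN⟩⟩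
  set u : ℝ → ↥S → ℝ := fun t x =>
    if 1 ≤ (x : ℤ×ℤ).2 ∧ (x : ℤ×ℤ).2 < (x : ℤ×ℤ).1 ∧ (x : ℤ×ℤ).1 ≤ N then
      θN t (x : ℤ×ℤ).1 (x : ℤ×ℤ).2 - θN1 t (x : ℤ×ℤ).1 (x : ℤ×ℤ).2
    else 0 with hu
  set f : ℝ → ↥S → ℝ := fun t x =>
    if 1 ≤ (x : ℤ×ℤ).2 ∧ (x : ℤ×ℤ).2 < (x : ℤ×ℤ).1 ∧ (x : ℤ×ℤ).1 ≤ N then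
      reducedRHS H N (θN t) (x : ℤ×ℤ).1 (x : ℤ×ℤ).2 -
        reducedRHS H (N+1) (θN1 t) (x : ℤ×ℤ).1 (x : ℤ×ℤ).2
    else 0 with hf
  have hd : ∀ (x : ↥S) (t : ℝ), HasDerivAt (fun s => u s x) (f t x) t := by
    rintro ⟨p, hp⟩ t
    by_cases hg : 1 ≤ p.2 ∧ p.2 < p.1 ∧ p.1 ≤ N
    · have e1 : (fun s => u s ⟨p, hp⟩) = fun s => θN s p.1 p.2 - θN1 s p.1 p.2 := by
        funext s; simp [hu, hg]
      have e2 : f t ⟨p, hp⟩ =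
          reducedRHS H N (θN t) p.1 p.2 - reducedRHS H (N+1) (θN1 t) p.1 p.2 := by
        simp [hf, hg]
      rw [e1, e2]
      exact (hθN.1 p.1 p.2 hg.1 hg.2.1 hg.2.2 t).sub
        (hθN1.1 p.1 p.2 hg.1 hg.2.1 (by omega) t)
    · have e1 : (fun s => u s ⟨p, hp⟩) = fun _ => (0:ℝ) := by funext s; simp [hu, hg]
      have e2 : f t ⟨p, hp⟩ = 0 := by simp [hf, hg]
      rw [e1, e2]
      exact hasDerivAt_const t 0
  have h0 : ∀ x, u 0 x ≤ 0 := by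
    rintro ⟨p, hp⟩
    by_cases hg : 1 ≤ p.2 ∧ p.2 < p.1 ∧ p.1 ≤ N
    · have i1 := hθN.2 p.1 p.2 hg.1 hg.2.1 hg.2.2
      have i2 := hθN1.2 p.1 p.2 hg.1 hg.2.1 (by omega)
      simp [hu, hg, i1, i2]
    · simp [hu, hg]
  have hkam : ∀ t, 0 ≤ t → ∀ x, 0 ≤ u t x → (∀ y, u t y ≤ u t x) →
      f t x ≤ (1:ℝ) * u t x := by
    intro t ht x hx0 hmax
    obtain ⟨p, hp⟩ := x
    by_cases hg : 1 ≤ p.2 ∧ p.2 < p.1 ∧ p.1 ≤ N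
    swap
    · have e1 : u t (⟨p, hp⟩ : ↥S) = 0 := by simp [hu, hg]
      have e2 : f t (⟨p, hp⟩ : ↥S) = 0 := by simp [hf, hg]
      rw [e1, e2]; simp
    obtain ⟨i, j⟩ := p
    simp only at hg
    have hval : u t (⟨(i,j), hp⟩ : ↥S) = θN t i j - θN1 t i j := by simp [hu, hg]
    generalize hcv : u t (⟨(i,j), hp⟩ : ↥S) = c at hx0 hmax hval ⊢
    have hmax' : ∀ k l : ℤ, 1 ≤ l → l < k → k ≤ N → θN t k l - θN1 t k l ≤ c := by
      intro k l h1 h2 h3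
      have h4 := hmax ⟨(k,l), hmemS k l h1 h2 h3⟩
      simp only [hu] at h4
      simpa [h1, h2, h3] using h4
    have hbxN : ∀ k l : ℤ, 1 ≤ l → l < k → k ≤ N → θN t k l ∈ Icc 0 (π/2) := boxN t ht
    have hbxN1 : ∀ k l : ℤ, 1 ≤ l → l < k → k ≤ N+1 → θN1 t k l ∈ Icc 0 (π/2) :=
      boxN1 t ht
    have hLEx : ∀ k l : ℤ, 1 ≤ l → l < k → k ≤ N →
        latExt (θN t) (k-1) l ∈ Icc (0:ℝ) (π/2) ∧
        latExt (θN t) k (l+1) ∈ Icc (0:ℝ) (π/2) ∧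
        latExt (θN t) k (l-1) ∈ Icc (0:ℝ) (π/2) := by
      intro k l h1 h2 h3
      have := latExt_mem (m := 0) le_rfl
        (fun k l h1 h2 h3 => by simpa using hbxN k l h1 h2 h3) h1 h2 h3
      simpa using this
    have hLEy : ∀ k l : ℤ, 1 ≤ l → l < k → k ≤ N+1 →
        latExt (θN1 t) (k-1) l ∈ Icc (0:ℝ) (π/2) ∧
        latExt (θN1 t) k (l+1) ∈ Icc (0:ℝ) (π/2) ∧
        latExt (θN1 t) k (l-1) ∈ Icc (0:ℝ) (π/2) := by
      intro k l h1 h2 h3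
      have := latExt_mem (m := 0) le_rfl
        (fun k l h1 h2 h3 => by simpa using hbxN1 k l h1 h2 h3) h1 h2 h3
      simpa using this
    have e2 : f t (⟨(i,j), hp⟩ : ↥S) =
        reducedRHS H N (θN t) i j - reducedRHS H (N+1) (θN1 t) i j := by
      simp [hf, hg]
    rw [e2]
    have hxij := hbxN i j hg.1 hg.2.1 hg.2.2
    have hyij := hbxN1 i j hg.1 hg.2.1 (by omega)
    obtain ⟨hX1, hX2, hX3⟩ := hLEx i j hg.1 hg.2.1 hg.2.2
    obtain ⟨hY1, hY2, hY3⟩ := hLEy i j hg.1 hg.2.1 (by omega)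
    -- Term 1
    have hc1 : H (latExt (θN t) (i-1) j - θN t i j) ≤
        H (latExt (θN1 t) (i-1) j - θN1 t i j) := by
      apply H_mono hH _ _ (by linarith [hX1.1, hxij.2]) _ (by linarith [hY1.2, hyij.1])
      by_cases h : i - 1 = j
      · simp only [latExt, if_pos h]
        linarith [hval]
      · have hj0 : j ≠ 0 := by omega
        simp only [latExt, if_neg h, if_neg hj0]
        have := hmax' (i-1) j hg.1 (by omega) (by omega)
        linarith [hval]
    -- Term 2
    have hc2 : H (latExt (θN t) i (j+1) - θN t i j) ≤
        H (latExt (θN1 t) i (j+1) - θN1 t i j) := by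
      apply H_mono hH _ _ (by linarith [hX2.1, hxij.2]) _ (by linarith [hY2.2, hyij.1])
      by_cases h : i = j + 1
      · simp only [latExt, if_pos h]
        linarith [hval]
      · have hj0 : (j+1:ℤ) ≠ 0 := by omega
        simp only [latExt, if_neg h, if_neg hj0]
        have := hmax' i (j+1) (by omega) (by omega) hg.2.2
        linarith [hval]
    -- Term 3
    have hc3 : H (latExt (θN t) i (j-1) - θN t i j) ≤
        H (latExt (θN1 t) i (j-1) - θN1 t i j) := by
      apply H_mono hH _ _ (by linarith [hX3.1, hxij.2]) _ (by linarith [hY3.2, hyij.1])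
      by_cases h : j = 1
      · subst h
        have hne : i ≠ (0:ℤ) := by omega
        have e1 : latExt (θN t) i (1-1) = π/2 - θN t i 1 := by norm_num [latExt, hne]
        have e2' : latExt (θN1 t) i (1-1) = π/2 - θN1 t i 1 := by norm_num [latExt, hne]
        rw [e1, e2']
        linarith [hval, hx0]
      · have hne : i ≠ j - 1 := by omega
        have hj0 : (j-1:ℤ) ≠ 0 := by omega
        simp only [latExt, if_neg hne, if_neg hj0]
        have := hmax' i (j-1) (by omega) (by omega) hg.2.2
        linarith [hval]
    -- Term 4
    have hc4 : (if i < N then H (θN t (i+1) j - θN t i j) else 0) -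
        (if i < N+1 then H (θN1 t (i+1) j - θN1 t i j) else 0) ≤ 0 := by
      rw [if_pos (by omega : i < N+1)]
      by_cases hi : i < N
      · rw [if_pos hi]
        have hx4 := hbxN (i+1) j hg.1 (by omega) (by omega)
        have hy4 := hbxN1 (i+1) j hg.1 (by omega) (by omega)
        have h5 := hmax' (i+1) j hg.1 (by omega) (by omega)
        have := H_mono hH (θN t (i+1) j - θN t i j) (θN1 t (i+1) j - θN1 t i j)
          (by linarith [hx4.1, hxij.2]) (by linarith [hval, h5])
          (by linarith [hy4.2, hyij.1])
        linarith
      · rw [if_neg hi]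
        have hi' : i = N := by omega
        have hy4 := hbxN1 (i+1) j hg.1 (by omega) (by omega)
        have hm := hmono t ht i j hg.1 hg.2.1 hg.2.2
        have : 0 ≤ H (θN1 t (i+1) j - θN1 t i j) := by
          apply H_nonneg hH
          · linarith [hm]
          · linarith [hy4.2, hyij.1]
        linarith
    rw [reducedRHS, reducedRHS]
    have hgoal : H (latExt (θN t) (i - 1) j - θN t i j) + H (latExt (θN t) i (j + 1) - θN t i j) +
        H (latExt (θN t) i (j - 1) - θN t i j) +
        (if i < N then H (θN t (i + 1) j - θN t i j) else 0) -
        (H (latExt (θN1 t) (i - 1) j - θN1 t i j) + H (latExt (θN1 t) i (j + 1) - θN1 t i j) +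
        H (latExt (θN1 t) i (j - 1) - θN1 t i j) +
        (if i < N+1 then H (θN1 t (i + 1) j - θN1 t i j) else 0)) ≤ 0 := by
      linarith
    linarith [hgoal, hx0]
  have hmain := max_engine hd h0 (K := (1:ℝ)) one_pos hkam
  intro t ht i j h1 h2 h3
  have := hmain t ht ⟨(i,j), hmemS i j h1 h2 h3⟩
  have h4 : θN t i j - θN1 t i j ≤ 0 := by
    simpa [hu, h1, h2, h3] using this
  linarith


end Aux

theorem stmt7 (H : ℝ → ℝ) (hH : IsCoupling H) (N : ℤ) (hN : 2 ≤ N)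
    (θN : ℝ → ℤ → ℤ → ℝ) (hθN : IsStdSolution H N θN)
    (θN1 : ℝ → ℤ → ℤ → ℝ) (hθN1 : IsStdSolution H (N + 1) θN1)
    (θbarN θbarN1 : ℤ → ℤ → ℝ)
    (hlimN : ∀ i j : ℤ, 1 ≤ j → j < i → i ≤ N →
      Tendsto (fun t => θN t i j) atTop (𝓝 (θbarN i j)))
    (hlimN1 : ∀ i j : ℤ, 1 ≤ j → j < i → i ≤ N + 1 →
      Tendsto (fun t => θN1 t i j) atTop (𝓝 (θbarN1 i j))) :
    ∀ i j : ℤ, 1 ≤ j → j < i → i ≤ N → θbarN i j ≤ θbarN1 i j := by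
  intro i j h1 h2 h3
  have hcomp := comparison hH hN hθN hθN1
  refine le_of_tendsto_of_tendsto (hlimN i j h1 h2 h3) (hlimN1 i j h1 h2 (by omega)) ?_
  filter_upwards [eventually_ge_atTop (0:ℝ)] with t ht
  exact hcomp t ht i j h1 h2 h3
end

section
/- Let H be a coupling function. For each integer N ≥ 2 let θ̄^{(N)} : S_N → ℝ satisfy: (a) the equilibrium equations of the reduced system for lattice size N, i.e. for all (i,j) ∈ S_N, H(Θ̄^{(N)}_{i−1,j} − θ̄^{(N)}_{i,j}) + H(Θ̄^{(N)}_{i,j+1} − θ̄^{(N)}_{i,j}) + H(Θ̄^{(N)}_{i,j−1} − θ̄^{(N)}_{i,j}) + (H(θ̄^{(N)}_{i+1,j} − θ̄^{(N)}_{i,j}) if i < N, and 0 if i = N) = 0, where Θ̄^{(N)}_{k,k} = 0 and Θ̄^{(N)}_{k,0} = π/2 − θ̄^{(N)}_{k,1}; (b) 0 < θ̄^{(N)}_{i,j} < π/4 for all (i,j) ∈ S_N; (c) θ̄^{(N)}_{i,j} ≤ θ̄^{(N+1)}_{i,j} for all (i,j) ∈ S_N. Then for every (i,j) with 1 ≤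 j < i the limit θ̄_{i,j} := lim_{N→∞} θ̄^{(N)}_{i,j} exists, satisfies 0 < θ̄_{i,j} ≤ π/4, and the family (θ̄_{i,j}) satisfies the equilibrium equations of the infinite reduced system: for all (i,j) with 1 ≤ j < i, H(θ̄_{i+1,j} − θ̄_{i,j}) + H(Θ̄_{i−1,j} − θ̄_{i,j}) + H(Θ̄_{i,j+1} − θ̄_{i,j}) + H(Θ̄_{i,j−1} − θ̄_{i,j}) = 0, where Θ̄_{k,k} = 0 and Θ̄_{k,0} = π/2 − θ̄_{k,1} for all k ≥ 1 and Θ̄ = θ̄ on {1 ≤ j < i}. -/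
open Real Filter Topology

theorem stmt8 (H : ℝ → ℝ) (hH : IsCoupling H) (θfam : ℤ → ℤ → ℤ → ℝ)
    (ha : ∀ N : ℤ, 2 ≤ N → ∀ i j : ℤ, 1 ≤ j → j < i → i ≤ N →
      reducedRHS H N (θfam N) i j = 0)
    (hb : ∀ N : ℤ, 2 ≤ N → ∀ i j : ℤ, 1 ≤ j → j < i → i ≤ N →
      0 < θfam N i j ∧ θfam N i j < π / 4)
    (hc : ∀ N : ℤ, 2 ≤ N → ∀ i j : ℤ, 1 ≤ j → j < i → i ≤ N →
      θfam N i j ≤ θfam (N + 1) i j) :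
    ∃ θbar : ℤ → ℤ → ℝ, ∀ i j : ℤ, 1 ≤ j → j < i →
      Tendsto (fun N : ℤ => θfam N i j) atTop (𝓝 (θbar i j)) ∧
      (0 < θbar i j ∧ θbar i j ≤ π / 4) ∧
      H (θbar (i + 1) j - θbar i j) + H (latExt θbar (i - 1) j - θbar i j) +
        H (latExt θbar i (j + 1) - θbar i j) + H (latExt θbar i (j - 1) - θbar i j) = 0 := by
  obtain ⟨hHd, -, -, -⟩ := hH
  have hcont : Continuous H := hHd.continuous
  have mono : ∀ i j : ℤ, 1 ≤ j → j < i → ∀ a b : ℤ, 2 ≤ a → i ≤ a → a ≤ b →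
      θfam a i j ≤ θfam b i j := by
    intro i j hj hji a b h2 hi hab
    refine Int.le_induction (motive := fun b _ => θfam a i j ≤ θfam b i j) ?_ ?_ b hab
    · exact le_refl _
    · intro n hn ih
      exact ih.trans (hc n (by omega) i j hj hji (by omega))
  set θbar : ℤ → ℤ → ℝ := fun i j => ⨆ N : ℤ, θfam (max N (max 2 (i + 1))) i j with hθbar
  have key : ∀ i j : ℤ, 1 ≤ j → j < i →
      Tendsto (fun N : ℤ => θfam N i j) atTop (𝓝 (θbar i j)) ∧
      0 < θbar i j ∧ θbar i j ≤ π / 4 := by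
    intro i j hj hji
    set N0 : ℤ := max 2 (i + 1) with hN0
    have h2 : 2 ≤ N0 := le_max_left _ _
    have hi : i + 1 ≤ N0 := le_max_right _ _
    have gmono : Monotone (fun N : ℤ => θfam (max N N0) i j) := by
      intro a b hab
      exact mono i j hj hji _ _ (le_trans h2 (le_max_right _ _)) (by
        have := le_max_right a N0; omega) (by
        have h1 := le_max_left a b; have h2 := le_max_right a N0
        have : max a N0 ≤ max b N0 := max_le_max hab le_rfl
        omega)
    have gbdd : BddAbove (Set.range fun N : ℤ => θfam (max N N0) i j) := by
      refine ⟨π / 4, ?_⟩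
      rintro x ⟨N, rfl⟩
      exact (hb _ (le_trans h2 (le_max_right _ _)) i j hj hji
        (by have := le_max_right N N0; omega)).2.le
    have hg : Tendsto (fun N : ℤ => θfam (max N N0) i j) atTop (𝓝 (θbar i j)) :=
      tendsto_atTop_ciSup gmono gbdd
    have heq : (fun N : ℤ => θfam N i j) =ᶠ[atTop] fun N => θfam (max N N0) i j := by
      filter_upwards [eventually_ge_atTop N0] with N hN
      rw [max_eq_left hN]
    refine ⟨hg.congr' heq.symm, ?_, ?_⟩
    · have hle := le_ciSup gbdd N0
      rw [max_self] at hle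
      exact lt_of_lt_of_le (hb N0 h2 i j hj hji (by omega)).1 hle
    · refine ciSup_le fun N => (hb _ (le_trans h2 (le_max_right _ _)) i j hj hji
        (by have := le_max_right N N0; omega)).2.le
  refine ⟨θbar, fun i j hj hji => ?_⟩
  obtain ⟨hT, hpos, hle⟩ := key i j hj hji
  refine ⟨hT, ⟨hpos, hle⟩, ?_⟩
  have h1 : Tendsto (fun N : ℤ => θfam N (i + 1) j) atTop (𝓝 (θbar (i + 1) j)) :=
    (key (i + 1) j hj (by omega)).1
  have h2 : Tendsto (fun N : ℤ => latExt (θfam N) (i - 1) j) atTop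
      (𝓝 (latExt θbar (i - 1) j)) := by
    unfold latExt
    by_cases hd : i - 1 = j
    · simp only [if_pos hd]; exact tendsto_const_nhds
    · simp only [if_neg hd, if_neg (by omega : ¬ j = 0)]
      exact (key (i - 1) j hj (by omega)).1
  have h3 : Tendsto (fun N : ℤ => latExt (θfam N) i (j + 1)) atTop
      (𝓝 (latExt θbar i (j + 1))) := by
    unfold latExt
    by_cases hd : i = j + 1
    · simp only [if_pos hd]; exact tendsto_const_nhds
    · simp only [if_neg hd, if_neg (by omega : ¬ j + 1 = 0)]
      exact (key i (j + 1) (by omega) (by omega)).1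
  have h4 : Tendsto (fun N : ℤ => latExt (θfam N) i (j - 1)) atTop
      (𝓝 (latExt θbar i (j - 1))) := by
    unfold latExt
    have hd : ¬ i = j - 1 := by omega
    by_cases h0 : j - 1 = 0
    · simp only [if_neg hd, if_pos h0]
      exact tendsto_const_nhds.sub (key i 1 le_rfl (by omega)).1
    · simp only [if_neg hd, if_neg h0]
      exact (key i (j - 1) (by omega) (by omega)).1
  have T : Tendsto (fun N : ℤ => H (θfam N (i + 1) j - θfam N i j) +
      H (latExt (θfam N) (i - 1) j - θfam N i j) +
      H (latExt (θfam N) i (j + 1) - θfam N i j) +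
      H (latExt (θfam N) i (j - 1) - θfam N i j)) atTop
      (𝓝 (H (θbar (i + 1) j - θbar i j) + H (latExt θbar (i - 1) j - θbar i j) +
        H (latExt θbar i (j + 1) - θbar i j) + H (latExt θbar i (j - 1) - θbar i j))) :=
    ((((hcont.tendsto _).comp (h1.sub hT)).add
      ((hcont.tendsto _).comp (h2.sub hT))).add
      ((hcont.tendsto _).comp (h3.sub hT))).add
      ((hcont.tendsto _).comp (h4.sub hT))
  have hzero : (fun N : ℤ => H (θfam N (i + 1) j - θfam N i j) +
      H (latExt (θfam N) (i - 1) j - θfam N i j) +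
      H (latExt (θfam N) i (j + 1) - θfam N i j) +
      H (latExt (θfam N) i (j - 1) - θfam N i j)) =ᶠ[atTop] fun _ => (0 : ℝ) := by
    filter_upwards [eventually_ge_atTop (max 2 (i + 1))] with N hN
    have h2N : 2 ≤ N := le_trans (le_max_left _ _) hN
    have hiN : i + 1 ≤ N := le_trans (le_max_right _ _) hN
    have heq := ha N h2N i j hj hji (by omega)
    rw [reducedRHS, if_pos (by omega : i < N)] at heq
    linarith
  exact tendsto_nhds_unique T (tendsto_const_nhds.congr' hzero.symm)
end

section
/- Let H be a coupling function and N ≥ 2 an integer, and let L_N = {(i,j) ∈ ℤ × ℤ : 1−N ≤ i ≤ N, 1−N ≤ j ≤ N}. Then there exists θ̄ : L_N → ℝ such that: (i) for every (i,j) ∈ L_N, the sum of H(θ̄_{i′,j′} − θ̄_{i,j}) over all nearest neighbours (i′,j′) of (i,j) that lie in L_N equals 0 (an equilibrium of the truncated phase system); (ii) θ̄_{i,i} = 0 for 1 ≤ i ≤ N and θ̄_{i,i} = π for 1−N ≤ i ≤ 0; (iii) θ̄_{i,1−i} = π/2 for 1 ≤ i ≤ N and θ̄_{i,1−i} = 3π/2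 for 1−N ≤ i ≤ 0; (iv) 0 < θ̄_{i,j} < π/4 for all (i,j) with 1 ≤ j < i ≤ N. -/
open Real Filter Topology

noncomputable def epS (N : ℤ) : Finset (ℤ × ℤ) :=
  (Finset.Icc 1 N ×ˢ Finset.Icc 1 N).filter fun p => p.2 < p.1

lemma mem_epS (N i j : ℤ) : ((i,j) ∈ epS N) ↔ (1 ≤ j ∧ j < i ∧ i ≤ N) := by
  simp only [epS, Finset.mem_filter, Finset.mem_product, Finset.mem_Icc]
  omega

noncomputable def epe (N : ℤ) (u : ↥(epS N) → ℝ) (i j : ℤ) : ℝ :=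
  if h : (i,j) ∈ epS N then u ⟨(i,j), h⟩ else 0

lemma epe_not_mem {N i j : ℤ} (u : ↥(epS N) → ℝ) (h : (i,j) ∉ epS N) : epe N u i j = 0 :=
  dif_neg h

lemma epe_mem {N i j : ℤ} (u : ↥(epS N) → ℝ) (h : (i,j) ∈ epS N) : epe N u i j = u ⟨(i,j),h⟩ :=
  dif_pos h

lemma epe_diag (N : ℤ) (u : ↥(epS N) → ℝ) (a : ℤ) : epe N u a a = 0 :=
  epe_not_mem u (fun h => by have := (mem_epS N a a).mp h; omega)

noncomputable def epG (H : ℝ → ℝ) (x : ℝ) : ℝ := ∫ t in (0:ℝ)..x, H t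

noncomputable def epEh (N : ℤ) : Finset (ℤ × ℤ) :=
  (Finset.Icc 1 N ×ˢ Finset.Icc 1 N).filter fun p => p.2 ≤ p.1 ∧ p.1 + 1 ≤ N

noncomputable def epEv (N : ℤ) : Finset (ℤ × ℤ) :=
  (Finset.Icc 1 N ×ˢ Finset.Icc 1 N).filter fun p => p.2 + 1 ≤ p.1

lemma mem_epEh (N i j : ℤ) : ((i,j) ∈ epEh N) ↔ (1 ≤ j ∧ j ≤ i ∧ i + 1 ≤ N) := by
  simp only [epEh, Finset.mem_filter, Finset.mem_product, Finset.mem_Icc]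
  omega

lemma mem_epEv (N i j : ℤ) : ((i,j) ∈ epEv N) ↔ (1 ≤ j ∧ j + 1 ≤ i ∧ i ≤ N) := by
  simp only [epEv, Finset.mem_filter, Finset.mem_product, Finset.mem_Icc]
  omega

noncomputable def epW (H : ℝ → ℝ) (N : ℤ) (u : ↥(epS N) → ℝ) : ℝ :=
  (∑ q ∈ epEh N, epG H (epe N u (q.1+1) q.2 - epe N u q.1 q.2))
  + (∑ q ∈ epEv N, epG H (epe N u q.1 (q.2+1) - epe N u q.1 q.2))
  + ∑ a ∈ Finset.Icc 2 N, (1/2 : ℝ) * epG H (π/2 - 2 * epe N u a 1)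

noncomputable def epF (H : ℝ → ℝ) (N : ℤ) (u : ↥(epS N) → ℝ) (i j : ℤ) : ℝ :=
  (if i+1 ≤ N then H (epe N u (i+1) j - epe N u i j) else 0)
  + H (epe N u (i-1) j - epe N u i j)
  + H (epe N u i (j+1) - epe N u i j)
  + (if 2 ≤ j then H (epe N u i (j-1) - epe N u i j) else H (π/2 - 2 * epe N u i j))

def epd (i j a b : ℤ) : ℝ := if ((a,b) : ℤ × ℤ) = (i,j) then 1 else 0

lemma epe_update (N : ℤ) (u : ↥(epS N) → ℝ) (i j : ℤ) (hp : (i,j) ∈ epS N) (t : ℝ) (a b : ℤ) :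
    epe N (Function.update u ⟨(i,j),hp⟩ t) a b
      = epe N u a b + epd i j a b * (t - u ⟨(i,j),hp⟩) := by
  unfold epe epd
  by_cases h : (a,b) ∈ epS N
  · rw [dif_pos h, dif_pos h]
    by_cases he : ((a,b) : ℤ × ℤ) = (i,j)
    · have hsub : (⟨(a,b),h⟩ : ↥(epS N)) = ⟨(i,j),hp⟩ := Subtype.ext he
      rw [hsub, Function.update_self, if_pos he]
      ring
    · have hsub : (⟨(a,b),h⟩ : ↥(epS N)) ≠ ⟨(i,j),hp⟩ := fun hh => he (congrArg Subtype.val hh)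
      rw [Function.update_of_ne hsub, if_neg he]
      ring
  · rw [dif_neg h, dif_neg h]
    have he : ((a,b) : ℤ × ℤ) ≠ (i,j) := fun hh => h (by rw [hh]; exact hp)
    rw [if_neg he]
    ring

lemma min_left {g : ℝ → ℝ} {A d : ℝ} (hA : 0 < A)
    (hm : ∀ t ∈ Set.Icc (0:ℝ) A, g 0 ≤ g t) (hd : HasDerivAt g d 0) : 0 ≤ d := by
  have h1 : Tendsto (slope g 0) (𝓝[>] (0:ℝ)) (𝓝 d) :=
    (hasDerivAt_iff_tendsto_slope.mp hd).mono_left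
      (nhdsWithin_mono _ (fun x hx => Set.mem_compl_singleton_iff.mpr (ne_of_gt hx)))
  refine ge_of_tendsto h1 ?_
  filter_upwards [Ioo_mem_nhdsGT_of_mem (Set.mem_Ico.mpr ⟨le_refl (0:ℝ), hA⟩)] with t ht
  rw [slope_def_field]
  have h2 : g 0 ≤ g t := hm t ⟨ht.1.le, ht.2.le⟩
  apply div_nonneg (by linarith) (by linarith [ht.1])

lemma min_right {g : ℝ → ℝ} {A d : ℝ} (hA : 0 < A)
    (hm : ∀ t ∈ Set.Icc (0:ℝ) A, g A ≤ g t) (hd : HasDerivAt g d A) : d ≤ 0 := by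
  have h1 : Tendsto (slope g A) (𝓝[<] A) (𝓝 d) :=
    (hasDerivAt_iff_tendsto_slope.mp hd).mono_left
      (nhdsWithin_mono _ (fun x hx => Set.mem_compl_singleton_iff.mpr (ne_of_lt hx)))
  refine le_of_tendsto h1 ?_
  filter_upwards [Ioo_mem_nhdsLT_of_mem (Set.mem_Ioc.mpr ⟨hA, le_refl A⟩)] with t ht
  rw [slope_def_field]
  have h2 : g A ≤ g t := hm t ⟨ht.1.le, ht.2.le⟩
  apply div_nonpos_of_nonneg_of_nonpos (by linarith) (by linarith [ht.2])

lemma epCore (H : ℝ → ℝ)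
    (hcont : Continuous H)
    (hodd : ∀ x : ℝ, H (-x) = - H x)
    (hderivpos : ∀ x ∈ Set.Ioo (-(π / 2)) (π / 2), 0 < deriv H x)
    (N : ℤ) (hN : 2 ≤ N) :
    ∃ u : ↥(epS N) → ℝ,
      (∀ i j : ℤ, 1 ≤ j → j < i → i ≤ N → epe N u i j ∈ Set.Ioo 0 (π/4)) ∧
      (∀ i j : ℤ, 1 ≤ j → j < i → i ≤ N → epF H N u i j = 0) := by
  have hπ : (0:ℝ) < π := Real.pi_pos
  have hH0 : H 0 = 0 := by have := hodd 0; simp at this; linarith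
  have hmono : StrictMonoOn H (Set.Icc (-(π/2)) (π/2)) := by
    apply strictMonoOn_of_deriv_pos (convex_Icc _ _) hcont.continuousOn
    intro x hx
    rw [interior_Icc] at hx
    exact hderivpos x hx
  have Hpos : ∀ x : ℝ, 0 < x → x ≤ π/2 → 0 < H x := by
    intro x h1 h2
    have := hmono (Set.mem_Icc.mpr ⟨by linarith, by linarith⟩)
      (Set.mem_Icc.mpr ⟨by linarith, h2⟩) h1
    rwa [hH0] at this
  have Hnonneg : ∀ x : ℝ, 0 ≤ x → x ≤ π/2 → 0 ≤ H x := by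
    intro x h1 h2
    rcases eq_or_lt_of_le h1 with h | h
    · rw [← h, hH0]
    · exact (Hpos x h h2).le
  have Hneg : ∀ x : ℝ, -(π/2) ≤ x → x < 0 → H x < 0 := by
    intro x h1 h2
    have := Hpos (-x) (by linarith) (by linarith)
    rw [hodd] at this; linarith
  have Hnonpos : ∀ x : ℝ, -(π/2) ≤ x → x ≤ 0 → H x ≤ 0 := by
    intro x h1 h2
    rcases eq_or_lt_of_le h2 with h | h
    · rw [h, hH0]
    · exact (Hneg x h1 h).le
  have Hzero : ∀ x : ℝ, 0 ≤ x → x ≤ π/2 → H x = 0 → x = 0 := by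
    intro x h1 h2 h3
    by_contra h
    have := Hpos x (lt_of_le_of_ne h1 (Ne.symm h)) h2
    linarith
  have Hzero' : ∀ x : ℝ, -(π/2) ≤ x → x ≤ 0 → H x = 0 → x = 0 := by
    intro x h1 h2 h3
    by_contra h
    have := Hneg x h1 (lt_of_le_of_ne h2 h)
    linarith
  have hGd : ∀ x : ℝ, HasDerivAt (epG H) (H x) x :=
    fun x => (hcont.integral_hasStrictDerivAt 0 x).hasDerivAt
  have hGc : Continuous (epG H) :=
    continuous_iff_continuousAt.mpr fun x => (hGd x).continuousAt
  -- compact minimization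
  set K : Set (↥(epS N) → ℝ) := Set.univ.pi (fun _ => Set.Icc 0 (π/4)) with hKdef
  have hKc : IsCompact K := isCompact_univ_pi fun _ => isCompact_Icc
  have hKne : K.Nonempty := ⟨fun _ => 0, by
    intro p _
    exact Set.mem_Icc.mpr ⟨le_refl 0, by positivity⟩⟩
  have cont_epe : ∀ i j : ℤ, Continuous fun u : ↥(epS N) → ℝ => epe N u i j := by
    intro i j
    unfold epe
    split_ifs with h
    · exact continuous_apply _
    · exact continuous_const
  have hWc : Continuous (epW H N) := by
    unfold epW
    apply Continuous.add
    apply Continuous.add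
    · apply continuous_finset_sum
      intro q _
      exact hGc.comp ((cont_epe _ _).sub (cont_epe _ _))
    · apply continuous_finset_sum
      intro q _
      exact hGc.comp ((cont_epe _ _).sub (cont_epe _ _))
    · apply continuous_finset_sum
      intro a _
      exact continuous_const.mul (hGc.comp (continuous_const.sub (continuous_const.mul (cont_epe _ _))))
  obtain ⟨u, huK, humin⟩ := hKc.exists_isMinOn hKne hWc.continuousOn
  have huK' : ∀ p : ↥(epS N), u p ∈ Set.Icc (0:ℝ) (π/4) := fun p => huK p (Set.mem_univ _)
  have hr0 : ∀ a b : ℤ, 0 ≤ epe N u a b := by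
    intro a b
    unfold epe
    split_ifs with h
    · exact (huK' _).1
    · exact le_refl 0
  have hr4 : ∀ a b : ℤ, epe N u a b ≤ π/4 := by
    intro a b
    unfold epe
    split_ifs with h
    · exact (huK' _).2
    · positivity
  -- derivative helpers
  have hd_aff : ∀ (X c t₀ : ℝ), HasDerivAt (fun t => epG H (X + c * (t - t₀))) (H X * c) t₀ := by
    intro X c t₀
    have h1 : HasDerivAt (fun t : ℝ => X + c * (t - t₀)) c t₀ := by
      simpa using (((hasDerivAt_id t₀).sub_const t₀).const_mul c).const_add X
    have h2 := (hGd (X + c * (t₀ - t₀))).comp t₀ h1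
    simp only [sub_self, mul_zero, add_zero] at h2; exact h2
  have hd_edge : ∀ (A B a b t₀ : ℝ),
      HasDerivAt (fun t => epG H ((A + a * (t - t₀)) - (B + b * (t - t₀)))) (H (A - B) * (a - b)) t₀ := by
    intro A B a b t₀
    have h1 := hd_aff (A - B) (a - b) t₀
    have h2 : (fun t => epG H ((A - B) + (a - b) * (t - t₀)))
        = fun t => epG H ((A + a * (t - t₀)) - (B + b * (t - t₀))) := by
      funext t; congr 1; ring
    rwa [h2] at h1
  have hd_bd : ∀ (A a t₀ : ℝ),
      HasDerivAt (fun t => (1/2 : ℝ) * epG H (π/2 - 2 * (A + a * (t - t₀))))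
        ((1/2 : ℝ) * (H (π/2 - 2*A) * (-2 * a))) t₀ := by
    intro A a t₀
    have h1 := HasDerivAt.const_mul (1/2 : ℝ) (hd_aff (π/2 - 2*A) (-2*a) t₀)
    have h2 : (fun t => (1/2:ℝ) * epG H ((π/2 - 2*A) + (-2*a) * (t - t₀)))
        = fun t => (1/2:ℝ) * epG H (π/2 - 2 * (A + a * (t - t₀))) := by
      funext t; congr 2; ring
    rwa [h2] at h1
  have hkey : ∀ (i j : ℤ) (hp : (i,j) ∈ epS N),
      HasDerivAt (fun t => epW H N (Function.update u ⟨(i,j),hp⟩ t))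
        (-(epF H N u i j)) (u ⟨(i,j),hp⟩) := by
    intro i j hp
    have hm := (mem_epS N i j).mp hp
    have hfun : (fun t => epW H N (Function.update u ⟨(i,j),hp⟩ t))
        = fun t =>
          (∑ q ∈ epEh N, epG H ((epe N u (q.1+1) q.2 + epd i j (q.1+1) q.2 * (t - u ⟨(i,j),hp⟩))
              - (epe N u q.1 q.2 + epd i j q.1 q.2 * (t - u ⟨(i,j),hp⟩))))
          + ((∑ q ∈ epEv N, epG H ((epe N u q.1 (q.2+1) + epd i j q.1 (q.2+1) * (t - u ⟨(i,j),hp⟩))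
              - (epe N u q.1 q.2 + epd i j q.1 q.2 * (t - u ⟨(i,j),hp⟩))))
          + ∑ a ∈ Finset.Icc 2 N, (1/2 : ℝ) * epG H (π/2 - 2 * (epe N u a 1 + epd i j a 1 * (t - u ⟨(i,j),hp⟩)))) := by
      funext t
      simp only [epW, epe_update N u i j hp t]
      ring
    rw [hfun]
    have h1 : HasDerivAt (fun t =>
        ∑ q ∈ epEh N, epG H ((epe N u (q.1+1) q.2 + epd i j (q.1+1) q.2 * (t - u ⟨(i,j),hp⟩))
            - (epe N u q.1 q.2 + epd i j q.1 q.2 * (t - u ⟨(i,j),hp⟩))))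
        (∑ q ∈ epEh N, H (epe N u (q.1+1) q.2 - epe N u q.1 q.2) * (epd i j (q.1+1) q.2 - epd i j q.1 q.2))
        (u ⟨(i,j),hp⟩) :=
      HasDerivAt.fun_sum (fun q _ => hd_edge _ _ _ _ _)
    have h2 : HasDerivAt (fun t =>
        ∑ q ∈ epEv N, epG H ((epe N u q.1 (q.2+1) + epd i j q.1 (q.2+1) * (t - u ⟨(i,j),hp⟩))
            - (epe N u q.1 q.2 + epd i j q.1 q.2 * (t - u ⟨(i,j),hp⟩))))
        (∑ q ∈ epEv N, H (epe N u q.1 (q.2+1) - epe N u q.1 q.2) * (epd i j q.1 (q.2+1) - epd i j q.1 q.2))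
        (u ⟨(i,j),hp⟩) :=
      HasDerivAt.fun_sum (fun q _ => hd_edge _ _ _ _ _)
    have h3 : HasDerivAt (fun t =>
        ∑ a ∈ Finset.Icc 2 N, (1/2 : ℝ) * epG H (π/2 - 2 * (epe N u a 1 + epd i j a 1 * (t - u ⟨(i,j),hp⟩))))
        (∑ a ∈ Finset.Icc 2 N, (1/2 : ℝ) * (H (π/2 - 2 * epe N u a 1) * (-2 * epd i j a 1)))
        (u ⟨(i,j),hp⟩) :=
      HasDerivAt.fun_sum (fun a _ => hd_bd _ _ _)
    have h4 := h1.add (h2.add h3)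
    refine h4.congr_deriv ?_
    -- collapse the three sums
    have c1 : (∑ q ∈ epEh N, H (epe N u (q.1+1) q.2 - epe N u q.1 q.2) * (epd i j (q.1+1) q.2 - epd i j q.1 q.2))
        = H (epe N u i j - epe N u (i-1) j)
          - (if i + 1 ≤ N then H (epe N u (i+1) j - epe N u i j) else 0) := by
      have e1 : ∀ q : ℤ × ℤ,
          H (epe N u (q.1+1) q.2 - epe N u q.1 q.2) * (epd i j (q.1+1) q.2 - epd i j q.1 q.2)
          = (if q = ((i-1,j) : ℤ×ℤ) then H (epe N u (q.1+1) q.2 - epe N u q.1 q.2) else 0)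
            - (if q = ((i,j) : ℤ×ℤ) then H (epe N u (q.1+1) q.2 - epe N u q.1 q.2) else 0) := by
        intro q
        unfold epd
        have h1 : (((q.1+1, q.2) : ℤ×ℤ) = (i,j)) ↔ q = ((i-1, j) : ℤ×ℤ) := by
          rw [Prod.ext_iff, Prod.ext_iff]
          constructor <;> (rintro ⟨ha, hb⟩; exact ⟨by omega, hb⟩)
        simp only [h1, Prod.mk.eta]
        split_ifs with ha hb hb
        · rw [ha] at hb
          have := (Prod.ext_iff.mp hb).1
          omega
        · ring
        · ring
        · ring
      rw [Finset.sum_congr rfl (fun q _ => e1 q), Finset.sum_sub_distrib,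
        Finset.sum_ite_eq' (epEh N) ((i-1,j) : ℤ×ℤ) _,
        Finset.sum_ite_eq' (epEh N) ((i,j) : ℤ×ℤ) _]
      have hm1 : ((i-1,j) : ℤ×ℤ) ∈ epEh N := (mem_epEh N (i-1) j).mpr (by omega)
      rw [if_pos hm1]
      have hii : i - 1 + 1 = i := by ring
      rw [hii]
      by_cases hc : i + 1 ≤ N
      · rw [if_pos ((mem_epEh N i j).mpr (by omega)), if_pos hc]
      · rw [if_neg (fun hmem => hc ((mem_epEh N i j).mp hmem).2.2), if_neg hc]
    have c2 : (∑ q ∈ epEv N, H (epe N u q.1 (q.2+1) - epe N u q.1 q.2) * (epd i j q.1 (q.2+1) - epd i j q.1 q.2))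
        = (if 2 ≤ j then H (epe N u i j - epe N u i (j-1)) else 0)
          - H (epe N u i (j+1) - epe N u i j) := by
      have e1 : ∀ q : ℤ × ℤ,
          H (epe N u q.1 (q.2+1) - epe N u q.1 q.2) * (epd i j q.1 (q.2+1) - epd i j q.1 q.2)
          = (if q = ((i,j-1) : ℤ×ℤ) then H (epe N u q.1 (q.2+1) - epe N u q.1 q.2) else 0)
            - (if q = ((i,j) : ℤ×ℤ) then H (epe N u q.1 (q.2+1) - epe N u q.1 q.2) else 0) := by
        intro q
        unfold epd
        have h1 : (((q.1, q.2+1) : ℤ×ℤ) = (i,j)) ↔ q = ((i, j-1) : ℤ×ℤ) := by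
          rw [Prod.ext_iff, Prod.ext_iff]
          constructor <;> (rintro ⟨ha, hb⟩; exact ⟨ha, by omega⟩)
        simp only [h1, Prod.mk.eta]
        split_ifs with ha hb hb
        · rw [ha] at hb
          have := (Prod.ext_iff.mp hb).2
          omega
        · ring
        · ring
        · ring
      rw [Finset.sum_congr rfl (fun q _ => e1 q), Finset.sum_sub_distrib,
        Finset.sum_ite_eq' (epEv N) ((i,j-1) : ℤ×ℤ) _,
        Finset.sum_ite_eq' (epEv N) ((i,j) : ℤ×ℤ) _]
      rw [if_pos ((mem_epEv N i j).mpr (by omega))]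
      have hjj : j - 1 + 1 = j := by ring
      rw [hjj]
      by_cases hc : 2 ≤ j
      · rw [if_pos ((mem_epEv N i (j-1)).mpr (by omega)), if_pos hc]
      · rw [if_neg (fun hmem => hc (by have := (mem_epEv N i (j-1)).mp hmem; omega)), if_neg hc]
    have c3 : (∑ a ∈ Finset.Icc 2 N, (1/2 : ℝ) * (H (π/2 - 2 * epe N u a 1) * (-2 * epd i j a 1)))
        = if 2 ≤ j then 0 else -(H (π/2 - 2 * epe N u i 1)) := by
      by_cases hj : 2 ≤ j
      · rw [if_pos hj]
        apply Finset.sum_eq_zero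
        intro a _
        have : epd i j a 1 = 0 := by
          unfold epd
          rw [if_neg]
          intro h
          have := (Prod.ext_iff.mp h).2
          omega
        rw [this]; ring
      · rw [if_neg hj]
        have hj1 : j = 1 := by omega
        subst hj1
        have e : ∀ a : ℤ, (1/2:ℝ) * (H (π/2 - 2 * epe N u a 1) * (-2 * epd i 1 a 1))
            = if a = i then -(H (π/2 - 2 * epe N u a 1)) else 0 := by
          intro a
          unfold epd
          by_cases ha : a = i
          · rw [if_pos (by rw [ha] : ((a,1):ℤ×ℤ) = (i,1)), if_pos ha]; ring
          · rw [if_neg (fun h => ha (Prod.ext_iff.mp h).1), if_neg ha]; ring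
        rw [Finset.sum_congr rfl (fun a _ => e a), Finset.sum_ite_eq' _ i _,
          if_pos (Finset.mem_Icc.mpr ⟨by omega, by omega⟩)]
    rw [c1, c2, c3]
    have hflip : ∀ a b : ℝ, H (a - b) = -H (b - a) := by
      intro a b
      rw [show a - b = -(b - a) by ring, hodd]
    unfold epF
    by_cases hj : 2 ≤ j
    · rw [if_pos hj, if_pos hj, if_pos hj]
      rw [hflip (epe N u i j) (epe N u (i-1) j), hflip (epe N u i j) (epe N u i (j-1))]
      ring
    · rw [if_neg hj, if_neg hj, if_neg hj]
      rw [hflip (epe N u i j) (epe N u (i-1) j)]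
      have hj1 : j = 1 := by omega
      subst hj1
      ring
  -- moving one coordinate stays in K
  have hmin : ∀ (i j : ℤ) (hp : (i,j) ∈ epS N), ∀ t ∈ Set.Icc (0:ℝ) (π/4),
      epW H N u ≤ epW H N (Function.update u ⟨(i,j),hp⟩ t) := by
    intro i j hp t ht
    apply isMinOn_iff.mp humin
    intro p _
    by_cases hq : p = ⟨(i,j),hp⟩
    · rw [hq, Function.update_self]
      exact ht
    · rw [Function.update_of_ne hq]
      exact huK' p
  have hlow : ∀ (i j : ℤ) (hp : (i,j) ∈ epS N), u ⟨(i,j),hp⟩ = 0 → epF H N u i j ≤ 0 := by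
    intro i j hp h0
    have hupd : Function.update u ⟨(i,j),hp⟩ (0:ℝ) = u := by
      rw [← h0, Function.update_eq_self]
    have hd := hkey i j hp
    rw [h0] at hd
    have := min_left (g := fun t => epW H N (Function.update u ⟨(i,j),hp⟩ t))
      (A := π/4) (by positivity) (fun t ht => by
        simp only [hupd]
        exact hmin i j hp t ht) hd
    linarith
  have hhigh : ∀ (i j : ℤ) (hp : (i,j) ∈ epS N), u ⟨(i,j),hp⟩ = π/4 → 0 ≤ epF H N u i j := by
    intro i j hp h0
    have hupd : Function.update u ⟨(i,j),hp⟩ (π/4 : ℝ) = u := by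
      rw [← h0, Function.update_eq_self]
    have hd := hkey i j hp
    rw [h0] at hd
    have := min_right (g := fun t => epW H N (Function.update u ⟨(i,j),hp⟩ t))
      (A := π/4) (by positivity) (fun t ht => by
        simp only [hupd]
        exact hmin i j hp t ht) hd
    linarith
  have hmid : ∀ (i j : ℤ) (hp : (i,j) ∈ epS N),
      0 < u ⟨(i,j),hp⟩ → u ⟨(i,j),hp⟩ < π/4 → epF H N u i j = 0 := by
    intro i j hp h1 h2
    have hloc : IsLocalMin (fun t => epW H N (Function.update u ⟨(i,j),hp⟩ t)) (u ⟨(i,j),hp⟩) := by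
      apply IsMinOn.isLocalMin ?_ (Icc_mem_nhds h1 h2)
      apply isMinOn_iff.mpr
      intro t ht
      simp only [Function.update_eq_self]
      exact hmin i j hp t ht
    have := hloc.hasDerivAt_eq_zero (hkey i j hp)
    linarith
  -- value at the minimizer never 0
  have hne0 : ∀ k : ℕ, ∀ i j : ℤ, 1 ≤ j → j < i → i ≤ N → j - 1 = (k:ℤ) → epe N u i j ≠ 0 := by
    intro k
    induction k with
    | zero =>
      intro i j hj hij hiN hk h0
      have hj1 : j = 1 := by omega
      subst hj1
      have hp : (i,1) ∈ epS N := (mem_epS N i 1).mpr ⟨le_refl 1, hij, hiN⟩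
      have hu0 : u ⟨(i,1),hp⟩ = 0 := by rw [← epe_mem u hp]; exact h0
      have hF := hlow i 1 hp hu0
      unfold epF at hF
      rw [if_neg (by omega : ¬ (2:ℤ) ≤ 1)] at hF
      rw [h0] at hF
      simp only [sub_zero, mul_zero] at hF
      norm_num at hF
      have b2 : 0 ≤ H (epe N u (i-1) 1) := Hnonneg _ (hr0 _ _) (by linarith [hr4 (i-1) 1])
      have b3 : 0 ≤ H (epe N u i 2) := Hnonneg _ (hr0 _ _) (by linarith [hr4 i 2])
      have b4 : 0 < H (π/2) := Hpos _ (by positivity) (le_refl _)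
      split_ifs at hF with h
      · have b1 : 0 ≤ H (epe N u (i+1) 1) := Hnonneg _ (hr0 _ _) (by linarith [hr4 (i+1) 1])
        linarith only [hF, b1, b2, b3, b4]
      · linarith only [hF, b2, b3, b4]
    | succ k IH =>
      intro i j hj hij hiN hk h0
      have hj2 : 2 ≤ j := by omega
      have hp : (i,j) ∈ epS N := (mem_epS N i j).mpr ⟨hj, hij, hiN⟩
      have hu0 : u ⟨(i,j),hp⟩ = 0 := by rw [← epe_mem u hp]; exact h0
      have hF := hlow i j hp hu0
      unfold epF at hF
      rw [if_pos hj2] at hF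
      rw [h0] at hF
      simp only [sub_zero] at hF
      have b2 : 0 ≤ H (epe N u (i-1) j) := Hnonneg _ (hr0 _ _) (by linarith [hr4 (i-1) j])
      have b3 : 0 ≤ H (epe N u i (j+1)) := Hnonneg _ (hr0 _ _) (by linarith [hr4 i (j+1)])
      have b4 : 0 ≤ H (epe N u i (j-1)) := Hnonneg _ (hr0 _ _) (by linarith [hr4 i (j-1)])
      have hz : H (epe N u i (j-1)) = 0 := by
        split_ifs at hF with h
        · have b1 : 0 ≤ H (epe N u (i+1) j) := Hnonneg _ (hr0 _ _) (by linarith [hr4 (i+1) j])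
          linarith
        · linarith
      exact IH i (j-1) (by omega) (by omega) hiN (by omega)
        (Hzero _ (hr0 _ _) (by linarith [hr4 i (j-1)]) hz)
  -- value at the minimizer never π/4
  have hne4 : ∀ k : ℕ, ∀ i j : ℤ, 1 ≤ j → j < i → i ≤ N → i - j - 1 = (k:ℤ) → epe N u i j ≠ π/4 := by
    intro k
    induction k with
    | zero =>
      intro i j hj hij hiN hk h4
      have hp : (i,j) ∈ epS N := (mem_epS N i j).mpr ⟨hj, hij, hiN⟩
      have hu4 : u ⟨(i,j),hp⟩ = π/4 := by rw [← epe_mem u hp]; exact h4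
      have hF := hhigh i j hp hu4
      unfold epF at hF
      rw [h4] at hF
      have hdg : epe N u i (j+1) = 0 := by
        rw [show j + 1 = i by omega]
        exact epe_diag N u i
      rw [hdg] at hF
      have b3 : H (0 - π/4) < 0 := Hneg _ (by linarith) (by linarith)
      have b2 : H (epe N u (i-1) j - π/4) ≤ 0 :=
        Hnonpos _ (by linarith [hr0 (i-1) j]) (by linarith [hr4 (i-1) j])
      have bb : H (π/2 - 2 * (π/4)) = 0 := by
        rw [show π/2 - 2*(π/4) = (0:ℝ) by ring, hH0]
      split_ifs at hF with h h2 h2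
      · have b1 : H (epe N u (i+1) j - π/4) ≤ 0 :=
          Hnonpos _ (by linarith [hr0 (i+1) j]) (by linarith [hr4 (i+1) j])
        have b4 : H (epe N u i (j-1) - π/4) ≤ 0 :=
          Hnonpos _ (by linarith [hr0 i (j-1)]) (by linarith [hr4 i (j-1)])
        linarith
      · have b1 : H (epe N u (i+1) j - π/4) ≤ 0 :=
          Hnonpos _ (by linarith [hr0 (i+1) j]) (by linarith [hr4 (i+1) j])
        linarith
      · have b4 : H (epe N u i (j-1) - π/4) ≤ 0 :=
          Hnonpos _ (by linarith [hr0 i (j-1)]) (by linarith [hr4 i (j-1)])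
        linarith
      · linarith
    | succ k IH =>
      intro i j hj hij hiN hk h4
      have hp : (i,j) ∈ epS N := (mem_epS N i j).mpr ⟨hj, hij, hiN⟩
      have hu4 : u ⟨(i,j),hp⟩ = π/4 := by rw [← epe_mem u hp]; exact h4
      have hF := hhigh i j hp hu4
      unfold epF at hF
      rw [h4] at hF
      have b2 : H (epe N u (i-1) j - π/4) ≤ 0 :=
        Hnonpos _ (by linarith [hr0 (i-1) j]) (by linarith [hr4 (i-1) j])
      have b3 : H (epe N u i (j+1) - π/4) ≤ 0 :=
        Hnonpos _ (by linarith [hr0 i (j+1)]) (by linarith [hr4 i (j+1)])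
      have bb : H (π/2 - 2 * (π/4)) = 0 := by
        rw [show π/2 - 2*(π/4) = (0:ℝ) by ring, hH0]
      have hz : H (epe N u i (j+1) - π/4) = 0 := by
        split_ifs at hF with h h2 h2
        · have b1 : H (epe N u (i+1) j - π/4) ≤ 0 :=
            Hnonpos _ (by linarith [hr0 (i+1) j]) (by linarith [hr4 (i+1) j])
          have b4 : H (epe N u i (j-1) - π/4) ≤ 0 :=
            Hnonpos _ (by linarith [hr0 i (j-1)]) (by linarith [hr4 i (j-1)])
          linarith
        · have b1 : H (epe N u (i+1) j - π/4) ≤ 0 :=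
            Hnonpos _ (by linarith [hr0 (i+1) j]) (by linarith [hr4 (i+1) j])
          linarith
        · have b4 : H (epe N u i (j-1) - π/4) ≤ 0 :=
            Hnonpos _ (by linarith [hr0 i (j-1)]) (by linarith [hr4 i (j-1)])
          linarith
        · linarith
      have : epe N u i (j+1) - π/4 = 0 :=
        Hzero' _ (by linarith [hr0 i (j+1)]) (by linarith [hr4 i (j+1)]) hz
      exact IH i (j+1) (by omega) (by omega) hiN (by omega) (by linarith)
  refine ⟨u, ?_, ?_⟩
  · intro i j hj hij hiN
    constructor
    · exact lt_of_le_of_ne (hr0 i j) (Ne.symm (hne0 (j-1).toNat i j hj hij hiN (by omega)))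
    · exact lt_of_le_of_ne (hr4 i j) (hne4 (i - j - 1).toNat i j hj hij hiN (by omega))
  · intro i j hj hij hiN
    have hp : (i,j) ∈ epS N := (mem_epS N i j).mpr ⟨hj, hij, hiN⟩
    have h1 : 0 < epe N u i j := lt_of_le_of_ne (hr0 i j) (Ne.symm (hne0 (j-1).toNat i j hj hij hiN (by omega)))
    have h2 : epe N u i j < π/4 :=
      lt_of_le_of_ne (hr4 i j) (hne4 (i - j - 1).toNat i j hj hij hiN (by omega))
    rw [epe_mem u hp] at h1 h2
    exact hmid i j hp h1 h2

noncomputable def epq (N : ℤ) (u : ↥(epS N) → ℝ) (a b : ℤ) : ℝ :=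
  if b < a then epe N u a b else -(epe N u b a)

lemma epq_anti (N : ℤ) (u : ↥(epS N) → ℝ) (a b : ℤ) : epq N u b a = -(epq N u a b) := by
  unfold epq
  rcases lt_trichotomy a b with h | h | h
  · rw [if_pos h, if_neg (by omega), neg_neg]
  · subst h
    rw [if_neg (by omega), epe_diag]
    simp
  · rw [if_neg (by omega), if_pos h]

lemma epq_diag (N : ℤ) (u : ↥(epS N) → ℝ) (a : ℤ) : epq N u a a = 0 := by
  unfold epq
  rw [if_neg (by omega), epe_diag, neg_zero]

noncomputable def epθ (N : ℤ) (u : ↥(epS N) → ℝ) (i j : ℤ) : ℝ :=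
  if 1 ≤ i then
    (if 1 ≤ j then epq N u i j else epq N u (1-j) i + π/2)
  else
    (if 1 ≤ j then epq N u j (1-i) + 3*π/2 else epq N u (1-i) (1-j) + π)

lemma epθ_tri (N : ℤ) (u : ↥(epS N) → ℝ) {a b : ℤ} (ha : 1 ≤ a) (hb : 1 ≤ b) (hba : b ≤ a) :
    epθ N u a b = epe N u a b := by
  unfold epθ epq
  rw [if_pos ha, if_pos hb]
  rcases lt_or_eq_of_le hba with h | h
  · rw [if_pos h]
  · subst h
    rw [if_neg (by omega)]
    simp [epe_diag]

lemma epθ_swap_tri (N : ℤ) (u : ↥(epS N) → ℝ) {a b : ℤ} (ha : 1 ≤ a) (hb : 1 ≤ b) (hab : a ≤ b) :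
    epθ N u a b = -(epe N u b a) := by
  unfold epθ epq
  rw [if_pos ha, if_pos hb, if_neg (by omega)]

lemma epθ_bot (N : ℤ) (u : ↥(epS N) → ℝ) {a : ℤ} (ha : 1 ≤ a) :
    epθ N u a 0 = π/2 - epe N u a 1 := by
  unfold epθ
  rw [if_pos ha, if_neg (by omega), show (1:ℤ) - 0 = 1 by norm_num]
  unfold epq
  rw [if_neg (by omega)]
  ring

lemma epθ_01 (N : ℤ) (u : ↥(epS N) → ℝ) : epθ N u 0 1 = 3*π/2 := by
  unfold epθ
  rw [if_neg (by omega), if_pos (le_refl 1), show (1:ℤ) - 0 = 1 by norm_num, epq_diag, zero_add]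

lemma epθ_transpose (N : ℤ) (u : ↥(epS N) → ℝ) (i j : ℤ) :
    ∃ m : ℤ, epθ N u j i = -(epθ N u i j) + 2*π*m := by
  unfold epθ
  by_cases h1 : 1 ≤ i <;> by_cases h2 : 1 ≤ j
  · refine ⟨0, ?_⟩
    simp only [if_pos h1, if_pos h2]
    rw [epq_anti]
    push_cast
    ring
  · refine ⟨1, ?_⟩
    simp only [if_pos h1, if_neg h2]
    rw [epq_anti N u (1-j) i]
    push_cast
    ring
  · refine ⟨1, ?_⟩
    simp only [if_neg h1, if_pos h2]
    rw [epq_anti N u j (1-i)]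
    push_cast
    ring
  · refine ⟨1, ?_⟩
    simp only [if_neg h1, if_neg h2]
    rw [epq_anti N u (1-i) (1-j)]
    push_cast
    ring

lemma epθ_rot (N : ℤ) (u : ↥(epS N) → ℝ) (i j : ℤ) :
    ∃ m : ℤ, epθ N u j (1-i) = epθ N u i j + π/2 + 2*π*m := by
  unfold epθ
  by_cases h1 : 1 ≤ i <;> by_cases h2 : 1 ≤ j
  · refine ⟨0, ?_⟩
    simp only [if_pos h1, if_pos h2, if_neg (show ¬ (1:ℤ) ≤ 1 - i by omega)]
    rw [show 1 - (1-i) = i by ring]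
    push_cast
    ring
  · refine ⟨0, ?_⟩
    simp only [if_pos h1, if_neg h2, if_neg (show ¬ (1:ℤ) ≤ 1 - i by omega)]
    rw [show 1 - (1-i) = i by ring]
    push_cast
    ring
  · refine ⟨-1, ?_⟩
    simp only [if_neg h1, if_pos h2, if_pos (show (1:ℤ) ≤ 1 - i by omega)]
    push_cast
    ring
  · refine ⟨0, ?_⟩
    simp only [if_neg h1, if_neg h2, if_pos (show (1:ℤ) ≤ 1 - i by omega)]
    push_cast
    ring

noncomputable def epE (H : ℝ → ℝ) (N : ℤ) (u : ↥(epS N) → ℝ) (i j : ℤ) : ℝ :=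
  (if i + 1 ≤ N then H (epθ N u (i + 1) j - epθ N u i j) else 0) +
  (if 1 - N ≤ i - 1 then H (epθ N u (i - 1) j - epθ N u i j) else 0) +
  (if j + 1 ≤ N then H (epθ N u i (j + 1) - epθ N u i j) else 0) +
  (if 1 - N ≤ j - 1 then H (epθ N u i (j - 1) - epθ N u i j) else 0)

lemma epE_rot (H : ℝ → ℝ) (N : ℤ) (u : ↥(epS N) → ℝ)
    (hper2 : ∀ (x : ℝ) (m : ℤ), H (x + 2*π*m) = H x) (i j : ℤ) :
    epE H N u j (1-i) = epE H N u i j := by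
  obtain ⟨m1, e1⟩ := epθ_rot N u i j
  obtain ⟨m2, e2⟩ := epθ_rot N u i (j+1)
  obtain ⟨m3, e3⟩ := epθ_rot N u i (j-1)
  obtain ⟨m4, e4⟩ := epθ_rot N u (i-1) j
  obtain ⟨m5, e5⟩ := epθ_rot N u (i+1) j
  unfold epE
  have v1 : H (epθ N u (j+1) (1-i) - epθ N u j (1-i)) = H (epθ N u i (j+1) - epθ N u i j) := by
    rw [e2, e1, show (epθ N u i (j+1) + π/2 + 2*π*m2) - (epθ N u i j + π/2 + 2*π*m1)
      = (epθ N u i (j+1) - epθ N u i j) + 2*π*((m2 - m1 : ℤ) : ℝ) by push_cast; ring, hper2]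
  have v2 : H (epθ N u (j-1) (1-i) - epθ N u j (1-i)) = H (epθ N u i (j-1) - epθ N u i j) := by
    rw [e3, e1, show (epθ N u i (j-1) + π/2 + 2*π*m3) - (epθ N u i j + π/2 + 2*π*m1)
      = (epθ N u i (j-1) - epθ N u i j) + 2*π*((m3 - m1 : ℤ) : ℝ) by push_cast; ring, hper2]
  have v3 : H (epθ N u j (1 - i + 1) - epθ N u j (1-i)) = H (epθ N u (i-1) j - epθ N u i j) := by
    rw [show (1:ℤ) - i + 1 = 1 - (i - 1) by ring, e4, e1,
      show (epθ N u (i-1) j + π/2 + 2*π*m4) - (epθ N u i j + π/2 + 2*π*m1)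
      = (epθ N u (i-1) j - epθ N u i j) + 2*π*((m4 - m1 : ℤ) : ℝ) by push_cast; ring, hper2]
  have v4 : H (epθ N u j (1 - i - 1) - epθ N u j (1-i)) = H (epθ N u (i+1) j - epθ N u i j) := by
    rw [show (1:ℤ) - i - 1 = 1 - (i + 1) by ring, e5, e1,
      show (epθ N u (i+1) j + π/2 + 2*π*m5) - (epθ N u i j + π/2 + 2*π*m1)
      = (epθ N u (i+1) j - epθ N u i j) + 2*π*((m5 - m1 : ℤ) : ℝ) by push_cast; ring, hper2]
  rw [v1, v2, v3, v4]
  simp only [show ((1:ℤ) - i + 1 ≤ N) ↔ (1 - N ≤ i - 1) by omega,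
    show ((1:ℤ) - N ≤ 1 - i - 1) ↔ (i + 1 ≤ N) by omega]
  ring

lemma epE_transpose (H : ℝ → ℝ) (N : ℤ) (u : ↥(epS N) → ℝ)
    (hper2 : ∀ (x : ℝ) (m : ℤ), H (x + 2*π*m) = H x)
    (hodd : ∀ x : ℝ, H (-x) = - H x) (i j : ℤ) :
    epE H N u j i = -(epE H N u i j) := by
  obtain ⟨m1, e1⟩ := epθ_transpose N u i j
  obtain ⟨m2, e2⟩ := epθ_transpose N u i (j+1)
  obtain ⟨m3, e3⟩ := epθ_transpose N u i (j-1)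
  obtain ⟨m4, e4⟩ := epθ_transpose N u (i-1) j
  obtain ⟨m5, e5⟩ := epθ_transpose N u (i+1) j
  unfold epE
  have v1 : H (epθ N u (j+1) i - epθ N u j i) = -(H (epθ N u i (j+1) - epθ N u i j)) := by
    rw [e2, e1, show (-(epθ N u i (j+1)) + 2*π*m2) - (-(epθ N u i j) + 2*π*m1)
      = -(epθ N u i (j+1) - epθ N u i j) + 2*π*((m2 - m1 : ℤ) : ℝ) by push_cast; ring, hper2, hodd]
  have v2 : H (epθ N u (j-1) i - epθ N u j i) = -(H (epθ N u i (j-1) - epθ N u i j)) := by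
    rw [e3, e1, show (-(epθ N u i (j-1)) + 2*π*m3) - (-(epθ N u i j) + 2*π*m1)
      = -(epθ N u i (j-1) - epθ N u i j) + 2*π*((m3 - m1 : ℤ) : ℝ) by push_cast; ring, hper2, hodd]
  have v3 : H (epθ N u j (i-1) - epθ N u j i) = -(H (epθ N u (i-1) j - epθ N u i j)) := by
    rw [e4, e1, show (-(epθ N u (i-1) j) + 2*π*m4) - (-(epθ N u i j) + 2*π*m1)
      = -(epθ N u (i-1) j - epθ N u i j) + 2*π*((m4 - m1 : ℤ) : ℝ) by push_cast; ring, hper2, hodd]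
  have v4 : H (epθ N u j (i+1) - epθ N u j i) = -(H (epθ N u (i+1) j - epθ N u i j)) := by
    rw [e5, e1, show (-(epθ N u (i+1) j) + 2*π*m5) - (-(epθ N u i j) + 2*π*m1)
      = -(epθ N u (i+1) j - epθ N u i j) + 2*π*((m5 - m1 : ℤ) : ℝ) by push_cast; ring, hper2, hodd]
  rw [v1, v2, v3, v4]
  have hite : ∀ (c : Prop) [inst : Decidable c] (A : ℝ), (if c then -A else 0) = -(if c then A else 0) := by
    intro c inst A
    split_ifs <;> ring
  simp only [hite]
  ring

lemma epE_diag (H : ℝ → ℝ) (N : ℤ) (u : ↥(epS N) → ℝ)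
    (hper2 : ∀ (x : ℝ) (m : ℤ), H (x + 2*π*m) = H x)
    (hodd : ∀ x : ℝ, H (-x) = - H x) (hN : 2 ≤ N)
    (i : ℤ) (h1 : 1 ≤ i) (h2 : i ≤ N) : epE H N u i i = 0 := by
  unfold epE
  have h0 : epθ N u i i = 0 := by rw [epθ_tri N u h1 h1 le_rfl, epe_diag]
  rw [if_pos (by omega : (1:ℤ) - N ≤ i - 1), if_pos (by omega : (1:ℤ) - N ≤ i - 1)]
  simp only [h0, sub_zero]
  have w1 : epθ N u (i+1) i = epe N u (i+1) i := epθ_tri N u (by omega) h1 (by omega)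
  have w3 : epθ N u i (i+1) = -(epe N u (i+1) i) := epθ_swap_tri N u h1 (by omega) (by omega)
  by_cases hi : 2 ≤ i
  · have w2 : epθ N u (i-1) i = -(epe N u i (i-1)) := epθ_swap_tri N u (by omega) h1 (by omega)
    have w4 : epθ N u i (i-1) = epe N u i (i-1) := epθ_tri N u h1 (by omega) (by omega)
    simp only [w1, w2, w3, w4, hodd]
    split_ifs <;> ring
  · have hi1 : i = 1 := by omega
    subst hi1
    have w2 : epθ N u (1-1) 1 = 3*π/2 := by
      rw [show (1:ℤ) - 1 = 0 by norm_num]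
      exact epθ_01 N u
    have w4 : epθ N u 1 (1-1) = π/2 := by
      rw [show (1:ℤ) - 1 = 0 by norm_num, epθ_bot N u le_rfl, epe_diag]
      ring
    have hH32 : H (3*π/2) = -(H (π/2)) := by
      rw [show (3*π/2 : ℝ) = -(π/2) + 2*π*((1:ℤ):ℝ) by push_cast; ring, hper2, hodd]
    simp only [w1, w2, w3, w4, hodd, hH32]
    split_ifs <;> ring

lemma epE_off (H : ℝ → ℝ) (N : ℤ) (u : ↥(epS N) → ℝ)
    (i j : ℤ) (hj : 1 ≤ j) (hij : j < i) (hiN : i ≤ N)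
    (heq : epF H N u i j = 0) : epE H N u i j = 0 := by
  unfold epE
  unfold epF at heq
  rw [if_pos (by omega : (1:ℤ) - N ≤ i - 1), if_pos (by omega : j + 1 ≤ N),
    if_pos (by omega : (1:ℤ) - N ≤ j - 1)]
  have w0 : epθ N u i j = epe N u i j := epθ_tri N u (by omega) hj (by omega)
  have w1 : epθ N u (i+1) j = epe N u (i+1) j := epθ_tri N u (by omega) hj (by omega)
  have w2 : epθ N u (i-1) j = epe N u (i-1) j := epθ_tri N u (by omega) hj (by omega)
  have w3 : epθ N u i (j+1) = epe N u i (j+1) := epθ_tri N u (by omega) (by omega) (by omega)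
  by_cases hj2 : 2 ≤ j
  · have w4 : epθ N u i (j-1) = epe N u i (j-1) := epθ_tri N u (by omega) (by omega) (by omega)
    rw [if_pos hj2] at heq
    simp only [w0, w1, w2, w3, w4]
    exact heq
  · have hj1 : j = 1 := by omega
    subst hj1
    have w4 : epθ N u i (1-1) = π/2 - epe N u i 1 := by
      rw [show (1:ℤ) - 1 = 0 by norm_num]
      exact epθ_bot N u (by omega)
    rw [if_neg hj2] at heq
    simp only [w0, w1, w2, w3, w4]
    rw [show (π/2 - epe N u i 1) - epe N u i 1 = π/2 - 2 * epe N u i 1 by ring]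
    exact heq

/-- Existence of the Ermentrout–Paullet rotating wave on the finite `2N × 2N` lattice
`L_N = {(i,j) : 1-N ≤ i,j ≤ N}`: an equilibrium of the truncated phase system with the
eight-fold rotating-wave symmetry values on the two diagonals and with the reduced-system
values strictly between `0` and `π/4`. -/
theorem stmt9 (H : ℝ → ℝ) (hH : IsCoupling H) (N : ℤ) (hN : 2 ≤ N) :
    ∃ θbar : ℤ → ℤ → ℝ,
      (∀ i j : ℤ, 1 - N ≤ i → i ≤ N → 1 - N ≤ j → j ≤ N →
        (if i + 1 ≤ N then H (θbar (i + 1) j - θbar i j) else 0) +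
        (if 1 - N ≤ i - 1 then H (θbar (i - 1) j - θbar i j) else 0) +
        (if j + 1 ≤ N then H (θbar i (j + 1) - θbar i j) else 0) +
        (if 1 - N ≤ j - 1 then H (θbar i (j - 1) - θbar i j) else 0) = 0) ∧
      (∀ i : ℤ, 1 ≤ i → i ≤ N → θbar i i = 0) ∧
      (∀ i : ℤ, 1 - N ≤ i → i ≤ 0 → θbar i i = π) ∧
      (∀ i : ℤ, 1 ≤ i → i ≤ N → θbar i (1 - i) = π / 2) ∧
      (∀ i : ℤ, 1 - N ≤ i → i ≤ 0 → θbar i (1 - i) = 3 * π / 2) ∧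
      (∀ i j : ℤ, 1 ≤ j → j < i → i ≤ N → 0 < θbar i j ∧ θbar i j < π / 4) := by
  obtain ⟨hsmooth, hperiod, hodd, hderivpos⟩ := hH
  have hper : Function.Periodic H (2*π) := hperiod
  have hper2 : ∀ (x : ℝ) (m : ℤ), H (x + 2*π*m) = H x := by
    intro x m
    have h := (hper.int_mul m) x
    rw [show x + 2*π*(m:ℝ) = x + (m:ℝ) * (2*π) by ring]
    exact h
  obtain ⟨u, hIoo, hEq⟩ := epCore H hsmooth.continuous hodd hderivpos N hN
  have hrot := epE_rot H N u hper2
  have htr := epE_transpose H N u hper2 hodd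
  have hQ : ∀ i j : ℤ, 1 ≤ i → i ≤ N → 1 ≤ j → j ≤ N → epE H N u i j = 0 := by
    intro i j h1 h2 h3 h4
    rcases lt_trichotomy j i with h | h | h
    · exact epE_off H N u i j h3 h h2 (hEq i j h3 h h2)
    · rw [h]
      exact epE_diag H N u hper2 hodd hN i h1 h2
    · rw [htr j i, epE_off H N u j i h1 h h4 (hEq j i h1 h h4), neg_zero]
  have hQa : ∀ i j : ℤ, 1 ≤ i → i ≤ N → 1-N ≤ j → j ≤ 0 → epE H N u i j = 0 := by
    intro i j h1 h2 h3 h4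
    have hr := hrot (1-j) i
    rw [show 1 - (1-j) = j by ring] at hr
    rw [hr]
    exact hQ (1-j) i (by omega) (by omega) h1 h2
  have hQb : ∀ i j : ℤ, 1-N ≤ i → i ≤ 0 → 1-N ≤ j → j ≤ 0 → epE H N u i j = 0 := by
    intro i j h1 h2 h3 h4
    have hr := hrot (1-j) i
    rw [show 1 - (1-j) = j by ring] at hr
    rw [hr]
    exact hQa (1-j) i (by omega) (by omega) h1 h2
  have hQc : ∀ i j : ℤ, 1-N ≤ i → i ≤ 0 → 1 ≤ j → j ≤ N → epE H N u i j = 0 := by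
    intro i j h1 h2 h3 h4
    have hr := hrot (1-j) i
    rw [show 1 - (1-j) = j by ring] at hr
    rw [hr]
    exact hQb (1-j) i (by omega) (by omega) h1 h2
  refine ⟨epθ N u, ?_, ?_, ?_, ?_, ?_, ?_⟩
  · intro i j hi1 hi2 hj1 hj2
    show epE H N u i j = 0
    rcases le_or_gt 1 i with h | h <;> rcases le_or_gt 1 j with h' | h'
    · exact hQ i j h hi2 h' hj2
    · exact hQa i j h hi2 hj1 (by omega)
    · exact hQc i j hi1 (by omega) h' hj2
    · exact hQb i j hi1 (by omega) hj1 (by omega)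
  · intro i h1 h2
    rw [epθ_tri N u h1 h1 le_rfl, epe_diag]
  · intro i h1 h2
    unfold epθ
    simp only [if_neg (show ¬ (1:ℤ) ≤ i by omega)]
    rw [epq_diag, zero_add]
  · intro i h1 h2
    unfold epθ
    simp only [if_pos h1, if_neg (show ¬ (1:ℤ) ≤ 1 - i by omega)]
    rw [show 1 - (1-i) = i by ring, epq_diag, zero_add]
  · intro i h1 h2
    unfold epθ
    simp only [if_neg (show ¬ (1:ℤ) ≤ i by omega), if_pos (show (1:ℤ) ≤ 1 - i by omega)]
    rw [epq_diag, zero_add]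
  · intro i j hj hij hiN
    have h := hIoo i j hj hij hiN
    rw [epθ_tri N u (by omega) hj (by omega)]
    exact ⟨h.1, h.2⟩
end

section
/- Let H be a coupling function. Then there exists θ̄ : ℤ × ℤ → ℝ such that: (i) for every (i,j) ∈ ℤ × ℤ, H(θ̄_{i+1,j} − θ̄_{i,j}) + H(θ̄_{i−1,j} − θ̄_{i,j}) + H(θ̄_{i,j+1} − θ̄_{i,j}) + H(θ̄_{i,j−1} − θ̄_{i,j}) = 0; (ii) θ̄_{i,i} = 0 for all i ≥ 1 and θ̄_{i,i} = π for all i ≤ 0; (iii) θ̄_{i,1−i} = π/2 for all i ≥ 1 and θ̄_{i,1−i} = 3π/2 for all i ≤ 0 (in particular the four centre cells (1,1), (1,0), (0,0), (0,1) carry the values 0, π/2, π, 3π/2 respectively, so θ̄ is not constant); (iv) 0 < θ̄_{i,j} ≤ π/4 for all (i,j) with 1 ≤ j < i; (v) θ̄_{i+1,j} ≥ θ̄_{i,j} and θ̄_{i,j} ≥ θ̄_{i,j+1} for all (i,j) with 1 ≤ j < i. Consequently, for any ω ∈ ℝ, θ_{i,j}(t) = ωt + θ̄_{i,j} is a phase-locked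 rotating wave solution of the infinite system θ̇_{i,j} = ω + Σ_{(i′,j′)} H(θ_{i′,j′} − θ_{i,j}), the sum over the four nearest neighbours of (i,j). -/
open Real Filter Topology Set

namespace Stmt10

variable (H : ℝ → ℝ)

lemma cont (hH : IsCoupling H) : Continuous H := hH.1.continuous

lemma odd' (hH : IsCoupling H) (x : ℝ) : H (-x) = - H x := hH.2.2.1 x

lemma per (hH : IsCoupling H) (x : ℝ) : H (x + 2 * π) = H x := hH.2.1 x

lemma per' (hH : IsCoupling H) (x : ℝ) : H (x - 2 * π) = H x := by
  have h := per H hH (x - 2 * π)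
  rw [show x - 2 * π + 2 * π = x by ring] at h
  exact h.symm

lemma H0 (hH : IsCoupling H) : H 0 = 0 := by
  have h := odd' H hH 0
  simp only [neg_zero] at h
  linarith

lemma mono (hH : IsCoupling H) : StrictMonoOn H (Icc (-(π / 2)) (π / 2)) := by
  apply strictMonoOn_of_deriv_pos (convex_Icc _ _) (cont H hH).continuousOn
  intro x hx
  rw [interior_Icc] at hx
  exact hH.2.2.2 x hx

lemma Hle (hH : IsCoupling H) {x y : ℝ} (hxy : x ≤ y) (hx : -(π / 2) ≤ x) (hy : y ≤ π / 2) :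
    H x ≤ H y :=
  (mono H hH).monotoneOn ⟨hx, hxy.trans hy⟩ ⟨hx.trans hxy, hy⟩ hxy

lemma Hlt (hH : IsCoupling H) {x y : ℝ} (hxy : x < y) (hx : -(π / 2) ≤ x) (hy : y ≤ π / 2) :
    H x < H y :=
  mono H hH ⟨hx, hxy.le.trans hy⟩ ⟨hx.trans hxy.le, hy⟩ hxy

lemma Hpos (hH : IsCoupling H) {x : ℝ} (h1 : 0 < x) (h2 : x ≤ π / 2) : 0 < H x := by
  have hp := pi_pos
  have h := Hlt H hH h1 (by linarith) h2
  rwa [H0 H hH] at h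

lemma Hnonneg (hH : IsCoupling H) {x : ℝ} (h1 : 0 ≤ x) (h2 : x ≤ π / 2) : 0 ≤ H x := by
  rcases h1.eq_or_lt with h | h
  · rw [← h, H0 H hH]
  · exact (Hpos H hH h h2).le

lemma Hnonpos (hH : IsCoupling H) {x : ℝ} (h1 : -(π / 2) ≤ x) (h2 : x ≤ 0) : H x ≤ 0 := by
  have h := Hnonneg H hH (x := -x) (by linarith) (by linarith)
  rw [odd' H hH] at h
  linarith

lemma Hzero (hH : IsCoupling H) {x : ℝ} (h1 : 0 ≤ x) (h2 : x ≤ π / 2) (hz : H x = 0) :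
    x = 0 := by
  rcases h1.eq_or_lt with h | h
  · exact h.symm
  · exact absurd hz (by have := Hpos H hH h h2; linarith)

lemma Hflip (hH : IsCoupling H) (x : ℝ) : H (2 * π - x) = - H x := by
  rw [show 2 * π - x = -x + 2 * π by ring, per H hH, odd' H hH]

/-! ### The root machinery -/

noncomputable def gfun (a b c d m x : ℝ) : ℝ :=
  H (a - x) + H (b - x) + H (c - x) + H (d - m * x)

def Adm (a b c d m : ℝ) : Prop :=
  (0 ≤ a ∧ a ≤ π / 4) ∧ (0 ≤ b ∧ b ≤ π / 4) ∧ (0 ≤ c ∧ c ≤ π / 4) ∧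
    (0 ≤ d ∧ d ≤ π / 2) ∧ (1 ≤ m ∧ m ≤ 2) ∧ d ≤ m * (π / 4)

lemma gfun_cont (hH : IsCoupling H) (a b c d m : ℝ) : Continuous (gfun H a b c d m) := by
  unfold gfun
  have hc := cont H hH
  fun_prop

lemma gfun_anti (hH : IsCoupling H) {a b c d m : ℝ} (hA : Adm a b c d m) :
    StrictAntiOn (gfun H a b c d m) (Icc 0 (π / 4)) := by
  obtain ⟨⟨ha1, ha2⟩, ⟨hb1, hb2⟩, ⟨hc1, hc2⟩, ⟨hd1, hd2⟩, ⟨hm1, hm2⟩, hdm⟩ := hA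
  have hp := pi_pos
  intro x hx y hy hxy
  obtain ⟨hx1, hx2⟩ := hx
  obtain ⟨hy1, hy2⟩ := hy
  have hmx : m * x ≤ m * y := mul_le_mul_of_nonneg_left hxy.le (by linarith)
  have hmy : m * y ≤ m * (π / 4) := mul_le_mul_of_nonneg_left hy2 (by linarith)
  have hm4 : m * (π / 4) ≤ 2 * (π / 4) := mul_le_mul_of_nonneg_right hm2 (by linarith)
  have hmx0 : 0 ≤ m * x := mul_nonneg (by linarith) hx1
  have hmlt : m * x < m * y := mul_lt_mul_of_pos_left hxy (by linarith)
  unfold gfun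
  have t1 : H (a - y) ≤ H (a - x) := Hle H hH (by linarith) (by linarith) (by linarith)
  have t2 : H (b - y) ≤ H (b - x) := Hle H hH (by linarith) (by linarith) (by linarith)
  have t3 : H (c - y) ≤ H (c - x) := Hle H hH (by linarith) (by linarith) (by linarith)
  have t4 : H (d - m * y) < H (d - m * x) := Hlt H hH (by linarith) (by linarith) (by linarith)
  linarith

lemma root_exists (hH : IsCoupling H) {a b c d m : ℝ} (hA : Adm a b c d m) :
    ∃ x, 0 ≤ x ∧ x ≤ π / 4 ∧ gfun H a b c d m x = 0 := by
  obtain ⟨⟨ha1, ha2⟩, ⟨hb1, hb2⟩, ⟨hc1, hc2⟩, ⟨hd1, hd2⟩, ⟨hm1, hm2⟩, hdm⟩ := hA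
  have hp := pi_pos
  have h0 : 0 ≤ gfun H a b c d m 0 := by
    unfold gfun
    simp only [sub_zero, mul_zero]
    have := Hnonneg H hH ha1 (by linarith)
    have := Hnonneg H hH hb1 (by linarith)
    have := Hnonneg H hH hc1 (by linarith)
    have := Hnonneg H hH hd1 hd2
    linarith
  have h4 : gfun H a b c d m (π / 4) ≤ 0 := by
    unfold gfun
    have hm4 : m * (π / 4) ≤ 2 * (π / 4) := mul_le_mul_of_nonneg_right hm2 (by linarith)
    have := Hnonpos H hH (x := a - π / 4) (by linarith) (by linarith)
    have := Hnonpos H hH (x := b - π / 4) (by linarith) (by linarith)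
    have := Hnonpos H hH (x := c - π / 4) (by linarith) (by linarith)
    have := Hnonpos H hH (x := d - m * (π / 4)) (by linarith) (by linarith)
    linarith
  have hsub := intermediate_value_Icc' (by linarith : (0:ℝ) ≤ π / 4)
    (gfun_cont H hH a b c d m).continuousOn
  obtain ⟨x, hx, hgx⟩ := hsub ⟨h4, h0⟩
  exact ⟨x, hx.1, hx.2, hgx⟩

open Classical in
noncomputable def root (a b c d m : ℝ) : ℝ :=
  if h : ∃ x, 0 ≤ x ∧ x ≤ π / 4 ∧ gfun H a b c d m x = 0 then h.choose else 0

lemma root_spec (hH : IsCoupling H) {a b c d m : ℝ} (hA : Adm a b c d m) :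
    0 ≤ root H a b c d m ∧ root H a b c d m ≤ π / 4 ∧
      gfun H a b c d m (root H a b c d m) = 0 := by
  have hex := root_exists H hH hA
  unfold root
  rw [dif_pos hex]
  exact hex.choose_spec

lemma root_le_root (hH : IsCoupling H) {a b c d m a' b' c' d' m' : ℝ}
    (hA : Adm a b c d m) (hA' : Adm a' b' c' d' m')
    (hle : ∀ x, 0 ≤ x → x ≤ π / 4 → gfun H a b c d m x ≤ gfun H a' b' c' d' m' x) :
    root H a b c d m ≤ root H a' b' c' d' m' := by
  obtain ⟨hr1, hr2, hr3⟩ := root_spec H hH hA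
  obtain ⟨hs1, hs2, hs3⟩ := root_spec H hH hA'
  by_contra hcon
  push_neg at hcon
  have h1 : gfun H a' b' c' d' m' (root H a b c d m) <
      gfun H a' b' c' d' m' (root H a' b' c' d' m') :=
    gfun_anti H hH hA' ⟨hs1, hs2⟩ ⟨hr1, hr2⟩ hcon
  have h2 := hle _ hr1 hr2
  rw [hr3, hs3] at *
  linarith


/-! ### The lattice iteration -/

def u (f : ℤ → ℤ → ℝ) (i j : ℤ) : ℝ := if 1 ≤ j ∧ j < i then f i j else 0

noncomputable def F (f : ℤ → ℤ → ℝ) : ℤ → ℤ → ℝ := fun i j =>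
  if 1 ≤ j ∧ j < i then
    root H (u f (i + 1) j) (u f (i - 1) j) (u f i (j + 1))
      (if j = 1 then π / 2 else u f i (j - 1)) (if j = 1 then 2 else 1)
  else 0

noncomputable def seq : ℕ → ℤ → ℤ → ℝ
  | 0 => fun i j => if 1 ≤ j ∧ j < i then π / 4 else 0
  | n + 1 => F H (seq n)

def Bu (f : ℤ → ℤ → ℝ) : Prop := ∀ i j : ℤ, 0 ≤ u f i j ∧ u f i j ≤ π / 4

def Mprop (f : ℤ → ℤ → ℝ) : Prop :=
  ∀ i j : ℤ, 1 ≤ j → u f i j ≤ u f (i + 1) j ∧ u f i (j + 1) ≤ u f i j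

lemma adm_site (f : ℤ → ℤ → ℝ) (hB : Bu f) (i j : ℤ) :
    Adm (u f (i + 1) j) (u f (i - 1) j) (u f i (j + 1))
      (if j = 1 then π / 2 else u f i (j - 1)) (if j = 1 then 2 else 1) := by
  have hp := pi_pos
  by_cases hj : j = 1
  · rw [if_pos hj, if_pos hj]
    exact ⟨hB _ _, hB _ _, hB _ _, ⟨by linarith, le_refl _⟩, ⟨by norm_num, le_refl _⟩,
      by linarith⟩
  · rw [if_neg hj, if_neg hj]
    refine ⟨hB _ _, hB _ _, hB _ _, ⟨(hB _ _).1, by linarith [(hB i (j-1)).2]⟩,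
      ⟨le_refl _, by norm_num⟩, ?_⟩
    rw [one_mul]
    exact (hB i (j-1)).2

lemma u_FF (f : ℤ → ℤ → ℝ) : u (F H f) = F H f := by
  funext i j
  by_cases h : 1 ≤ j ∧ j < i
  · unfold u; rw [if_pos h]
  · unfold u F; rw [if_neg h, if_neg h]

lemma seq_zero (i j : ℤ) : seq H 0 i j = if 1 ≤ j ∧ j < i then π / 4 else 0 := rfl

lemma F_bounds (hH : IsCoupling H) (f : ℤ → ℤ → ℝ) (hB : Bu f) (i j : ℤ) :
    0 ≤ F H f i j ∧ F H f i j ≤ π / 4 := by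
  have hp := pi_pos
  unfold F
  by_cases h : 1 ≤ j ∧ j < i
  · rw [if_pos h]
    obtain ⟨h1, h2, _⟩ := root_spec H hH (adm_site f hB i j)
    exact ⟨h1, h2⟩
  · rw [if_neg h]
    exact ⟨le_refl _, by linarith⟩

lemma F_mem (hH : IsCoupling H) (f : ℤ → ℤ → ℝ) (hB : Bu f) : Bu (F H f) := by
  intro i j
  rw [u_FF]
  exact F_bounds H hH f hB i j

lemma seq_off (n : ℕ) (i j : ℤ) (h : ¬(1 ≤ j ∧ j < i)) : seq H n i j = 0 := by
  cases n with
  | zero => simp only [seq, if_neg h]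
  | succ n => show F H (seq H n) i j = 0; unfold F; rw [if_neg h]

lemma u_seq (n : ℕ) : u (seq H n) = seq H n := by
  funext i j
  unfold u
  split_ifs with h
  · rfl
  · exact (seq_off H n i j h).symm

lemma B_seq (hH : IsCoupling H) : ∀ n, Bu (seq H n) := by
  intro n
  induction n with
  | zero =>
    intro i j
    have hp := pi_pos
    rw [u_seq, seq_zero]
    split_ifs <;> constructor <;> linarith
  | succ n ih => exact F_mem H hH _ ih

lemma seq_bounds (hH : IsCoupling H) (n : ℕ) (i j : ℤ) :
    0 ≤ seq H n i j ∧ seq H n i j ≤ π / 4 := by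
  have := B_seq H hH n i j
  rwa [u_seq] at this

lemma F_mono (hH : IsCoupling H) (f g : ℤ → ℤ → ℝ) (hBf : Bu f) (hBg : Bu g)
    (hfg : ∀ i j : ℤ, u f i j ≤ u g i j) (i j : ℤ) : F H f i j ≤ F H g i j := by
  have hp := pi_pos
  unfold F
  by_cases h : 1 ≤ j ∧ j < i
  · rw [if_pos h, if_pos h]
    apply root_le_root H hH (adm_site f hBf i j) (adm_site g hBg i j)
    intro x hx0 hx4
    unfold gfun
    have k1 : H (u f (i+1) j - x) ≤ H (u g (i+1) j - x) :=
      Hle H hH (by linarith [hfg (i+1) j]) (by linarith [(hBf (i+1) j).1])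
        (by linarith [(hBg (i+1) j).2])
    have k2 : H (u f (i-1) j - x) ≤ H (u g (i-1) j - x) :=
      Hle H hH (by linarith [hfg (i-1) j]) (by linarith [(hBf (i-1) j).1])
        (by linarith [(hBg (i-1) j).2])
    have k3 : H (u f i (j+1) - x) ≤ H (u g i (j+1) - x) :=
      Hle H hH (by linarith [hfg i (j+1)]) (by linarith [(hBf i (j+1)).1])
        (by linarith [(hBg i (j+1)).2])
    have k4 : H ((if j = 1 then π / 2 else u f i (j-1)) - (if j = 1 then 2 else 1) * x) ≤
        H ((if j = 1 then π / 2 else u g i (j-1)) - (if j = 1 then 2 else 1) * x) := by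
      by_cases hj : j = 1
      · simp only [if_pos hj]
        exact le_refl _
      · simp only [if_neg hj, one_mul]
        exact Hle H hH (by linarith [hfg i (j-1)]) (by linarith [(hBf i (j-1)).1])
          (by linarith [(hBg i (j-1)).2])
    linarith
  · rw [if_neg h, if_neg h]

lemma seq_succ_le (hH : IsCoupling H) : ∀ n i j, seq H (n + 1) i j ≤ seq H n i j := by
  intro n
  induction n with
  | zero =>
    intro i j
    have hp := pi_pos
    show F H (seq H 0) i j ≤ seq H 0 i j
    unfold F
    rw [seq_zero]
    by_cases h : 1 ≤ j ∧ j < i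
    · rw [if_pos h, if_pos h]
      exact (root_spec H hH (adm_site (seq H 0) (B_seq H hH 0) i j)).2.1
    · rw [if_neg h, if_neg h]
  | succ n ih =>
    intro i j
    show F H (seq H (n+1)) i j ≤ F H (seq H n) i j
    apply F_mono H hH _ _ (B_seq H hH (n+1)) (B_seq H hH n) _ i j
    intro i' j'
    rw [u_seq, u_seq]
    exact ih i' j'

lemma seq_anti (hH : IsCoupling H) (i j : ℤ) : Antitone (fun n => seq H n i j) :=
  antitone_nat_of_succ_le (fun n => seq_succ_le H hH n i j)

lemma M_seq (hH : IsCoupling H) : ∀ n, Mprop (seq H n) := by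
  intro n
  induction n with
  | zero =>
    intro i j hj
    have hp := pi_pos
    rw [u_seq]
    simp only [seq_zero]
    constructor <;> split_ifs <;> first | linarith | (exfalso; omega)
  | succ n ih =>
    intro i j hj
    have hp := pi_pos
    have hB := B_seq H hH n
    have hBF := F_mem H hH _ hB
    rw [u_seq]
    constructor
    · -- F (seq n) i j ≤ F (seq n) (i+1) j
      show F H (seq H n) i j ≤ F H (seq H n) (i+1) j
      by_cases h : 1 ≤ j ∧ j < i
      · have h' : 1 ≤ j ∧ j < i + 1 := by omega
        unfold F
        rw [if_pos h, if_pos h']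
        apply root_le_root H hH (adm_site _ hB i j) (adm_site _ hB (i+1) j)
        intro x hx0 hx4
        unfold gfun
        have m1 := (ih (i+1) j hj).1
        have m2 := (ih (i-1) j hj).1
        rw [show i - 1 + 1 = i by omega] at m2
        have m3 := (ih i (j+1) (by omega)).1
        have k1 : H (u (seq H n) (i+1) j - x) ≤ H (u (seq H n) (i+1+1) j - x) :=
          Hle H hH (by linarith) (by linarith [(hB (i+1) j).1])
            (by linarith [(hB (i+1+1) j).2])
        have k2 : H (u (seq H n) (i-1) j - x) ≤ H (u (seq H n) (i+1-1) j - x) := by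
          rw [show i + 1 - 1 = i by omega]
          exact Hle H hH (by linarith) (by linarith [(hB (i-1) j).1])
            (by linarith [(hB i j).2])
        have k3 : H (u (seq H n) i (j+1) - x) ≤ H (u (seq H n) (i+1) (j+1) - x) :=
          Hle H hH (by linarith) (by linarith [(hB i (j+1)).1])
            (by linarith [(hB (i+1) (j+1)).2])
        have k4 : H ((if j = 1 then π/2 else u (seq H n) i (j-1)) - (if j = 1 then 2 else 1) * x)
            ≤ H ((if j = 1 then π/2 else u (seq H n) (i+1) (j-1)) - (if j = 1 then 2 else 1) * x) := by
          by_cases hj1 : j = 1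
          · simp only [if_pos hj1]
            exact le_refl _
          · simp only [if_neg hj1, one_mul]
            have m4 := (ih i (j-1) (by omega)).1
            exact Hle H hH (by linarith) (by linarith [(hB i (j-1)).1])
              (by linarith [(hB (i+1) (j-1)).2])
        linarith
      · have h0 : F H (seq H n) i j = 0 := by unfold F; rw [if_neg h]
        rw [h0]
        exact (F_bounds H hH _ hB (i+1) j).1
    · -- F (seq n) i (j+1) ≤ F (seq n) i j
      show F H (seq H n) i (j+1) ≤ F H (seq H n) i j
      by_cases h : 1 ≤ j + 1 ∧ j + 1 < i
      · have h0 : 1 ≤ j ∧ j < i := by omega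
        unfold F
        rw [if_pos h, if_pos h0]
        apply root_le_root H hH (adm_site _ hB i (j+1)) (adm_site _ hB i j)
        intro x hx0 hx4
        unfold gfun
        have m1 := (ih (i+1) j hj).2
        have m2 := (ih (i-1) j hj).2
        have m3 := (ih i (j+1) (by omega)).2
        have k1 : H (u (seq H n) (i+1) (j+1) - x) ≤ H (u (seq H n) (i+1) j - x) :=
          Hle H hH (by linarith) (by linarith [(hB (i+1) (j+1)).1])
            (by linarith [(hB (i+1) j).2])
        have k2 : H (u (seq H n) (i-1) (j+1) - x) ≤ H (u (seq H n) (i-1) j - x) :=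
          Hle H hH (by linarith) (by linarith [(hB (i-1) (j+1)).1])
            (by linarith [(hB (i-1) j).2])
        have k3 : H (u (seq H n) i (j+1+1) - x) ≤ H (u (seq H n) i (j+1) - x) :=
          Hle H hH (by linarith) (by linarith [(hB i (j+1+1)).1])
            (by linarith [(hB i (j+1)).2])
        have k4 : H ((if j + 1 = 1 then π/2 else u (seq H n) i (j+1-1)) - (if j + 1 = 1 then 2 else 1) * x)
            ≤ H ((if j = 1 then π/2 else u (seq H n) i (j-1)) - (if j = 1 then 2 else 1) * x) := by
          rw [if_neg (by omega : ¬(j + 1 = 1)), if_neg (by omega : ¬(j + 1 = 1)),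
            show j + 1 - 1 = j by omega, one_mul]
          by_cases hj1 : j = 1
          · rw [if_pos hj1, if_pos hj1]
            exact Hle H hH (by linarith [(hB i j).2]) (by linarith [(hB i j).1]) (by linarith)
          · rw [if_neg hj1, if_neg hj1, one_mul]
            have m4 := (ih i (j-1) (by omega)).2
            rw [show j - 1 + 1 = j by omega] at m4
            exact Hle H hH (by linarith) (by linarith [(hB i j).1])
              (by linarith [(hB i (j-1)).2])
        linarith
      · have h0 : F H (seq H n) i (j+1) = 0 := by unfold F; rw [if_neg h]
        rw [h0]
        exact (F_bounds H hH _ hB i j).1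

/-! ### The limit -/

noncomputable def flim : ℤ → ℤ → ℝ := fun i j => ⨅ n, seq H n i j

lemma bdd_range (hH : IsCoupling H) (i j : ℤ) :
    BddBelow (Set.range fun n => seq H n i j) := by
  refine ⟨0, ?_⟩
  rintro x ⟨n, rfl⟩
  exact (seq_bounds H hH n i j).1

lemma flim_le_seq (hH : IsCoupling H) (n : ℕ) (i j : ℤ) : flim H i j ≤ seq H n i j :=
  ciInf_le (bdd_range H hH i j) n

lemma flim_nonneg (hH : IsCoupling H) (i j : ℤ) : 0 ≤ flim H i j :=
  le_ciInf (fun n => (seq_bounds H hH n i j).1)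

lemma flim_le_quarter (hH : IsCoupling H) (i j : ℤ) : flim H i j ≤ π / 4 :=
  (flim_le_seq H hH 0 i j).trans (seq_bounds H hH 0 i j).2

lemma flim_off (hH : IsCoupling H) {i j : ℤ} (h : ¬(1 ≤ j ∧ j < i)) : flim H i j = 0 := by
  unfold flim
  rw [show (fun n => seq H n i j) = fun _ => (0:ℝ) from funext (fun n => seq_off H n i j h)]
  exact ciInf_const

lemma u_flim (hH : IsCoupling H) : u (flim H) = flim H := by
  funext i j
  unfold u
  split_ifs with h
  · rfl
  · exact (flim_off H hH h).symm

lemma tendsto_flim (hH : IsCoupling H) (i j : ℤ) :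
    Tendsto (fun n => seq H n i j) atTop (𝓝 (flim H i j)) :=
  tendsto_atTop_ciInf (seq_anti H hH i j) (bdd_range H hH i j)

lemma M_flim (hH : IsCoupling H) (i j : ℤ) (hj : 1 ≤ j) :
    flim H i j ≤ flim H (i + 1) j ∧ flim H i (j + 1) ≤ flim H i j := by
  constructor
  · apply le_ciInf
    intro n
    refine (flim_le_seq H hH n i j).trans ?_
    have := (M_seq H hH n i j hj).1
    rwa [u_seq] at this
  · apply le_ciInf
    intro n
    refine (flim_le_seq H hH n i (j+1)).trans ?_
    have := (M_seq H hH n i j hj).2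
    rwa [u_seq] at this

lemma flim_eq (hH : IsCoupling H) {i j : ℤ} (hij : 1 ≤ j ∧ j < i) :
    gfun H (flim H (i+1) j) (flim H (i-1) j) (flim H i (j+1))
      (if j = 1 then π / 2 else flim H i (j-1)) (if j = 1 then 2 else 1) (flim H i j) = 0 := by
  have hroot : ∀ n, gfun H (seq H n (i+1) j) (seq H n (i-1) j) (seq H n i (j+1))
      (if j = 1 then π / 2 else seq H n i (j-1)) (if j = 1 then 2 else 1)
      (seq H (n+1) i j) = 0 := by
    intro n
    have heq : seq H (n+1) i j = root H (u (seq H n) (i+1) j) (u (seq H n) (i-1) j)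
        (u (seq H n) i (j+1)) (if j = 1 then π / 2 else u (seq H n) i (j-1))
        (if j = 1 then 2 else 1) := by
      show F H (seq H n) i j = _
      unfold F
      rw [if_pos hij]
    have := (root_spec H hH (adm_site _ (B_seq H hH n) i j)).2.2
    rw [← heq] at this
    rwa [u_seq] at this
  have t1 := tendsto_flim H hH (i+1) j
  have t2 := tendsto_flim H hH (i-1) j
  have t3 := tendsto_flim H hH i (j+1)
  have tx : Tendsto (fun n => seq H (n+1) i j) atTop (𝓝 (flim H i j)) :=
    (tendsto_flim H hH i j).comp (tendsto_add_atTop_nat 1)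
  have td : Tendsto (fun n => (if j = 1 then π / 2 else seq H n i (j-1))) atTop
      (𝓝 (if j = 1 then π / 2 else flim H i (j-1))) := by
    split_ifs with hj1
    · exact tendsto_const_nhds
    · exact tendsto_flim H hH i (j-1)
  have hc := cont H hH
  have main : Tendsto (fun n => gfun H (seq H n (i+1) j) (seq H n (i-1) j) (seq H n i (j+1))
      (if j = 1 then π / 2 else seq H n i (j-1)) (if j = 1 then 2 else 1)
      (seq H (n+1) i j)) atTop (𝓝 (gfun H (flim H (i+1) j) (flim H (i-1) j) (flim H i (j+1))
      (if j = 1 then π / 2 else flim H i (j-1)) (if j = 1 then 2 else 1) (flim H i j))) := by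
    unfold gfun
    exact ((((hc.tendsto _).comp (t1.sub tx)).add ((hc.tendsto _).comp (t2.sub tx))).add
      ((hc.tendsto _).comp (t3.sub tx))).add
      ((hc.tendsto _).comp (td.sub (tendsto_const_nhds.mul tx)))
  rw [show (fun n => gfun H (seq H n (i+1) j) (seq H n (i-1) j) (seq H n i (j+1))
      (if j = 1 then π / 2 else seq H n i (j-1)) (if j = 1 then 2 else 1)
      (seq H (n+1) i j)) = fun _ => (0:ℝ) from funext hroot] at main
  exact tendsto_nhds_unique main tendsto_const_nhds

lemma flim_pos (hH : IsCoupling H) {i j : ℤ} (hj : 1 ≤ j) (hij : j < i) : 0 < flim H i j := by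
  have hp := pi_pos
  have key : ∀ n : ℕ, ∀ i j : ℤ, j = (n : ℤ) + 1 → j < i → flim H i j ≠ 0 := by
    intro n
    induction n with
    | zero =>
      intro i j hj1 hji hzero
      have hj1' : j = 1 := by omega
      subst hj1'
      have he := flim_eq H hH (i := i) (j := 1) ⟨le_refl _, hji⟩
      unfold gfun at he
      rw [if_pos rfl, if_pos rfl, hzero] at he
      simp only [sub_zero, mul_zero] at he
      have p1 := Hnonneg H hH (flim_nonneg H hH (i+1) 1) (by linarith [flim_le_quarter H hH (i+1) 1])
      have p2 := Hnonneg H hH (flim_nonneg H hH (i-1) 1) (by linarith [flim_le_quarter H hH (i-1) 1])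
      have p3 := Hnonneg H hH (flim_nonneg H hH i 2) (by linarith [flim_le_quarter H hH i 2])
      have p4 : 0 < H (π / 2) := Hpos H hH (by linarith) (le_refl _)
      rw [show (1:ℤ) + 1 = 2 by norm_num] at he
      linarith
    | succ n ihn =>
      intro i j hj1 hji hzero
      have hjne : ¬(j = 1) := by omega
      have he := flim_eq H hH (i := i) (j := j) ⟨by omega, hji⟩
      unfold gfun at he
      rw [if_neg hjne, if_neg hjne, hzero] at he
      simp only [sub_zero, one_mul] at he
      have p1 := Hnonneg H hH (flim_nonneg H hH (i+1) j) (by linarith [flim_le_quarter H hH (i+1) j])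
      have p2 := Hnonneg H hH (flim_nonneg H hH (i-1) j) (by linarith [flim_le_quarter H hH (i-1) j])
      have p3 := Hnonneg H hH (flim_nonneg H hH i (j+1)) (by linarith [flim_le_quarter H hH i (j+1)])
      have p4 := Hnonneg H hH (flim_nonneg H hH i (j-1)) (by linarith [flim_le_quarter H hH i (j-1)])
      have hz4 : H (flim H i (j-1)) = 0 := by linarith
      have h0 : flim H i (j-1) = 0 :=
        Hzero H hH (flim_nonneg H hH i (j-1)) (by linarith [flim_le_quarter H hH i (j-1)]) hz4
      exact ihn i (j-1) (by omega) (by omega) h0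
  rcases (flim_nonneg H hH i j).eq_or_lt with h | h
  · exact absurd h.symm (key (j - 1).toNat i j (by omega) hij)
  · exact h


/-! ### The global phase field -/

noncomputable def theta : ℤ → ℤ → ℝ := fun a b =>
  if 1 ≤ b ∧ b ≤ a then flim H a b
  else if 1 ≤ a ∧ a < b then 2 * π - flim H b a
  else if b ≤ 0 ∧ 2 ≤ a + b then π / 2 - flim H a (1 - b)
  else if 1 ≤ a ∧ b ≤ 0 then π / 2 + flim H (1 - b) a
  else if a ≤ 0 ∧ b < a then π - flim H (1 - b) (1 - a)
  else if a ≤ 0 ∧ b ≤ 0 then π + flim H (1 - a) (1 - b)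
  else if 1 ≤ b ∧ a + b ≤ 0 then 3 * π / 2 - flim H (1 - a) b
  else 3 * π / 2 + flim H b (1 - a)

variable {a b : ℤ}

lemma theta_r1 (h1 : 1 ≤ b) (h2 : b ≤ a) : theta H a b = flim H a b := by
  unfold theta; rw [if_pos ⟨h1, h2⟩]

lemma theta_r2 (h1 : 1 ≤ a) (h2 : a < b) : theta H a b = 2 * π - flim H b a := by
  unfold theta; rw [if_neg (by omega), if_pos ⟨h1, h2⟩]

lemma theta_r3 (h1 : b ≤ 0) (h2 : 2 ≤ a + b) : theta H a b = π / 2 - flim H a (1 - b) := by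
  unfold theta; rw [if_neg (by omega), if_neg (by omega), if_pos ⟨h1, h2⟩]

lemma theta_r4 (h1 : 1 ≤ a) (h2 : b ≤ 0) (h3 : a + b ≤ 1) :
    theta H a b = π / 2 + flim H (1 - b) a := by
  unfold theta
  rw [if_neg (by omega), if_neg (by omega), if_neg (by omega), if_pos ⟨h1, h2⟩]

lemma theta_r5 (h1 : a ≤ 0) (h2 : b < a) : theta H a b = π - flim H (1 - b) (1 - a) := by
  unfold theta
  rw [if_neg (by omega), if_neg (by omega), if_neg (by omega), if_neg (by omega),
    if_pos ⟨h1, h2⟩]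

lemma theta_r6 (h1 : a ≤ 0) (h2 : b ≤ 0) (h3 : a ≤ b) :
    theta H a b = π + flim H (1 - a) (1 - b) := by
  unfold theta
  rw [if_neg (by omega), if_neg (by omega), if_neg (by omega), if_neg (by omega),
    if_neg (by omega), if_pos ⟨h1, h2⟩]

lemma theta_r7 (h1 : 1 ≤ b) (h2 : a + b ≤ 0) : theta H a b = 3 * π / 2 - flim H (1 - a) b := by
  unfold theta
  rw [if_neg (by omega), if_neg (by omega), if_neg (by omega), if_neg (by omega),
    if_neg (by omega), if_neg (by omega), if_pos ⟨h1, h2⟩]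

lemma theta_r8 (h1 : a ≤ 0) (h2 : 1 ≤ b) (h3 : 1 ≤ a + b) :
    theta H a b = 3 * π / 2 + flim H b (1 - a) := by
  unfold theta
  rw [if_neg (by omega), if_neg (by omega), if_neg (by omega), if_neg (by omega),
    if_neg (by omega), if_neg (by omega), if_neg (by omega)]

lemma LemA (hH : IsCoupling H) (a b : ℤ) :
    theta H b (1 - a) = theta H a b + π / 2 ∨
      theta H b (1 - a) = theta H a b + π / 2 - 2 * π := by
  by_cases h1 : 1 ≤ b ∧ b ≤ a
  · left
    rw [theta_r1 H h1.1 h1.2, theta_r4 H (by omega) (by omega) (by omega),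
      show (1:ℤ) - (1 - a) = a by ring]
    ring
  by_cases h2 : 1 ≤ a ∧ a < b
  · right
    rw [theta_r2 H h2.1 h2.2, theta_r3 H (by omega) (by omega),
      show (1:ℤ) - (1 - a) = a by ring]
    ring
  by_cases h3 : b ≤ 0 ∧ 2 ≤ a + b
  · left
    rw [theta_r3 H h3.1 h3.2, theta_r5 H (by omega) (by omega),
      show (1:ℤ) - (1 - a) = a by ring]
    ring
  by_cases h4 : 1 ≤ a ∧ b ≤ 0
  · left
    rw [theta_r4 H h4.1 h4.2 (by omega), theta_r6 H (by omega) (by omega) (by omega),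
      show (1:ℤ) - (1 - a) = a by ring]
    ring
  by_cases h5 : a ≤ 0 ∧ b < a
  · left
    rw [theta_r5 H h5.1 h5.2, theta_r7 H (by omega) (by omega)]
    ring
  by_cases h6 : a ≤ 0 ∧ b ≤ 0
  · left
    rw [theta_r6 H h6.1 h6.2 (by omega), theta_r8 H (by omega) (by omega) (by omega)]
    ring
  by_cases h7 : 1 ≤ b ∧ a + b ≤ 0
  · left
    rw [theta_r7 H h7.1 h7.2, theta_r2 H (by omega) (by omega)]
    ring
  · right
    rw [theta_r8 (a := a) (b := b) H (by omega) (by omega) (by omega),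
      theta_r1 (a := b) (b := 1 - a) H (by omega) (by omega)]
    ring

lemma LemB (hH : IsCoupling H) (a b : ℤ) :
    theta H b a + theta H a b = 2 * π ∨ theta H b a + theta H a b = 0 := by
  by_cases h1 : 1 ≤ b ∧ b ≤ a
  · rcases eq_or_lt_of_le h1.2 with he | hlt
    · right
      rw [← he, theta_r1 H h1.1 (le_refl b), flim_off H hH (by omega)]
      ring
    · left
      rw [theta_r1 H h1.1 h1.2, theta_r2 H h1.1 hlt]
      ring
  by_cases h2 : 1 ≤ a ∧ a < b
  · left
    rw [theta_r2 H h2.1 h2.2, theta_r1 H h2.1 h2.2.le]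
    ring
  by_cases h3 : b ≤ 0 ∧ 2 ≤ a + b
  · left
    rw [theta_r3 H h3.1 h3.2, theta_r8 H (by omega) (by omega) (by omega)]
    ring
  by_cases h4 : 1 ≤ a ∧ b ≤ 0
  · by_cases hs : a + b ≤ 0
    · left
      rw [theta_r4 H h4.1 h4.2 (by omega), theta_r7 H (by omega) (by omega)]
      ring
    · left
      have hab : a + b = 1 := by omega
      rw [theta_r4 H h4.1 h4.2 (by omega),
        theta_r8 (a := b) (b := a) H (by omega) (by omega) (by omega),
        show (1:ℤ) - b = a by omega, flim_off H hH (i := a) (j := a) (by omega)]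
      ring
  by_cases h5 : a ≤ 0 ∧ b < a
  · left
    rw [theta_r5 H h5.1 h5.2, theta_r6 H (by omega) (by omega) (by omega)]
    ring
  by_cases h6 : a ≤ 0 ∧ b ≤ 0
  · rcases eq_or_lt_of_le (show a ≤ b by omega) with he | hlt
    · left
      rw [← he, theta_r6 H h6.1 (by omega) (le_refl a), flim_off H hH (by omega)]
      ring
    · left
      rw [theta_r6 H h6.1 h6.2 (by omega), theta_r5 H (by omega) hlt]
      ring
  by_cases h7 : 1 ≤ b ∧ a + b ≤ 0
  · left
    rw [theta_r7 H h7.1 h7.2, theta_r4 H (by omega) (by omega) (by omega)]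
    ring
  · -- region 8 : a ≤ 0, 1 ≤ b, 1 ≤ a + b
    have ha : a ≤ 0 := by omega
    have hb : 1 ≤ b := by omega
    have hab : 1 ≤ a + b := by omega
    by_cases hs : 2 ≤ a + b
    · left
      rw [theta_r8 H ha hb hab, theta_r3 (a := b) (b := a) H (by omega) (by omega)]
      ring
    · left
      have hab1 : a + b = 1 := by omega
      rw [theta_r8 H ha hb hab, theta_r4 (a := b) (b := a) H (by omega) (by omega) (by omega),
        show (1:ℤ) - a = b by omega, flim_off H hH (i := b) (j := b) (by omega)]
      ring

lemma Hpair (hH : IsCoupling H) (x y uu v : ℝ)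
    (hu : uu = x + π / 2 ∨ uu = x + π / 2 - 2 * π)
    (hv : v = y + π / 2 ∨ v = y + π / 2 - 2 * π) :
    H (uu - v) = H (x - y) := by
  rcases hu with hu | hu <;> rcases hv with hv | hv
  · rw [hu, hv, show x + π / 2 - (y + π / 2) = x - y by ring]
  · rw [hu, hv, show x + π / 2 - (y + π / 2 - 2 * π) = (x - y) + 2 * π by ring, per H hH]
  · rw [hu, hv, show x + π / 2 - 2 * π - (y + π / 2) = (x - y) - 2 * π by ring, per' H hH]
  · rw [hu, hv, show x + π / 2 - 2 * π - (y + π / 2 - 2 * π) = x - y by ring]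

lemma HpairS (hH : IsCoupling H) (x y uu v : ℝ)
    (hu : uu + x = 2 * π ∨ uu + x = 0) (hv : v + y = 2 * π ∨ v + y = 0) :
    H (uu - v) = - H (x - y) := by
  rcases hu with hu | hu <;> rcases hv with hv | hv
  · rw [show uu - v = -(x - y) by linarith, odd' H hH]
  · rw [show uu - v = -(x - y) + 2 * π by linarith, per H hH, odd' H hH]
  · rw [show uu - v = -(x - y) - 2 * π by linarith, per' H hH, odd' H hH]
  · rw [show uu - v = -(x - y) by linarith, odd' H hH]

def EqAt (a b : ℤ) : Prop :=
  H (theta H (a + 1) b - theta H a b) + H (theta H (a - 1) b - theta H a b) +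
    H (theta H a (b + 1) - theta H a b) + H (theta H a (b - 1) - theta H a b) = 0

lemma TransR (hH : IsCoupling H) (a b : ℤ) (h : EqAt H a b) : EqAt H b (1 - a) := by
  have k0 := LemA H hH a b
  have k1 := LemA H hH a (b + 1)
  have k2 := LemA H hH a (b - 1)
  have k3 := LemA H hH (a - 1) b
  have k4 := LemA H hH (a + 1) b
  rw [show (1:ℤ) - (a - 1) = 1 - a + 1 by ring] at k3
  rw [show (1:ℤ) - (a + 1) = 1 - a - 1 by ring] at k4
  unfold EqAt at h ⊢
  rw [Hpair H hH _ _ _ _ k1 k0, Hpair H hH _ _ _ _ k2 k0, Hpair H hH _ _ _ _ k3 k0,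
    Hpair H hH _ _ _ _ k4 k0]
  linarith

lemma TransS (hH : IsCoupling H) (a b : ℤ) (h : EqAt H a b) : EqAt H b a := by
  have k0 := LemB H hH a b
  have k1 := LemB H hH a (b + 1)
  have k2 := LemB H hH a (b - 1)
  have k3 := LemB H hH (a + 1) b
  have k4 := LemB H hH (a - 1) b
  unfold EqAt at h ⊢
  rw [HpairS H hH _ _ _ _ k1 k0, HpairS H hH _ _ _ _ k2 k0, HpairS H hH _ _ _ _ k3 k0,
    HpairS H hH _ _ _ _ k4 k0]
  linarith

lemma baseInt (hH : IsCoupling H) (a b : ℤ) (hb : 1 ≤ b) (hba : b < a) : EqAt H a b := by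
  have he := flim_eq H hH (i := a) (j := b) ⟨hb, hba⟩
  unfold gfun at he
  unfold EqAt
  rw [theta_r1 H hb hba.le, theta_r1 H hb (by omega), theta_r1 H hb (by omega),
    theta_r1 H (by omega) (by omega)]
  by_cases hb1 : b = 1
  · subst hb1
    rw [if_pos rfl, if_pos rfl] at he
    rw [show (1:ℤ) - 1 = 0 by ring, theta_r3 (a := a) (b := 0) H (le_refl 0) (by omega),
      show (1:ℤ) - 0 = 1 by ring,
      show π / 2 - flim H a 1 - flim H a 1 = π / 2 - 2 * flim H a 1 by ring]
    linarith [he]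
  · rw [if_neg hb1, if_neg hb1, one_mul] at he
    rw [theta_r1 H (by omega) (by omega)]
    linarith [he]

lemma baseDiag (hH : IsCoupling H) (a : ℤ) (ha : 2 ≤ a) : EqAt H a a := by
  unfold EqAt
  rw [theta_r1 H (by omega) (le_refl a), flim_off H hH (by omega),
    theta_r1 H (by omega) (by omega), theta_r2 H (by omega) (by omega),
    theta_r2 H (by omega) (by omega), theta_r1 H (by omega) (by omega)]
  rw [sub_zero, sub_zero, sub_zero, sub_zero, Hflip H hH, Hflip H hH]
  ring

lemma base11 (hH : IsCoupling H) : EqAt H 1 1 := by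
  unfold EqAt
  have hz : flim H 1 1 = 0 := flim_off H hH (by omega)
  rw [show (1:ℤ) + 1 = 2 by ring, show (1:ℤ) - 1 = 0 by ring]
  rw [theta_r1 (a := 2) (b := 1) H (by omega) (by omega),
    theta_r8 (a := 0) (b := 1) H (by omega) (by omega) (by omega),
    theta_r2 (a := 1) (b := 2) H (by omega) (by omega),
    theta_r4 (a := 1) (b := 0) H (by omega) (by omega) (by omega),
    theta_r1 (a := 1) (b := 1) H (by omega) (by omega)]
  rw [show (1:ℤ) - 0 = 1 by ring, hz]
  have e1 : H (flim H 2 1 - 0) = H (flim H 2 1) := by rw [sub_zero]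
  have e2 : H (3 * π / 2 + 0 - 0) = - H (π / 2 + 0 - 0) := by
    rw [show (3:ℝ) * π / 2 + 0 - 0 = 2 * π - (π / 2 + 0 - 0) by ring]
    exact Hflip H hH _
  have e3 : H (2 * π - flim H 2 1 - 0) = - H (flim H 2 1) := by
    rw [show 2 * π - flim H 2 1 - 0 = 2 * π - flim H 2 1 by ring]
    exact Hflip H hH _
  rw [e1, e2, e3]
  ring

lemma EqAll (hH : IsCoupling H) (a b : ℤ) : EqAt H a b := by
  have hQ : ∀ p q : ℤ, 1 ≤ q → 1 ≤ p → EqAt H p q := by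
    intro p q hq hp
    rcases lt_trichotomy q p with h | h | h
    · exact baseInt H hH p q hq h
    · rw [h]
      by_cases hp1 : p = 1
      · subst hp1; exact base11 H hH
      · exact baseDiag H hH p (by omega)
    · exact TransS H hH q p (baseInt H hH q p hp h)
  by_cases hb : 1 ≤ b
  · by_cases ha : 1 ≤ a
    · exact hQ a b hb ha
    · -- a ≤ 0, b ≥ 1 : three rotations from (b, 1-a)
      have h0 : EqAt H b (1 - a) := hQ b (1 - a) (by omega) (by omega)
      have h1 : EqAt H (1 - a) (1 - b) := TransR H hH b (1 - a) h0
      have h2 : EqAt H (1 - b) a := by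
        have := TransR H hH (1 - a) (1 - b) h1
        rwa [show (1:ℤ) - (1 - a) = a by ring] at this
      have := TransR H hH (1 - b) a h2
      rwa [show (1:ℤ) - (1 - b) = b by ring] at this
  · by_cases ha : 1 ≤ a
    · -- b ≤ 0, a ≥ 1 : one rotation from (1-b, a)
      have h0 : EqAt H (1 - b) a := hQ (1 - b) a ha (by omega)
      have := TransR H hH (1 - b) a h0
      rwa [show (1:ℤ) - (1 - b) = b by ring] at this
    · -- a ≤ 0, b ≤ 0 : two rotations from (1-a, 1-b)
      have h0 : EqAt H (1 - a) (1 - b) := hQ (1 - a) (1 - b) (by omega) (by omega)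
      have h1 : EqAt H (1 - b) a := by
        have := TransR H hH (1 - a) (1 - b) h0
        rwa [show (1:ℤ) - (1 - a) = a by ring] at this
      have := TransR H hH (1 - b) a h1
      rwa [show (1:ℤ) - (1 - b) = b by ring] at this

end Stmt10

/-- Existence of a nontrivial phase-locked rotating wave solution on the infinite
two-dimensional lattice. -/
theorem stmt10 (H : ℝ → ℝ) (hH : IsCoupling H) :
    ∃ θbar : ℤ → ℤ → ℝ,
      (∀ i j : ℤ,
        H (θbar (i + 1) j - θbar i j) + H (θbar (i - 1) j - θbar i j) +
          H (θbar i (j + 1) - θbar i j) + H (θbar i (j - 1) - θbar i j) = 0) ∧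
      (∀ i : ℤ, 1 ≤ i → θbar i i = 0) ∧
      (∀ i : ℤ, i ≤ 0 → θbar i i = π) ∧
      (∀ i : ℤ, 1 ≤ i → θbar i (1 - i) = π / 2) ∧
      (∀ i : ℤ, i ≤ 0 → θbar i (1 - i) = 3 * π / 2) ∧
      (∀ i j : ℤ, 1 ≤ j → j < i → 0 < θbar i j ∧ θbar i j ≤ π / 4) ∧
      (∀ i j : ℤ, 1 ≤ j → j < i → θbar i j ≤ θbar (i + 1) j ∧ θbar i (j + 1) ≤ θbar i j) ∧
      (∀ ω : ℝ, ∀ t : ℝ, ∀ i j : ℤ,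
        HasDerivAt (fun s : ℝ => ω * s + θbar i j)
          (ω + (H ((ω * t + θbar (i + 1) j) - (ω * t + θbar i j)) +
            H ((ω * t + θbar (i - 1) j) - (ω * t + θbar i j)) +
            H ((ω * t + θbar i (j + 1)) - (ω * t + θbar i j)) +
            H ((ω * t + θbar i (j - 1)) - (ω * t + θbar i j)))) t) := by
  classical
  refine ⟨Stmt10.theta H, ?_, ?_, ?_, ?_, ?_, ?_, ?_, ?_⟩
  · intro i j
    exact Stmt10.EqAll H hH i j
  · intro i hi
    rw [Stmt10.theta_r1 H hi (le_refl i)]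
    exact Stmt10.flim_off H hH (by omega)
  · intro i hi
    rw [Stmt10.theta_r6 H hi hi (le_refl i), Stmt10.flim_off H hH (by omega)]
    ring
  · intro i hi
    rw [Stmt10.theta_r4 H hi (by omega) (by omega), show (1:ℤ) - (1 - i) = i by ring,
      Stmt10.flim_off H hH (by omega)]
    ring
  · intro i hi
    rw [Stmt10.theta_r8 H (by omega) (by omega) (by omega),
      Stmt10.flim_off H hH (i := 1 - i) (j := 1 - i) (by omega)]
    ring
  · intro i j hj hij
    rw [Stmt10.theta_r1 H hj hij.le]
    exact ⟨Stmt10.flim_pos H hH hj hij, Stmt10.flim_le_quarter H hH i j⟩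
  · intro i j hj hij
    rw [Stmt10.theta_r1 H hj hij.le, Stmt10.theta_r1 H hj (by omega)]
    constructor
    · exact (Stmt10.M_flim H hH i j hj).1
    · rcases eq_or_lt_of_le (show j + 1 ≤ i from by omega) with he | hlt
      · rw [Stmt10.theta_r1 H (by omega) (by omega), Stmt10.flim_off H hH (by omega)]
        exact Stmt10.flim_nonneg H hH i j
      · rw [Stmt10.theta_r1 H (by omega) (by omega)]
        exact (Stmt10.M_flim H hH i j hj).2
  · intro ω t i j
    have hd : HasDerivAt (fun s : ℝ => ω * s + Stmt10.theta H i j) ω t := by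
      simpa using ((hasDerivAt_id t).const_mul ω).add_const (Stmt10.theta H i j)
    have e : ∀ A B : ℝ, (ω * t + A) - (ω * t + B) = A - B := fun A B => by ring
    have hsum := Stmt10.EqAll H hH i j
    unfold Stmt10.EqAt at hsum
    rw [e, e, e, e]
    convert hd using 1
    linarith
end

section
/- Let H be a coupling function, θ̄ : ℤ × ℤ → ℝ a map such that |θ̄_{i′,j′} − θ̄_{i,j}| ≤ π/2 for every pair of nearest neighbours (i,j), (i′,j′) in ℤ × ℤ, let (i₀,j₀) ∈ ℤ × ℤ and Λ = (ℤ × ℤ) \ {(i₀,j₀)}. Then the linearization L is negative semidefinite on ℓ²(Λ): ⟨Lx, x⟩ ≤ 0 for every x ∈ ℓ²(Λ). -/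
open Real Filter Topology

/-- The deleted lattice `Λ = ℤ² \ {(i₀,j₀)}`. -/
abbrev Lam (i₀ j₀ : ℤ) : Type := {p : ℤ × ℤ // p ≠ (i₀, j₀)}

/-- Extension of `x : Λ → ℝ` to all of `ℤ²` by setting the value `0` at `(i₀,j₀)`. -/
noncomputable def lamExt (i₀ j₀ : ℤ) (x : Lam i₀ j₀ → ℝ) : ℤ × ℤ → ℝ :=
  fun p => if h : p = (i₀, j₀) then 0 else x ⟨p, h⟩

/-- The linearization `L` about the phase-lags `θbar`, acting on functions on `Λ`:
`(Lx)_{i,j} = Σ_{(i',j')} H'(θbar_{i',j'} - θbar_{i,j})(x̃_{i',j'} - x_{i,j})`,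
the sum over the four nearest neighbours of `(i,j)`. -/
noncomputable def linL (H : ℝ → ℝ) (θbar : ℤ × ℤ → ℝ) (i₀ j₀ : ℤ)
    (x : Lam i₀ j₀ → ℝ) (p : Lam i₀ j₀) : ℝ :=
  deriv H (θbar (p.1.1 + 1, p.1.2) - θbar p.1) * (lamExt i₀ j₀ x (p.1.1 + 1, p.1.2) - x p) +
  deriv H (θbar (p.1.1 - 1, p.1.2) - θbar p.1) * (lamExt i₀ j₀ x (p.1.1 - 1, p.1.2) - x p) +
  deriv H (θbar (p.1.1, p.1.2 + 1) - θbar p.1) * (lamExt i₀ j₀ x (p.1.1, p.1.2 + 1) - x p) +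
  deriv H (θbar (p.1.1, p.1.2 - 1) - θbar p.1) * (lamExt i₀ j₀ x (p.1.1, p.1.2 - 1) - x p)

private lemma deriv_even_of_odd {H : ℝ → ℝ} (hodd : ∀ x : ℝ, H (-x) = - H x) (x : ℝ) :
    deriv H (-x) = deriv H x := by
  have h1 : deriv (fun y : ℝ => H (-y)) x = -deriv H (-x) := deriv_comp_neg H x
  have h2 : (fun y : ℝ => H (-y)) = fun y => -H y := funext hodd
  rw [h2, deriv.fun_neg] at h1
  linarith

private lemma summable_aux {a u v : ℤ × ℤ → ℝ} {C : ℝ}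
    (ha : ∀ p, |a p| ≤ C)
    (hu : Summable fun p => u p ^ 2) (hv : Summable fun p => v p ^ 2) :
    Summable fun p => a p * u p * v p := by
  rw [← summable_abs_iff]
  refine Summable.of_nonneg_of_le (fun p => abs_nonneg _) ?_ ((hu.add hv).mul_left (C / 2))
  intro p
  have h1 := ha p
  have h2 : |a p * u p * v p| = |a p| * (|u p| * |v p|) := by
    rw [abs_mul, abs_mul]; ring
  have h3 : |u p| * |v p| ≤ (u p ^ 2 + v p ^ 2) / 2 := by
    nlinarith [sq_nonneg (|u p| - |v p|), sq_abs (u p), sq_abs (v p)]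
  have h4 : (0:ℝ) ≤ |u p| * |v p| := mul_nonneg (abs_nonneg _) (abs_nonneg _)
  have h5 : (0:ℝ) ≤ u p ^ 2 + v p ^ 2 := by positivity
  calc |a p * u p * v p| = |a p| * (|u p| * |v p|) := h2
    _ ≤ C * ((u p ^ 2 + v p ^ 2) / 2) := by
        apply mul_le_mul h1 h3 h4 (le_trans (abs_nonneg _) h1)
    _ = C / 2 * (u p ^ 2 + v p ^ 2) := by ring

private lemma summable_shift {y : ℤ × ℤ → ℝ} (hy : Summable fun p => y p ^ 2) (d : ℤ × ℤ) :
    Summable fun p => y (p + d) ^ 2 := by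
  have := (Equiv.addRight d).summable_iff.mpr hy
  simpa [Function.comp_def] using this

private lemma summable_diff_sq {y : ℤ × ℤ → ℝ} (hy : Summable fun p => y p ^ 2) (d : ℤ × ℤ) :
    Summable fun p => (y (p + d) - y p) ^ 2 := by
  refine Summable.of_nonneg_of_le (fun p => sq_nonneg _) ?_
    (((summable_shift hy d).mul_left 2).add (hy.mul_left 2))
  intro p
  nlinarith [sq_nonneg (y (p + d) + y p)]

private noncomputable def gg (H : ℝ → ℝ) (θbar y : ℤ × ℤ → ℝ) (p q : ℤ × ℤ) : ℝ :=
  deriv H (θbar q - θbar p) * (y q - y p) * y p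

private lemma gg_summable (H : ℝ → ℝ) (θbar y : ℤ × ℤ → ℝ) {C : ℝ}
    (hCb : ∀ z : ℝ, |z| ≤ π / 2 → |deriv H z| ≤ C)
    (hy2 : Summable fun p => y p ^ 2) (d : ℤ × ℤ)
    (hd : ∀ p : ℤ × ℤ, |θbar (p + d) - θbar p| ≤ π / 2) :
    Summable fun p => gg H θbar y p (p + d) := by
  have := summable_aux (a := fun p => deriv H (θbar (p + d) - θbar p))
    (u := fun p => y (p + d) - y p) (v := y)
    (fun p => hCb _ (hd p)) (summable_diff_sq hy2 d) hy2
  simpa [gg] using this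

private lemma tsum_T_eq (H : ℝ → ℝ) (heven : ∀ z : ℝ, deriv H (-z) = deriv H z)
    (θbar y : ℤ × ℤ → ℝ) (d : ℤ × ℤ) :
    (∑' p : ℤ × ℤ, deriv H (θbar (p + d) - θbar p) * (y (p + d) - y p) * y (p + d))
      = - ∑' p : ℤ × ℤ, gg H θbar y p (p + -d) := by
  rw [← tsum_neg]
  rw [← Equiv.tsum_eq (Equiv.addRight d) (fun q => -(gg H θbar y q (q + -d)))]
  apply tsum_congr
  intro p
  have e1 : p + d + -d = p := add_neg_cancel_right p d
  simp only [Equiv.coe_addRight, gg, e1]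
  have e2 : deriv H (θbar p - θbar (p + d)) = deriv H (θbar (p + d) - θbar p) := by
    rw [← heven (θbar p - θbar (p + d)), neg_sub]
  rw [e2]; ring

private lemma pair_nonpos (H : ℝ → ℝ) (θbar y : ℤ × ℤ → ℝ) {C : ℝ}
    (heven : ∀ z : ℝ, deriv H (-z) = deriv H z)
    (hnn : ∀ z : ℝ, |z| ≤ π / 2 → 0 ≤ deriv H z)
    (hCb : ∀ z : ℝ, |z| ≤ π / 2 → |deriv H z| ≤ C)
    (hy2 : Summable fun p => y p ^ 2) (d : ℤ × ℤ)
    (hd : ∀ p : ℤ × ℤ, |θbar (p + d) - θbar p| ≤ π / 2) :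
    (∑' p : ℤ × ℤ, gg H θbar y p (p + d)) + (∑' p : ℤ × ℤ, gg H θbar y p (p + -d)) ≤ 0 := by
  have hu2 : Summable fun p => (y (p + d) - y p) ^ 2 := summable_diff_sq hy2 d
  have hv2 : Summable fun p => y (p + d) ^ 2 := summable_shift hy2 d
  have ha : ∀ p : ℤ × ℤ, |deriv H (θbar (p + d) - θbar p)| ≤ C := fun p => hCb _ (hd p)
  have hS : Summable fun p => gg H θbar y p (p + d) := gg_summable H θbar y hCb hy2 d hd
  have hT : Summable fun p => deriv H (θbar (p + d) - θbar p) * (y (p + d) - y p) * y (p + d) :=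
    summable_aux ha hu2 hv2
  have hST : (∑' p : ℤ × ℤ, gg H θbar y p (p + d))
      ≤ ∑' p : ℤ × ℤ, deriv H (θbar (p + d) - θbar p) * (y (p + d) - y p) * y (p + d) := by
    rw [← sub_nonneg, ← Summable.tsum_sub hT hS]
    apply tsum_nonneg
    intro p
    have h1 : deriv H (θbar (p + d) - θbar p) * (y (p + d) - y p) * y (p + d)
        - gg H θbar y p (p + d)
        = deriv H (θbar (p + d) - θbar p) * (y (p + d) - y p) ^ 2 := by
      simp only [gg]; ring
    rw [h1]
    exact mul_nonneg (hnn _ (hd p)) (sq_nonneg _)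
  have hTeq := tsum_T_eq H heven θbar y d
  linarith

/-- `L` is negative semidefinite on `ℓ²(Λ)` when all nearest-neighbour differences of the
phase-lags are at most `π/2` in absolute value. -/
theorem stmt13 (H : ℝ → ℝ) (hH : IsCoupling H) (θbar : ℤ × ℤ → ℝ)
    (hθ : ∀ p q : ℤ × ℤ, |p.1 - q.1| + |p.2 - q.2| = 1 → |θbar p - θbar q| ≤ π / 2)
    (i₀ j₀ : ℤ) :
    ∀ x : lp (fun _ : Lam i₀ j₀ => ℝ) 2,
      (∑' p : Lam i₀ j₀, linL H θbar i₀ j₀ (⇑x) p * x p) ≤ 0 := by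
  intro x
  obtain ⟨hsm, hper, hodd, hpos⟩ := hH
  have heven : ∀ z : ℝ, deriv H (-z) = deriv H z := deriv_even_of_odd hodd
  have hd_cont : Continuous (deriv H) := hsm.continuous_deriv (by simp)
  have hnn : ∀ z : ℝ, |z| ≤ π / 2 → 0 ≤ deriv H z := by
    intro z hz
    have hne : -(π / 2) ≠ π / 2 := ne_of_lt (by nlinarith [pi_pos])
    have hsub : Set.Icc (-(π / 2)) (π / 2) ⊆ {w : ℝ | 0 ≤ deriv H w} := by
      rw [← closure_Ioo hne]
      exact closure_minimal (fun w hw => (hpos w hw).le)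
        (isClosed_le continuous_const hd_cont)
    exact hsub ⟨(abs_le.mp hz).1, (abs_le.mp hz).2⟩
  obtain ⟨C, hC⟩ := (isCompact_Icc (a := -(π / 2)) (b := π / 2)).exists_bound_of_continuousOn
    hd_cont.continuousOn
  have hCb : ∀ z : ℝ, |z| ≤ π / 2 → |deriv H z| ≤ C := by
    intro z hz
    simpa [Real.norm_eq_abs] using hC z ⟨(abs_le.mp hz).1, (abs_le.mp hz).2⟩
  set y : ℤ × ℤ → ℝ := lamExt i₀ j₀ (⇑x) with hy
  have hyval : ∀ p : Lam i₀ j₀, y p.1 = x p := by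
    intro p; simp [hy, lamExt, p.2]
  have hy0 : y (i₀, j₀) = 0 := by simp [hy, lamExt]
  -- square-summability of the extension
  have hx2 : Summable fun p : Lam i₀ j₀ => (x p : ℝ) ^ 2 := by
    have h := (lp.memℓp x).summable (p := 2) (by simp)
    have h2 : (fun p : Lam i₀ j₀ => ‖x p‖ ^ ENNReal.toReal 2) = fun p => (x p : ℝ) ^ 2 := by
      funext p
      rw [show ENNReal.toReal 2 = (2 : ℝ) by simp]
      rw [Real.rpow_two, Real.norm_eq_abs, sq_abs]
    rwa [h2] at h
  have hy2 : Summable fun p : ℤ × ℤ => y p ^ 2 := by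
    have key := summable_subtype_iff_indicator
      (s := ({((i₀, j₀) : ℤ × ℤ)}ᶜ : Set (ℤ × ℤ))) (f := fun q : ℤ × ℤ => y q ^ 2)
    have hind : (({((i₀, j₀) : ℤ × ℤ)}ᶜ : Set (ℤ × ℤ))).indicator (fun q : ℤ × ℤ => y q ^ 2)
        = fun q => y q ^ 2 := by
      funext q
      by_cases hq : q = (i₀, j₀)
      · simp [Set.indicator, hq, hy0]
      · simp [Set.indicator, hq]
    rw [hind] at key
    apply key.mp
    have h3 : ((fun q : ℤ × ℤ => y q ^ 2) ∘ (↑) :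
        ({((i₀, j₀) : ℤ × ℤ)}ᶜ : Set (ℤ × ℤ)) → ℝ) = fun p => (x ⟨p.1, p.2⟩ : ℝ) ^ 2 := by
      funext p
      have hp : (p : ℤ × ℤ) ≠ (i₀, j₀) := p.2
      simp [Function.comp, hy, lamExt, hp]
    rw [h3]
    exact hx2
  have hnb : ∀ d : ℤ × ℤ, |d.1| + |d.2| = 1 → ∀ p : ℤ × ℤ,
      |θbar (p + d) - θbar p| ≤ π / 2 := by
    intro d hd p
    apply hθ
    simpa using hd
  -- the full-lattice quadratic form
  set F : ℤ × ℤ → ℝ := fun p => gg H θbar y p (p + (1, 0)) + gg H θbar y p (p + (-1, 0))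
    + gg H θbar y p (p + (0, 1)) + gg H θbar y p (p + (0, -1)) with hF
  have hstep : (∑' p : Lam i₀ j₀, linL H θbar i₀ j₀ (⇑x) p * x p) = ∑' p : ℤ × ℤ, F p := by
    have h1 : ∀ p : Lam i₀ j₀, linL H θbar i₀ j₀ (⇑x) p * x p = F p.1 := by
      intro p
      have e1 : (p.1 + ((1:ℤ), (0:ℤ))) = (p.1.1 + 1, p.1.2) := by
        ext <;> simp
      have e2 : (p.1 + ((-1:ℤ), (0:ℤ))) = (p.1.1 - 1, p.1.2) := by
        ext <;> simp [sub_eq_add_neg]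
      have e3 : (p.1 + ((0:ℤ), (1:ℤ))) = (p.1.1, p.1.2 + 1) := by
        ext <;> simp
      have e4 : (p.1 + ((0:ℤ), (-1:ℤ))) = (p.1.1, p.1.2 - 1) := by
        ext <;> simp [sub_eq_add_neg]
      simp only [hF, gg, linL, e1, e2, e3, e4, hyval p]
      ring
    have h2 : Function.support F ⊆ ({((i₀, j₀) : ℤ × ℤ)}ᶜ : Set (ℤ × ℤ)) := by
      intro p hp
      simp only [Set.mem_compl_iff, Set.mem_singleton_iff]
      intro hpe
      apply hp
      simp [hF, gg, hpe, hy0]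
    calc (∑' p : Lam i₀ j₀, linL H θbar i₀ j₀ (⇑x) p * x p)
        = ∑' p : Lam i₀ j₀, F p.1 := tsum_congr h1
      _ = ∑' p : ℤ × ℤ, F p := tsum_subtype_eq_of_support_subset h2
  rw [hstep]
  have hb1 : ∀ p : ℤ × ℤ, |θbar (p + ((1:ℤ), (0:ℤ))) - θbar p| ≤ π / 2 :=
    hnb (1, 0) (by norm_num)
  have hb2 : ∀ p : ℤ × ℤ, |θbar (p + ((-1:ℤ), (0:ℤ))) - θbar p| ≤ π / 2 :=
    hnb (-1, 0) (by norm_num)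
  have hb3 : ∀ p : ℤ × ℤ, |θbar (p + ((0:ℤ), (1:ℤ))) - θbar p| ≤ π / 2 :=
    hnb (0, 1) (by norm_num)
  have hb4 : ∀ p : ℤ × ℤ, |θbar (p + ((0:ℤ), (-1:ℤ))) - θbar p| ≤ π / 2 :=
    hnb (0, -1) (by norm_num)
  have hs1 := gg_summable H θbar y hCb hy2 (1, 0) hb1
  have hs2 := gg_summable H θbar y hCb hy2 (-1, 0) hb2
  have hs3 := gg_summable H θbar y hCb hy2 (0, 1) hb3
  have hs4 := gg_summable H θbar y hCb hy2 (0, -1) hb4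
  have htot : (∑' p : ℤ × ℤ, F p)
      = (∑' p : ℤ × ℤ, gg H θbar y p (p + (1, 0)))
      + (∑' p : ℤ × ℤ, gg H θbar y p (p + (-1, 0)))
      + (∑' p : ℤ × ℤ, gg H θbar y p (p + (0, 1)))
      + (∑' p : ℤ × ℤ, gg H θbar y p (p + (0, -1))) := by
    rw [hF]
    rw [Summable.tsum_add ((hs1.add hs2).add hs3) hs4, Summable.tsum_add (hs1.add hs2) hs3, Summable.tsum_add hs1 hs2]
  have hneg1 : -(((1:ℤ), (0:ℤ))) = ((-1:ℤ), (0:ℤ)) := by ext <;> simp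
  have hneg2 : -(((0:ℤ), (1:ℤ))) = ((0:ℤ), (-1:ℤ)) := by ext <;> simp
  have hp1 := pair_nonpos H θbar y heven hnn hCb hy2 (1, 0) hb1
  have hp2 := pair_nonpos H θbar y heven hnn hCb hy2 (0, 1) hb3
  rw [hneg1] at hp1
  rw [hneg2] at hp2
  rw [htot]
  linarith
end
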